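/- arXiv:math/0405401 — 6 statements merged into one kernel-verified Lean document; each statement's English description precedes it below -/
import Mathlib

section
/- Let X be a topological space and E ⊆ X. Every set obtainable from E by finitely many successive applications of topological closure and set complement belongs to the 14-element list {E, iE, ikE, ikiE, kE, kiE, kikE} together with the complements of these seven sets. In particular, the smallest family of subsets of X containing E and closed under closure and complement has at most 14 elements. -/
/-- The family of subsets of a topological space `X` generated from `E` by successive
applications of topological closure and set complement: `kcGen E` is the smallest
collection of subsets of `X` containing `E` and closed under closure and complement. -/
inductive kcGen {X : Type*} [TopologicalSpace X] (E : Set X) : Set X → Prop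
  | base : kcGen E E
  | closure {A : Set X} : kcGen E A → kcGen E (closure A)
  | compl {A : Set X} : kcGen E A → kcGen E Aᶜ

private lemma kiki {X : Type*} [TopologicalSpace X] (E : Set X) :
    closure (interior (closure (interior E))) = closure (interior E) := by
  apply subset_antisymm
  · calc closure (interior (closure (interior E))) ⊆ closure (closure (interior E)) :=
          closure_mono interior_subset
      _ = closure (interior E) := closure_closure
  · exact closure_mono (interior_maximal subset_closure isOpen_interior)

private lemma ikik {X : Type*} [TopologicalSpace X] (E : Set X) :
    interior (closure (interior (closure E))) = interior (closure E) := by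
  apply subset_antisymm
  · exact interior_mono (closure_minimal interior_subset isClosed_closure)
  · exact interior_maximal subset_closure isOpen_interior

/-- Kuratowski's 14-set theorem (upper bound): every set obtainable from `E` by closures and
complements is one of the seven sets `E, iE, ikE, ikiE, kE, kiE, kikE` or a complement of one
of these; in particular the family generated from `E` by closure and complement has at most
14 elements. -/
theorem kuratowski_fourteen {X : Type*} [TopologicalSpace X] (E : Set X) :
    (∀ A : Set X, kcGen E A →
      A ∈ ({E, interior E, interior (closure E), interior (closure (interior E)),
            closure E, closure (interior E), closure (interior (closure E)),
            Eᶜ, (interior E)ᶜ, (interior (closure E))ᶜ, (interior (closure (interior E)))ᶜ,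
            (closure E)ᶜ, (closure (interior E))ᶜ, (closure (interior (closure E)))ᶜ} :
              Set (Set X))) ∧
    {A : Set X | kcGen E A}.encard ≤ 14 := by
  have key : ∀ A : Set X, kcGen E A →
      A ∈ ({E, interior E, interior (closure E), interior (closure (interior E)),
            closure E, closure (interior E), closure (interior (closure E)),
            Eᶜ, (interior E)ᶜ, (interior (closure E))ᶜ, (interior (closure (interior E)))ᶜ,
            (closure E)ᶜ, (closure (interior E))ᶜ, (closure (interior (closure E)))ᶜ} :
              Set (Set X)) := by
    intro A hA
    induction hA with
    | base => simp
    | closure h ih =>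
      simp only [Set.mem_insert_iff, Set.mem_singleton_iff] at ih ⊢
      rcases ih with rfl|rfl|rfl|rfl|rfl|rfl|rfl|rfl|rfl|rfl|rfl|rfl|rfl|rfl <;>
        simp [closure_compl, closure_closure, interior_interior, kiki, ikik]
    | compl h ih =>
      simp only [Set.mem_insert_iff, Set.mem_singleton_iff] at ih ⊢
      rcases ih with rfl|rfl|rfl|rfl|rfl|rfl|rfl|rfl|rfl|rfl|rfl|rfl|rfl|rfl <;>
        simp [compl_compl]
  refine ⟨key, ?_⟩
  have step : ∀ (a : Set X) (s : Set (Set X)) {n : ℕ∞}, s.encard ≤ n →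
      (insert a s).encard ≤ n + 1 :=
    fun a s _ h => (Set.encard_insert_le _ _).trans (add_le_add_left h 1)
  have hsub := Set.encard_mono (fun A hA => key A hA)
  refine hsub.trans ?_
  refine le_trans (step _ _ (step _ _ (step _ _ (step _ _ (step _ _ (step _ _ (step _ _
    (step _ _ (step _ _ (step _ _ (step _ _ (step _ _ (step _ _
      (Set.encard_singleton _).le))))))))))))) (by norm_num)
end

section
/- Let X be a topological space and E ⊆ X. Every set obtainable from E by finitely many successive applications of topological closure and interior belongs to the list {E, iE, ikE, ikiE, kE, kiE, kikE}. In particular, the smallest family of subsets of X containing E and closed under closure and interior has at most 7 elements. -/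
/-- The family of subsets of a topological space `X` generated from `E` by successive
applications of topological closure and interior: `kiGen E` is the smallest collection of
subsets of `X` containing `E` and closed under closure and interior. -/
inductive kiGen {X : Type*} [TopologicalSpace X] (E : Set X) : Set X → Prop
  | base : kiGen E E
  | closure {A : Set X} : kiGen E A → kiGen E (closure A)
  | interior {A : Set X} : kiGen E A → kiGen E (interior A)

theorem kiki_eq {X : Type*} [TopologicalSpace X] (s : Set X) :
    closure (interior (closure (interior s))) = closure (interior s) := by
  apply subset_antisymm
  · simpa using closure_mono (interior_subset : interior (closure (interior s)) ⊆ _)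
  · exact closure_mono (interior_maximal subset_closure isOpen_interior)

theorem ikik_eq {X : Type*} [TopologicalSpace X] (s : Set X) :
    interior (closure (interior (closure s))) = interior (closure s) := by
  apply subset_antisymm
  · exact interior_mono (closure_minimal interior_subset isClosed_closure)
  · exact interior_maximal subset_closure isOpen_interior

/-- Every set obtainable from `E` by closures and interiors belongs to the list
`{E, iE, ikE, ikiE, kE, kiE, kikE}`; in particular the family generated from `E`
by closure and interior has at most 7 elements. -/
theorem kuratowski_seven {X : Type*} [TopologicalSpace X] (E : Set X) :
    (∀ A : Set X, kiGen E A →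
      A ∈ ({E, interior E, interior (closure E), interior (closure (interior E)),
            closure E, closure (interior E), closure (interior (closure E))} :
              Set (Set X))) ∧
    {A : Set X | kiGen E A}.encard ≤ 7 := by
  have h1 : ∀ A : Set X, kiGen E A →
      A ∈ ({E, interior E, interior (closure E), interior (closure (interior E)),
            closure E, closure (interior E), closure (interior (closure E))} :
              Set (Set X)) := by
    intro A hA
    induction hA with
    | base => simp
    | closure h ih =>
      rcases ih with rfl | rfl | rfl | rfl | rfl | rfl | rfl <;>
        simp [closure_closure, kiki_eq]
    | interior h ih =>
      rcases ih with rfl | rfl | rfl | rfl | rfl | rfl | rfl <;>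
        simp [interior_interior, ikik_eq]
  refine ⟨h1, ?_⟩
  calc {A : Set X | kiGen E A}.encard
      ≤ ({E, interior E, interior (closure E), interior (closure (interior E)),
          closure E, closure (interior E), closure (interior (closure E))} :
            Set (Set X)).encard := Set.encard_le_encard (fun A hA => h1 A hA)
    _ ≤ 7 := by
        refine le_trans (Set.encard_insert_le _ _) ?_
        refine le_trans (add_le_add_left (Set.encard_insert_le _ _) 1) ?_
        refine le_trans (add_le_add_left (add_le_add_left (Set.encard_insert_le _ _) 1) 1) ?_
        refine le_trans (add_le_add_left (add_le_add_left (add_le_add_left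
          (Set.encard_insert_le _ _) 1) 1) 1) ?_
        refine le_trans (add_le_add_left (add_le_add_left (add_le_add_left (add_le_add_left
          (Set.encard_insert_le _ _) 1) 1) 1) 1) ?_
        refine le_trans (add_le_add_left (add_le_add_left (add_le_add_left (add_le_add_left
          (add_le_add_left (Set.encard_insert_le _ _) 1) 1) 1) 1) 1) ?_
        simp [Set.encard_singleton]
        rfl
end

section
/- Let X be a topological space and E ⊆ X. Then closure(E ∩ interior(closure E)) = closure(interior(closure E)); i.e., k(I ∧ ik) = kik as operations on subsets of X. -/
open Set

theorem IsOpen.closure_inter_eq_of_subset_closure {X : Type*} [TopologicalSpace X] {s u : Set X}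
    (hu : IsOpen u) (hus : u ⊆ closure s) : closure (s ∩ u) = closure u := by
  refine (closure_mono inter_subset_right).antisymm (closure_minimal ?_ isClosed_closure)
  calc u = closure s ∩ u := (inter_eq_right.2 hus).symm
    _ ⊆ closure (s ∩ u) := hu.closure_inter

/-- `k(I ∧ ik) = kik`: the closure of `E ∩ interior (closure E)` equals
`closure (interior (closure E))`. -/
theorem closure_inter_interior_closure (X : Type*) [TopologicalSpace X] (E : Set X) :
    closure (E ∩ interior (closure E)) = closure (interior (closure E)) :=
  isOpen_interior.closure_inter_eq_of_subset_closure interior_subset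
end

section
/- Let T ⊆ ℝ (with the standard topology) be the set T = {1/n : n ∈ ℕ, n ≥ 1} ∪ ([2,4] \ {3 + 1/n : n ∈ ℕ, n ≥ 1}) ∪ ((5,7] ∩ (ℚ ∪ ⋃_{n ≥ 1} (6 + 1/(2nπ), 6 + 1/((2n−1)π)])). Then the 13 sets T, iT, ikT, ikiT, kT, kiT, kikT, kiT ∩ ikT, T ∩ kikT, T ∩ kiT, T ∩ ikT, T ∩ kiT ∩ ikT, T ∩ ikiT are pairwise distinct; hence 13 distinct sets can be generated from a single set in ℝ using closures, interiors, and intersections. -/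
noncomputable def kuratowskiT : Set ℝ :=
  (⋃ n : ℕ, ⋃ _ : 1 ≤ n, {(1 : ℝ) / n}) ∪
  (Set.Icc 2 4 \ ⋃ n : ℕ, ⋃ _ : 1 ≤ n, {3 + (1 : ℝ) / n}) ∪
  (Set.Ioc 5 7 ∩ (Set.range ((↑) : ℚ → ℝ) ∪
    ⋃ n : ℕ, ⋃ _ : 1 ≤ n,
      Set.Ioc (6 + 1 / (2 * (n : ℝ) * Real.pi)) (6 + 1 / ((2 * (n : ℝ) - 1) * Real.pi))))

namespace KurAux
open Set Real Filter Topology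

noncomputable def A0 : Set ℝ := Set.range (fun n : ℕ => (1:ℝ)/n)
noncomputable def D0 : Set ℝ := Set.range (fun n : ℕ => 3 + (1:ℝ)/n)
noncomputable def Q : Set ℝ := A0 ∪ Set.Icc 2 4 ∪ Set.Icc 5 7
noncomputable def N : Set ℝ := Set.Iic 4 ∪ Set.Icc 6 (6 + 1/Real.pi)

lemma isClosed_A0 : IsClosed A0 := by
  have h := (tendsto_one_div_atTop_nhds_zero_nat (𝕜 := ℝ)).isCompact_insert_range
  have : insert (0:ℝ) (Set.range fun n : ℕ => (1:ℝ)/n) = A0 := by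
    apply Set.insert_eq_self.mpr
    exact ⟨0, by norm_num⟩
  rw [this] at h
  exact h.isClosed

lemma isClosed_D0 : IsClosed D0 := by
  have ht : Tendsto (fun n : ℕ => 3 + (1:ℝ)/n) atTop (𝓝 3) := by
    have h3 : Tendsto (fun _ : ℕ => (3:ℝ)) atTop (𝓝 3) := tendsto_const_nhds
    simpa using h3.add tendsto_one_div_atTop_nhds_zero_nat
  have h := ht.isCompact_insert_range
  have : insert (3:ℝ) (Set.range fun n : ℕ => 3 + (1:ℝ)/n) = D0 := by
    apply Set.insert_eq_self.mpr
    exact ⟨0, by norm_num⟩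
  rw [this] at h
  exact h.isClosed

lemma A0_subset : A0 ⊆ Set.Icc 0 1 := by
  rintro x ⟨n, rfl⟩
  rcases Nat.eq_zero_or_pos n with h | h
  · simp [h]
  · have h1 : (1:ℝ) ≤ n := by exact_mod_cast h
    constructor
    · positivity
    · rw [div_le_one (by linarith)]; linarith

lemma not_irrational_A0 {x : ℝ} (hx : x ∈ A0) : ¬ Irrational x := by
  obtain ⟨n, rfl⟩ := hx
  simp only
  have : (1:ℝ)/n = ((1/n : ℚ) : ℝ) := by push_cast; ring
  rw [this]
  exact Rat.not_irrational _


lemma not_irrational_D0 {x : ℝ} (hx : x ∈ D0) : ¬ Irrational x := by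
  obtain ⟨n, rfl⟩ := hx
  simp only
  have : 3 + (1:ℝ)/n = ((3 + 1/n : ℚ) : ℝ) := by push_cast; ring
  rw [this]
  exact Rat.not_irrational _

lemma pi_gt_one : (1:ℝ) < Real.pi := by linarith [Real.pi_gt_three]

lemma b1_lt_7 : 6 + 1/Real.pi < 7 := by
  have := pi_gt_one
  have : 1/Real.pi < 1 := by
    rw [div_lt_one Real.pi_pos]; exact this
  linarith

/-- Numeric facts about the `n`-th interval. -/
lemma interval_facts {n : ℕ} (hn : 1 ≤ n) :
    6 < 6 + 1 / (2 * (n : ℝ) * Real.pi) ∧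
    6 + 1 / (2 * (n : ℝ) * Real.pi) < 6 + 1 / ((2 * (n : ℝ) - 1) * Real.pi) ∧
    6 + 1 / ((2 * (n : ℝ) - 1) * Real.pi) ≤ 6 + 1/Real.pi := by
  have hn1 : (1:ℝ) ≤ n := by exact_mod_cast hn
  have hpi := Real.pi_pos
  have h1 : (0:ℝ) < (2 * (n : ℝ) - 1) * Real.pi := by nlinarith
  have h2 : (0:ℝ) < 2 * (n : ℝ) * Real.pi := by nlinarith
  refine ⟨by have := one_div_pos.mpr h2; linarith, ?_, ?_⟩
  · have : (2 * (n : ℝ) - 1) * Real.pi < 2 * (n : ℝ) * Real.pi := by nlinarith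
    have := one_div_lt_one_div_of_lt h1 this
    linarith
  · have : Real.pi ≤ (2 * (n : ℝ) - 1) * Real.pi := by nlinarith
    have := one_div_le_one_div_of_le Real.pi_pos this
    linarith

lemma T_subset_Q : kuratowskiT ⊆ Q := by
  rintro x (( h | h) | h)
  · simp only [Set.mem_iUnion, Set.mem_singleton_iff] at h
    obtain ⟨n, _, rfl⟩ := h
    exact Or.inl (Or.inl ⟨n, rfl⟩)
  · exact Or.inl (Or.inr h.1)
  · exact Or.inr ⟨le_of_lt h.1.1, h.1.2⟩

lemma isClosed_Q : IsClosed Q :=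
  ((isClosed_A0.union isClosed_Icc).union isClosed_Icc)

lemma kT_subset_Q : closure kuratowskiT ⊆ Q :=
  isClosed_Q.closure_subset_iff.mpr T_subset_Q

/-- An irrational member of `T` lies in `[2,4]` or in `(6, 6+1/π]`. -/
lemma irrational_mem_cases {x : ℝ} (hx : x ∈ kuratowskiT) (hirr : Irrational x) :
    x ∈ Set.Icc (2:ℝ) 4 ∨ x ∈ Set.Ioc (6:ℝ) (6 + 1/Real.pi) := by
  rcases hx with (h | h) | h
  · exact absurd hirr (by
      simp only [Set.mem_iUnion, Set.mem_singleton_iff] at h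
      obtain ⟨n, _, rfl⟩ := h
      exact not_irrational_A0 ⟨n, rfl⟩)
  · exact Or.inl h.1
  · rcases h.2 with hq | hi
    · exact absurd hirr (by obtain ⟨q, rfl⟩ := hq; exact Rat.not_irrational q)
    · simp only [Set.mem_iUnion] at hi
      obtain ⟨n, hn, hmem⟩ := hi
      obtain ⟨ha, hab, hb⟩ := interval_facts hn
      exact Or.inr ⟨lt_of_lt_of_le ha (le_of_lt hmem.1), le_trans hmem.2 (by linarith)⟩


lemma Ioo24_sub : Set.Ioo 2 4 \ D0 ⊆ kuratowskiT := by
  rintro x ⟨hx, hxD⟩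
  refine Or.inl (Or.inr ⟨⟨le_of_lt hx.1, le_of_lt hx.2⟩, ?_⟩)
  intro h
  simp only [Set.mem_iUnion, Set.mem_singleton_iff] at h
  obtain ⟨n, _, rfl⟩ := h
  exact hxD ⟨n, rfl⟩

lemma Ioo24_sub_iT : Set.Ioo 2 4 \ D0 ⊆ interior kuratowskiT :=
  interior_maximal Ioo24_sub (isOpen_Ioo.sdiff isClosed_D0)

lemma Icc24_subset_closure :
    Set.Icc (2:ℝ) 4 ⊆ closure (Set.Ioo 2 4 \ D0) := by
  intro x hx
  rw [Metric.mem_closure_iff]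
  intro ε hε
  set lo := max 2 (x - ε) with hlo
  set hi := min 4 (x + ε) with hhi
  have hlohi : lo < hi := by
    apply max_lt <;> apply lt_min
    · norm_num
    · linarith [hx.1]
    · linarith [hx.2]
    · linarith
  obtain ⟨y, hyirr, hy1, hy2⟩ := exists_irrational_btwn hlohi
  refine ⟨y, ⟨⟨lt_of_le_of_lt (le_max_left _ _) hy1, lt_of_lt_of_le hy2 (min_le_left _ _)⟩,
    fun hD => not_irrational_D0 hD hyirr⟩, ?_⟩
  rw [Real.dist_eq, abs_sub_lt_iff]
  constructor <;>
    linarith [lt_of_lt_of_le hy2 (min_le_right 4 (x + ε)),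
      lt_of_le_of_lt (le_max_right 2 (x - ε)) hy1]

lemma Icc24_subset_kiT : Set.Icc (2:ℝ) 4 ⊆ closure (interior kuratowskiT) :=
  fun x hx => closure_mono Ioo24_sub_iT (Icc24_subset_closure hx)

lemma kiT_subset_kT : closure (interior kuratowskiT) ⊆ closure kuratowskiT :=
  closure_mono interior_subset

lemma Icc24_subset_kT : Set.Icc (2:ℝ) 4 ⊆ closure kuratowskiT :=
  fun x hx => kiT_subset_kT (Icc24_subset_kiT hx)

lemma Icc57_subset_kT : Set.Icc (5:ℝ) 7 ⊆ closure kuratowskiT := by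
  intro x hx
  rw [Metric.mem_closure_iff]
  intro ε hε
  set lo := max 5 (x - ε) with hlo
  set hi := min 7 (x + ε) with hhi
  have hlohi : lo < hi := by
    apply max_lt <;> apply lt_min
    · norm_num
    · linarith [hx.1]
    · linarith [hx.2]
    · linarith
  obtain ⟨q, hq1, hq2⟩ := exists_rat_btwn hlohi
  refine ⟨q, Or.inr ⟨⟨lt_of_le_of_lt (le_max_left _ _) hq1,
      le_of_lt (lt_of_lt_of_le hq2 (min_le_left _ _))⟩, Or.inl ⟨q, rfl⟩⟩, ?_⟩
  rw [Real.dist_eq, abs_sub_lt_iff]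
  constructor <;>
    linarith [lt_of_lt_of_le hq2 (min_le_right 7 (x + ε)),
      lt_of_le_of_lt (le_max_right 5 (x - ε)) hq1]

lemma interval_subset_iT {n : ℕ} (hn : 1 ≤ n) :
    Set.Ioo (6 + 1 / (2 * (n : ℝ) * Real.pi)) (6 + 1 / ((2 * (n : ℝ) - 1) * Real.pi)) ⊆
      interior kuratowskiT := by
  obtain ⟨ha, hab, hb⟩ := interval_facts hn
  have hb7 := b1_lt_7
  apply interior_maximal _ isOpen_Ioo
  intro x hx
  refine Or.inr ⟨⟨by linarith [hx.1], by linarith [hx.2]⟩, Or.inr ?_⟩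
  simp only [Set.mem_iUnion]
  exact ⟨n, hn, hx.1, le_of_lt hx.2⟩

lemma mem_kiT_6 : (6:ℝ) ∈ closure (interior kuratowskiT) := by
  rw [Metric.mem_closure_iff]
  intro ε hε
  obtain ⟨n₀, hn₀⟩ := exists_nat_one_div_lt hε
  set n := n₀ + 1 with hn
  have hn1 : 1 ≤ n := Nat.le_add_left 1 n₀
  obtain ⟨ha, hab, hb⟩ := interval_facts hn1
  have hnR : (1:ℝ) ≤ (n:ℝ) := by exact_mod_cast hn1
  have hbound : 1 / ((2 * (n : ℝ) - 1) * Real.pi) < ε := by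
    have hpos : (0:ℝ) < (n:ℝ) := by linarith
    have h1 : (n:ℝ) ≤ (2 * (n : ℝ) - 1) * Real.pi := by
      nlinarith [pi_gt_one]
    have h2 : 1 / ((2 * (n : ℝ) - 1) * Real.pi) ≤ 1 / (n:ℝ) :=
      one_div_le_one_div_of_le hpos h1
    have h3 : (1:ℝ) / n = 1 / ((n₀:ℝ) + 1) := by push_cast [hn]; ring_nf
    calc 1 / ((2 * (n : ℝ) - 1) * Real.pi) ≤ 1 / (n:ℝ) := h2
      _ < ε := by rw [h3]; exact hn₀
  set y := ((6 + 1 / (2 * (n : ℝ) * Real.pi)) + (6 + 1 / ((2 * (n : ℝ) - 1) * Real.pi))) / 2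
    with hy
  have hy1 : 6 + 1 / (2 * (n : ℝ) * Real.pi) < y := by rw [hy]; linarith
  have hy2 : y < 6 + 1 / ((2 * (n : ℝ) - 1) * Real.pi) := by rw [hy]; linarith
  refine ⟨y, interval_subset_iT hn1 ⟨hy1, hy2⟩, ?_⟩
  rw [Real.dist_eq, abs_sub_lt_iff]
  constructor <;> [skip; linarith]
  linarith


lemma isClosed_N : IsClosed N := isClosed_Iic.union isClosed_Icc

lemma iT_subset_N : interior kuratowskiT ⊆ N := by
  intro x hx
  obtain ⟨ε, hε, hball⟩ := Metric.mem_nhds_iff.mp (mem_interior_iff_mem_nhds.mp hx)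
  rcases le_or_gt x 4 with h4 | h4
  · exact Or.inl h4
  have hpiinv : (0:ℝ) < 1/Real.pi := by positivity
  refine Or.inr ⟨?_, ?_⟩
  · by_contra h6
    push_neg at h6
    have hlt : x < min (x+ε) 6 := lt_min (by linarith) h6
    obtain ⟨y, hyirr, hy1, hy2⟩ := exists_irrational_btwn hlt
    have hym1 := lt_of_lt_of_le hy2 (min_le_left (x+ε) 6)
    have hym2 := lt_of_lt_of_le hy2 (min_le_right (x+ε) 6)
    have hyT : y ∈ kuratowskiT := hball (by
      rw [Metric.mem_ball, Real.dist_eq, abs_sub_lt_iff]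
      constructor <;> linarith)
    rcases irrational_mem_cases hyT hyirr with h | h
    · linarith [h.2]
    · linarith [h.1]
  · by_contra hb
    push_neg at hb
    obtain ⟨y, hyirr, hy1, hy2⟩ := exists_irrational_btwn (by linarith : x < x + ε)
    have hyT : y ∈ kuratowskiT := hball (by
      rw [Metric.mem_ball, Real.dist_eq, abs_sub_lt_iff]
      constructor <;> linarith)
    rcases irrational_mem_cases hyT hyirr with h | h
    · linarith [h.2]
    · linarith [h.2]

lemma kiT_subset_N : closure (interior kuratowskiT) ⊆ N :=
  isClosed_N.closure_subset_iff.mpr iT_subset_N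

lemma ikT_subset_Ici2 : interior (closure kuratowskiT) ⊆ Set.Ici 2 := by
  intro x hx
  by_contra h2
  simp only [Set.mem_Ici, not_le] at h2
  obtain ⟨ε, hε, hball⟩ := Metric.mem_nhds_iff.mp (mem_interior_iff_mem_nhds.mp hx)
  have hlt : x < min (x+ε) 2 := lt_min (by linarith) h2
  obtain ⟨y, hyirr, hy1, hy2⟩ := exists_irrational_btwn hlt
  have hym1 := lt_of_lt_of_le hy2 (min_le_left (x+ε) 2)
  have hym2 := lt_of_lt_of_le hy2 (min_le_right (x+ε) 2)
  have hyQ : y ∈ Q := kT_subset_Q (hball (by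
    rw [Metric.mem_ball, Real.dist_eq, abs_sub_lt_iff]
    constructor <;> linarith))
  rcases hyQ with (h | h) | h
  · exact not_irrational_A0 h hyirr
  · linarith [h.1]
  · linarith [h.1]

lemma kikT_subset_Ici2 : closure (interior (closure kuratowskiT)) ⊆ Set.Ici 2 :=
  isClosed_Ici.closure_subset_iff.mpr ikT_subset_Ici2

lemma not_mem_T_0 : (0:ℝ) ∉ kuratowskiT := by
  rintro ((h | h) | h)
  · simp only [Set.mem_iUnion, Set.mem_singleton_iff] at h
    obtain ⟨n, hn, h⟩ := h
    have h1 : (1:ℝ) ≤ n := by exact_mod_cast hn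
    have h2 : (0:ℝ) < 1/n := by positivity
    linarith [h.symm ▸ h2]
  · exact absurd h.1.1 (by norm_num)
  · exact absurd h.1.1 (by norm_num)

lemma mem_T_1 : (1:ℝ) ∈ kuratowskiT := by
  refine Or.inl (Or.inl ?_)
  simp only [Set.mem_iUnion, Set.mem_singleton_iff]
  exact ⟨1, le_refl 1, by norm_num⟩

lemma mem_T_2 : (2:ℝ) ∈ kuratowskiT := by
  refine Or.inl (Or.inr ⟨⟨le_refl 2, by norm_num⟩, ?_⟩)
  intro h
  simp only [Set.mem_iUnion, Set.mem_singleton_iff] at h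
  obtain ⟨n, hn, h⟩ := h
  have h1 : (1:ℝ) ≤ n := by exact_mod_cast hn
  have h2 : (0:ℝ) < 1/n := by positivity
  linarith

lemma mem_T_3 : (3:ℝ) ∈ kuratowskiT := by
  refine Or.inl (Or.inr ⟨⟨by norm_num, by norm_num⟩, ?_⟩)
  intro h
  simp only [Set.mem_iUnion, Set.mem_singleton_iff] at h
  obtain ⟨n, hn, h⟩ := h
  have h1 : (1:ℝ) ≤ n := by exact_mod_cast hn
  have h2 : (0:ℝ) < 1/n := by positivity
  linarith

lemma not_mem_T_35 : (7/2:ℝ) ∉ kuratowskiT := by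
  rintro ((h | h) | h)
  · simp only [Set.mem_iUnion, Set.mem_singleton_iff] at h
    obtain ⟨n, hn, h⟩ := h
    have h1 : (1:ℝ) ≤ n := by exact_mod_cast hn
    have h2 : (1:ℝ)/n ≤ 1 := by
      rw [div_le_one (by linarith)]; linarith
    linarith [h.symm ▸ h2]
  · refine h.2 ?_
    simp only [Set.mem_iUnion, Set.mem_singleton_iff]
    exact ⟨2, by norm_num, by norm_num⟩
  · exact absurd h.1.1 (by norm_num)

lemma mem_T_55 : (11/2:ℝ) ∈ kuratowskiT :=
  Or.inr ⟨⟨by norm_num, by norm_num⟩, Or.inl ⟨(11/2:ℚ), by norm_num⟩⟩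

lemma mem_T_6 : (6:ℝ) ∈ kuratowskiT :=
  Or.inr ⟨⟨by norm_num, by norm_num⟩, Or.inl ⟨(6:ℚ), by norm_num⟩⟩

lemma mem_T_7 : (7:ℝ) ∈ kuratowskiT :=
  Or.inr ⟨⟨by norm_num, le_refl 7⟩, Or.inl ⟨(7:ℚ), by norm_num⟩⟩

lemma not_mem_iT_3 : (3:ℝ) ∉ interior kuratowskiT := by
  intro hx
  obtain ⟨ε, hε, hball⟩ := Metric.mem_nhds_iff.mp (mem_interior_iff_mem_nhds.mp hx)
  obtain ⟨n₀, hn₀⟩ := exists_nat_one_div_lt hε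
  have h1 : (1:ℝ) ≤ ((n₀+1 : ℕ):ℝ) := by exact_mod_cast Nat.le_add_left 1 n₀
  have h2 : (0:ℝ) < 1/((n₀+1 : ℕ):ℝ) := by positivity
  have h3 : (1:ℝ)/((n₀+1 : ℕ):ℝ) < ε := by
    have : ((n₀+1 : ℕ):ℝ) = (n₀:ℝ) + 1 := by push_cast; ring
    rw [this]; exact hn₀
  have key : (3 + 1/((n₀+1 : ℕ):ℝ)) ∈ kuratowskiT := hball (by
    rw [Metric.mem_ball, Real.dist_eq, abs_sub_lt_iff]
    constructor <;> linarith)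
  rcases key with (h | h) | h
  · simp only [Set.mem_iUnion, Set.mem_singleton_iff] at h
    obtain ⟨m, hm, h⟩ := h
    have hm1 : (1:ℝ) ≤ m := by exact_mod_cast hm
    have hm2 : (1:ℝ)/m ≤ 1 := by rw [div_le_one (by linarith)]; linarith
    linarith [h.symm ▸ hm2]
  · refine h.2 ?_
    simp only [Set.mem_iUnion, Set.mem_singleton_iff]
    exact ⟨n₀+1, Nat.le_add_left 1 n₀, rfl⟩
  · have h4 : (1:ℝ)/((n₀+1 : ℕ):ℝ) ≤ 1 := by rw [div_le_one (by linarith)]; linarith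
    linarith [h.1.1]

lemma not_mem_iT_6 : (6:ℝ) ∉ interior kuratowskiT := by
  intro hx
  obtain ⟨ε, hε, hball⟩ := Metric.mem_nhds_iff.mp (mem_interior_iff_mem_nhds.mp hx)
  have hlt : max 5 (6-ε) < 6 := max_lt (by norm_num) (by linarith)
  obtain ⟨y, hyirr, hy1, hy2⟩ := exists_irrational_btwn hlt
  have hy5 := lt_of_le_of_lt (le_max_left 5 (6-ε)) hy1
  have hyε := lt_of_le_of_lt (le_max_right 5 (6-ε)) hy1
  have hyT : y ∈ kuratowskiT := hball (by
    rw [Metric.mem_ball, Real.dist_eq, abs_sub_lt_iff]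
    constructor <;> linarith)
  rcases irrational_mem_cases hyT hyirr with h | h
  · linarith [h.2]
  · linarith [h.1]

lemma not_mem_ikT_2 : (2:ℝ) ∉ interior (closure kuratowskiT) := by
  intro hx
  obtain ⟨ε, hε, hball⟩ := Metric.mem_nhds_iff.mp (mem_interior_iff_mem_nhds.mp hx)
  have hlt : max 1 (2-ε) < 2 := max_lt one_lt_two (by linarith)
  obtain ⟨y, hy1, hy2⟩ := exists_between hlt
  have hy5 := lt_of_le_of_lt (le_max_left 1 (2-ε)) hy1
  have hyε := lt_of_le_of_lt (le_max_right 1 (2-ε)) hy1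
  have hyQ : y ∈ Q := kT_subset_Q (hball (by
    rw [Metric.mem_ball, Real.dist_eq, abs_sub_lt_iff]
    constructor <;> linarith))
  rcases hyQ with (h | h) | h
  · linarith [(A0_subset h).2]
  · linarith [h.1]
  · linarith [h.1]

lemma not_mem_ikT_7 : (7:ℝ) ∉ interior (closure kuratowskiT) := by
  intro hx
  obtain ⟨ε, hε, hball⟩ := Metric.mem_nhds_iff.mp (mem_interior_iff_mem_nhds.mp hx)
  obtain ⟨y, hy1, hy2⟩ := exists_between (by linarith : (7:ℝ) < 7 + ε)
  have hyQ : y ∈ Q := kT_subset_Q (hball (by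
    rw [Metric.mem_ball, Real.dist_eq, abs_sub_lt_iff]
    constructor <;> linarith))
  rcases hyQ with (h | h) | h
  · linarith [(A0_subset h).2]
  · linarith [h.2]
  · linarith [h.2]

lemma not_mem_ikiT_6 : (6:ℝ) ∉ interior (closure (interior kuratowskiT)) := by
  intro hx
  obtain ⟨ε, hε, hball⟩ := Metric.mem_nhds_iff.mp (mem_interior_iff_mem_nhds.mp hx)
  have hlt : max 4 (6-ε) < 6 := max_lt (by norm_num) (by linarith)
  obtain ⟨y, hy1, hy2⟩ := exists_between hlt
  have hy4 := lt_of_le_of_lt (le_max_left 4 (6-ε)) hy1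
  have hyε := lt_of_le_of_lt (le_max_right 4 (6-ε)) hy1
  have hyN : y ∈ N := kiT_subset_N (hball (by
    rw [Metric.mem_ball, Real.dist_eq, abs_sub_lt_iff]
    constructor <;> linarith))
  rcases hyN with h | h
  · exact absurd h (by simp only [Set.mem_Iic]; linarith)
  · linarith [h.1]

lemma mem_kT_0 : (0:ℝ) ∈ closure kuratowskiT := by
  rw [Metric.mem_closure_iff]
  intro ε hε
  obtain ⟨n₀, hn₀⟩ := exists_nat_one_div_lt hε
  have hpos : (0:ℝ) < (n₀:ℝ) + 1 := by positivity
  refine ⟨1/((n₀:ℝ)+1), Or.inl (Or.inl ?_), ?_⟩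
  · simp only [Set.mem_iUnion, Set.mem_singleton_iff]
    exact ⟨n₀+1, Nat.le_add_left 1 n₀, by push_cast; ring⟩
  · rw [Real.dist_eq, zero_sub, abs_neg, abs_of_pos (by positivity)]
    exact hn₀

end KurAux


/-- For the set `T` above, the 13 sets `T, iT, ikT, ikiT, kT, kiT, kikT, kiT ∩ ikT,
T ∩ kikT, T ∩ kiT, T ∩ ikT, T ∩ kiT ∩ ikT, T ∩ ikiT` are pairwise distinct: 13 distinct
sets can be generated from a single subset of `ℝ` using closures, interiors, and
intersections. -/
theorem kuratowskiT_thirteen_distinct :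
    ([kuratowskiT, interior kuratowskiT, interior (closure kuratowskiT),
      interior (closure (interior kuratowskiT)), closure kuratowskiT,
      closure (interior kuratowskiT), closure (interior (closure kuratowskiT)),
      closure (interior kuratowskiT) ∩ interior (closure kuratowskiT),
      kuratowskiT ∩ closure (interior (closure kuratowskiT)),
      kuratowskiT ∩ closure (interior kuratowskiT),
      kuratowskiT ∩ interior (closure kuratowskiT),
      kuratowskiT ∩ closure (interior kuratowskiT) ∩ interior (closure kuratowskiT),
      kuratowskiT ∩ interior (closure (interior kuratowskiT))] :
        List (Set ℝ)).Pairwise (· ≠ ·) := by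
  have hiT_ikT : interior kuratowskiT ⊆ interior (closure kuratowskiT) := interior_mono subset_closure
  have hkiT_kikT : closure (interior kuratowskiT) ⊆ closure (interior (closure kuratowskiT)) := closure_mono hiT_ikT
  have hikiT_ikT : interior (closure (interior kuratowskiT)) ⊆ interior (closure kuratowskiT) := interior_mono (closure_mono interior_subset)
  have hIoo24_ikT : Set.Ioo (2:ℝ) 4 ⊆ interior (closure kuratowskiT) := interior_maximal (fun x hx => KurAux.Icc24_subset_kT (Set.Ioo_subset_Icc_self hx)) isOpen_Ioo
  have hIoo24_ikiT : Set.Ioo (2:ℝ) 4 ⊆ interior (closure (interior kuratowskiT)) := interior_maximal (fun x hx => KurAux.Icc24_subset_kiT (Set.Ioo_subset_Icc_self hx)) isOpen_Ioo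
  have hIoo57_ikT : Set.Ioo (5:ℝ) 7 ⊆ interior (closure kuratowskiT) := interior_maximal (fun x hx => KurAux.Icc57_subset_kT (Set.Ioo_subset_Icc_self hx)) isOpen_Ioo
  have hIcc57_kikT : Set.Icc (5:ℝ) 7 ⊆ closure (interior (closure kuratowskiT)) := by
    have hmono := closure_mono hIoo57_ikT
    rwa [closure_Ioo (by norm_num : (5:ℝ) ≠ 7)] at hmono
  have a_p0_1 : (0:ℝ) ∉ kuratowskiT := KurAux.not_mem_T_0
  have a_p0_3 : (0:ℝ) ∉ interior (closure kuratowskiT) := fun h => by have := KurAux.ikT_subset_Ici2 h; norm_num [Set.mem_Ici] at this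
  have a_p0_2 : (0:ℝ) ∉ interior kuratowskiT := fun h => a_p0_3 (hiT_ikT h)
  have a_p0_7 : (0:ℝ) ∉ closure (interior (closure kuratowskiT)) := fun h => by have := KurAux.kikT_subset_Ici2 h; norm_num [Set.mem_Ici] at this
  have a_p0_6 : (0:ℝ) ∉ closure (interior kuratowskiT) := fun h => a_p0_7 (hkiT_kikT h)
  have a_p0_4 : (0:ℝ) ∉ interior (closure (interior kuratowskiT)) := fun h => a_p0_3 (hikiT_ikT h)
  have a_p0_5 : (0:ℝ) ∈ closure kuratowskiT := KurAux.mem_kT_0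
  have a_p0_8 : (0:ℝ) ∉ closure (interior kuratowskiT) ∩ interior (closure kuratowskiT) := fun h => a_p0_6 h.1
  have a_p0_9 : (0:ℝ) ∉ kuratowskiT ∩ closure (interior (closure kuratowskiT)) := fun h => a_p0_1 h.1
  have a_p0_10 : (0:ℝ) ∉ kuratowskiT ∩ closure (interior kuratowskiT) := fun h => a_p0_1 h.1
  have a_p0_11 : (0:ℝ) ∉ kuratowskiT ∩ interior (closure kuratowskiT) := fun h => a_p0_1 h.1
  have a_p0_12 : (0:ℝ) ∉ kuratowskiT ∩ closure (interior kuratowskiT) ∩ interior (closure kuratowskiT) := fun h => a_p0_1 h.1.1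
  have a_p0_13 : (0:ℝ) ∉ kuratowskiT ∩ interior (closure (interior kuratowskiT)) := fun h => a_p0_1 h.1
  have a_p1_1 : (1:ℝ) ∈ kuratowskiT := KurAux.mem_T_1
  have a_p1_5 : (1:ℝ) ∈ closure kuratowskiT := subset_closure a_p1_1
  have a_p1_7 : (1:ℝ) ∉ closure (interior (closure kuratowskiT)) := fun h => by have := KurAux.kikT_subset_Ici2 h; norm_num [Set.mem_Ici] at this
  have a_p1_3 : (1:ℝ) ∉ interior (closure kuratowskiT) := fun h => a_p1_7 (subset_closure h)
  have a_p1_6 : (1:ℝ) ∉ closure (interior kuratowskiT) := fun h => a_p1_7 (hkiT_kikT h)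
  have a_p1_2 : (1:ℝ) ∉ interior kuratowskiT := fun h => a_p1_3 (hiT_ikT h)
  have a_p1_4 : (1:ℝ) ∉ interior (closure (interior kuratowskiT)) := fun h => a_p1_3 (hikiT_ikT h)
  have a_p1_8 : (1:ℝ) ∉ closure (interior kuratowskiT) ∩ interior (closure kuratowskiT) := fun h => a_p1_6 h.1
  have a_p1_9 : (1:ℝ) ∉ kuratowskiT ∩ closure (interior (closure kuratowskiT)) := fun h => a_p1_7 h.2
  have a_p1_10 : (1:ℝ) ∉ kuratowskiT ∩ closure (interior kuratowskiT) := fun h => a_p1_6 h.2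
  have a_p1_11 : (1:ℝ) ∉ kuratowskiT ∩ interior (closure kuratowskiT) := fun h => a_p1_3 h.2
  have a_p1_12 : (1:ℝ) ∉ kuratowskiT ∩ closure (interior kuratowskiT) ∩ interior (closure kuratowskiT) := fun h => a_p1_6 h.1.2
  have a_p1_13 : (1:ℝ) ∉ kuratowskiT ∩ interior (closure (interior kuratowskiT)) := fun h => a_p1_4 h.2
  have a_p2_1 : (2:ℝ) ∈ kuratowskiT := KurAux.mem_T_2
  have a_p2_5 : (2:ℝ) ∈ closure kuratowskiT := subset_closure a_p2_1
  have a_p2_6 : (2:ℝ) ∈ closure (interior kuratowskiT) := KurAux.Icc24_subset_kiT (by norm_num)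
  have a_p2_7 : (2:ℝ) ∈ closure (interior (closure kuratowskiT)) := hkiT_kikT a_p2_6
  have a_p2_3 : (2:ℝ) ∉ interior (closure kuratowskiT) := KurAux.not_mem_ikT_2
  have a_p2_2 : (2:ℝ) ∉ interior kuratowskiT := fun h => a_p2_3 (hiT_ikT h)
  have a_p2_4 : (2:ℝ) ∉ interior (closure (interior kuratowskiT)) := fun h => a_p2_3 (hikiT_ikT h)
  have a_p2_8 : (2:ℝ) ∉ closure (interior kuratowskiT) ∩ interior (closure kuratowskiT) := fun h => a_p2_3 h.2
  have a_p2_9 : (2:ℝ) ∈ kuratowskiT ∩ closure (interior (closure kuratowskiT)) := ⟨a_p2_1, a_p2_7⟩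
  have a_p2_10 : (2:ℝ) ∈ kuratowskiT ∩ closure (interior kuratowskiT) := ⟨a_p2_1, a_p2_6⟩
  have a_p2_11 : (2:ℝ) ∉ kuratowskiT ∩ interior (closure kuratowskiT) := fun h => a_p2_3 h.2
  have a_p2_12 : (2:ℝ) ∉ kuratowskiT ∩ closure (interior kuratowskiT) ∩ interior (closure kuratowskiT) := fun h => a_p2_3 h.2
  have a_p2_13 : (2:ℝ) ∉ kuratowskiT ∩ interior (closure (interior kuratowskiT)) := fun h => a_p2_4 h.2
  have a_p3_1 : (3:ℝ) ∈ kuratowskiT := KurAux.mem_T_3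
  have a_p3_2 : (3:ℝ) ∉ interior kuratowskiT := KurAux.not_mem_iT_3
  have a_p3_3 : (3:ℝ) ∈ interior (closure kuratowskiT) := hIoo24_ikT (by norm_num)
  have a_p3_4 : (3:ℝ) ∈ interior (closure (interior kuratowskiT)) := hIoo24_ikiT (by norm_num)
  have a_p3_5 : (3:ℝ) ∈ closure kuratowskiT := subset_closure a_p3_1
  have a_p3_6 : (3:ℝ) ∈ closure (interior kuratowskiT) := KurAux.Icc24_subset_kiT (by norm_num)
  have a_p3_7 : (3:ℝ) ∈ closure (interior (closure kuratowskiT)) := hkiT_kikT a_p3_6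
  have a_p3_8 : (3:ℝ) ∈ closure (interior kuratowskiT) ∩ interior (closure kuratowskiT) := ⟨a_p3_6, a_p3_3⟩
  have a_p3_9 : (3:ℝ) ∈ kuratowskiT ∩ closure (interior (closure kuratowskiT)) := ⟨a_p3_1, a_p3_7⟩
  have a_p3_10 : (3:ℝ) ∈ kuratowskiT ∩ closure (interior kuratowskiT) := ⟨a_p3_1, a_p3_6⟩
  have a_p3_11 : (3:ℝ) ∈ kuratowskiT ∩ interior (closure kuratowskiT) := ⟨a_p3_1, a_p3_3⟩
  have a_p3_12 : (3:ℝ) ∈ kuratowskiT ∩ closure (interior kuratowskiT) ∩ interior (closure kuratowskiT) := ⟨⟨a_p3_1, a_p3_6⟩, a_p3_3⟩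
  have a_p3_13 : (3:ℝ) ∈ kuratowskiT ∩ interior (closure (interior kuratowskiT)) := ⟨a_p3_1, a_p3_4⟩
  have a_p35_1 : (7/2:ℝ) ∉ kuratowskiT := KurAux.not_mem_T_35
  have a_p35_2 : (7/2:ℝ) ∉ interior kuratowskiT := fun h => a_p35_1 (interior_subset h)
  have a_p35_3 : (7/2:ℝ) ∈ interior (closure kuratowskiT) := hIoo24_ikT (by norm_num)
  have a_p35_4 : (7/2:ℝ) ∈ interior (closure (interior kuratowskiT)) := hIoo24_ikiT (by norm_num)
  have a_p35_5 : (7/2:ℝ) ∈ closure kuratowskiT := KurAux.Icc24_subset_kT (by norm_num)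
  have a_p35_6 : (7/2:ℝ) ∈ closure (interior kuratowskiT) := KurAux.Icc24_subset_kiT (by norm_num)
  have a_p35_7 : (7/2:ℝ) ∈ closure (interior (closure kuratowskiT)) := hkiT_kikT a_p35_6
  have a_p35_8 : (7/2:ℝ) ∈ closure (interior kuratowskiT) ∩ interior (closure kuratowskiT) := ⟨a_p35_6, a_p35_3⟩
  have a_p35_9 : (7/2:ℝ) ∉ kuratowskiT ∩ closure (interior (closure kuratowskiT)) := fun h => a_p35_1 h.1
  have a_p35_10 : (7/2:ℝ) ∉ kuratowskiT ∩ closure (interior kuratowskiT) := fun h => a_p35_1 h.1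
  have a_p35_11 : (7/2:ℝ) ∉ kuratowskiT ∩ interior (closure kuratowskiT) := fun h => a_p35_1 h.1
  have a_p35_12 : (7/2:ℝ) ∉ kuratowskiT ∩ closure (interior kuratowskiT) ∩ interior (closure kuratowskiT) := fun h => a_p35_1 h.1.1
  have a_p35_13 : (7/2:ℝ) ∉ kuratowskiT ∩ interior (closure (interior kuratowskiT)) := fun h => a_p35_1 h.1
  have a_p6_1 : (6:ℝ) ∈ kuratowskiT := KurAux.mem_T_6
  have a_p6_2 : (6:ℝ) ∉ interior kuratowskiT := KurAux.not_mem_iT_6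
  have a_p6_3 : (6:ℝ) ∈ interior (closure kuratowskiT) := hIoo57_ikT (by norm_num)
  have a_p6_4 : (6:ℝ) ∉ interior (closure (interior kuratowskiT)) := KurAux.not_mem_ikiT_6
  have a_p6_5 : (6:ℝ) ∈ closure kuratowskiT := subset_closure a_p6_1
  have a_p6_6 : (6:ℝ) ∈ closure (interior kuratowskiT) := KurAux.mem_kiT_6
  have a_p6_7 : (6:ℝ) ∈ closure (interior (closure kuratowskiT)) := hkiT_kikT a_p6_6
  have a_p6_8 : (6:ℝ) ∈ closure (interior kuratowskiT) ∩ interior (closure kuratowskiT) := ⟨a_p6_6, a_p6_3⟩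
  have a_p6_9 : (6:ℝ) ∈ kuratowskiT ∩ closure (interior (closure kuratowskiT)) := ⟨a_p6_1, a_p6_7⟩
  have a_p6_10 : (6:ℝ) ∈ kuratowskiT ∩ closure (interior kuratowskiT) := ⟨a_p6_1, a_p6_6⟩
  have a_p6_11 : (6:ℝ) ∈ kuratowskiT ∩ interior (closure kuratowskiT) := ⟨a_p6_1, a_p6_3⟩
  have a_p6_12 : (6:ℝ) ∈ kuratowskiT ∩ closure (interior kuratowskiT) ∩ interior (closure kuratowskiT) := ⟨⟨a_p6_1, a_p6_6⟩, a_p6_3⟩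
  have a_p6_13 : (6:ℝ) ∉ kuratowskiT ∩ interior (closure (interior kuratowskiT)) := fun h => a_p6_4 h.2
  have a_p7_1 : (7:ℝ) ∈ kuratowskiT := KurAux.mem_T_7
  have a_p7_6 : (7:ℝ) ∉ closure (interior kuratowskiT) := fun h => by
      have hb := KurAux.b1_lt_7
      rcases KurAux.kiT_subset_N h with h' | h'
      · simp only [Set.mem_Iic] at h'; linarith
      · exact absurd h'.2 (by linarith)
  have a_p7_2 : (7:ℝ) ∉ interior kuratowskiT := fun h => a_p7_6 (subset_closure h)
  have a_p7_4 : (7:ℝ) ∉ interior (closure (interior kuratowskiT)) := fun h => a_p7_6 (interior_subset h)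
  have a_p7_3 : (7:ℝ) ∉ interior (closure kuratowskiT) := KurAux.not_mem_ikT_7
  have a_p7_5 : (7:ℝ) ∈ closure kuratowskiT := KurAux.Icc57_subset_kT (by norm_num)
  have a_p7_7 : (7:ℝ) ∈ closure (interior (closure kuratowskiT)) := hIcc57_kikT (by norm_num)
  have a_p7_8 : (7:ℝ) ∉ closure (interior kuratowskiT) ∩ interior (closure kuratowskiT) := fun h => a_p7_6 h.1
  have a_p7_9 : (7:ℝ) ∈ kuratowskiT ∩ closure (interior (closure kuratowskiT)) := ⟨a_p7_1, a_p7_7⟩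
  have a_p7_10 : (7:ℝ) ∉ kuratowskiT ∩ closure (interior kuratowskiT) := fun h => a_p7_6 h.2
  have a_p7_11 : (7:ℝ) ∉ kuratowskiT ∩ interior (closure kuratowskiT) := fun h => a_p7_3 h.2
  have a_p7_12 : (7:ℝ) ∉ kuratowskiT ∩ closure (interior kuratowskiT) ∩ interior (closure kuratowskiT) := fun h => a_p7_6 h.1.2
  have a_p7_13 : (7:ℝ) ∉ kuratowskiT ∩ interior (closure (interior kuratowskiT)) := fun h => a_p7_4 h.2
  have a_pq_1 : (11/2:ℝ) ∈ kuratowskiT := KurAux.mem_T_55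
  have a_pq_6 : (11/2:ℝ) ∉ closure (interior kuratowskiT) := fun h => by
      rcases KurAux.kiT_subset_N h with h' | h'
      · simp only [Set.mem_Iic] at h'; linarith
      · exact absurd h'.1 (by norm_num)
  have a_pq_2 : (11/2:ℝ) ∉ interior kuratowskiT := fun h => a_pq_6 (subset_closure h)
  have a_pq_4 : (11/2:ℝ) ∉ interior (closure (interior kuratowskiT)) := fun h => a_pq_6 (interior_subset h)
  have a_pq_3 : (11/2:ℝ) ∈ interior (closure kuratowskiT) := hIoo57_ikT (by norm_num)
  have a_pq_5 : (11/2:ℝ) ∈ closure kuratowskiT := KurAux.Icc57_subset_kT (by norm_num)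
  have a_pq_7 : (11/2:ℝ) ∈ closure (interior (closure kuratowskiT)) := hIcc57_kikT (by norm_num)
  have a_pq_8 : (11/2:ℝ) ∉ closure (interior kuratowskiT) ∩ interior (closure kuratowskiT) := fun h => a_pq_6 h.1
  have a_pq_9 : (11/2:ℝ) ∈ kuratowskiT ∩ closure (interior (closure kuratowskiT)) := ⟨a_pq_1, a_pq_7⟩
  have a_pq_10 : (11/2:ℝ) ∉ kuratowskiT ∩ closure (interior kuratowskiT) := fun h => a_pq_6 h.2
  have a_pq_11 : (11/2:ℝ) ∈ kuratowskiT ∩ interior (closure kuratowskiT) := ⟨a_pq_1, a_pq_3⟩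
  have a_pq_12 : (11/2:ℝ) ∉ kuratowskiT ∩ closure (interior kuratowskiT) ∩ interior (closure kuratowskiT) := fun h => a_pq_6 h.1.2
  have a_pq_13 : (11/2:ℝ) ∉ kuratowskiT ∩ interior (closure (interior kuratowskiT)) := fun h => a_pq_4 h.2
  simp only [List.pairwise_cons, List.mem_cons, List.not_mem_nil, or_false,
    forall_eq_or_imp, forall_eq, ne_eq, List.Pairwise.nil, IsEmpty.forall_iff,
    implies_true, and_true, false_implies]
  exact ⟨⟨(fun h => a_p3_2 (h ▸ a_p3_1)), (fun h => a_p2_3 (h ▸ a_p2_1)), (fun h => a_p6_4 (h ▸ a_p6_1)), (fun h => a_p35_1 (h.symm ▸ a_p35_5)), (fun h => a_pq_6 (h ▸ a_pq_1)), (fun h => a_p35_1 (h.symm ▸ a_p35_7)), (fun h => a_p2_8 (h ▸ a_p2_1)), (fun h => a_p1_9 (h ▸ a_p1_1)), (fun h => a_pq_10 (h ▸ a_pq_1)), (fun h => a_p2_11 (h ▸ a_p2_1)), (fun h => a_p2_12 (h ▸ a_p2_1)), (fun h => a_p6_13 (h ▸ a_p6_1))⟩,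
    ⟨(fun h => a_p3_2 (h.symm ▸ a_p3_3)), (fun h => a_p3_2 (h.symm ▸ a_p3_4)), (fun h => a_p3_2 (h.symm ▸ a_p3_5)), (fun h => a_p3_2 (h.symm ▸ a_p3_6)), (fun h => a_p3_2 (h.symm ▸ a_p3_7)), (fun h => a_p3_2 (h.symm ▸ a_p3_8)), (fun h => a_p3_2 (h.symm ▸ a_p3_9)), (fun h => a_p3_2 (h.symm ▸ a_p3_10)), (fun h => a_p3_2 (h.symm ▸ a_p3_11)), (fun h => a_p3_2 (h.symm ▸ a_p3_12)), (fun h => a_p3_2 (h.symm ▸ a_p3_13))⟩,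
    ⟨(fun h => a_p6_4 (h ▸ a_p6_3)), (fun h => a_p2_3 (h.symm ▸ a_p2_5)), (fun h => a_p2_3 (h.symm ▸ a_p2_6)), (fun h => a_p2_3 (h.symm ▸ a_p2_7)), (fun h => a_pq_8 (h ▸ a_pq_3)), (fun h => a_p2_3 (h.symm ▸ a_p2_9)), (fun h => a_p2_3 (h.symm ▸ a_p2_10)), (fun h => a_p35_11 (h ▸ a_p35_3)), (fun h => a_pq_12 (h ▸ a_pq_3)), (fun h => a_p6_13 (h ▸ a_p6_3))⟩,
    ⟨(fun h => a_p6_4 (h.symm ▸ a_p6_5)), (fun h => a_p6_4 (h.symm ▸ a_p6_6)), (fun h => a_p6_4 (h.symm ▸ a_p6_7)), (fun h => a_p6_4 (h.symm ▸ a_p6_8)), (fun h => a_p6_4 (h.symm ▸ a_p6_9)), (fun h => a_p6_4 (h.symm ▸ a_p6_10)), (fun h => a_p6_4 (h.symm ▸ a_p6_11)), (fun h => a_p6_4 (h.symm ▸ a_p6_12)), (fun h => a_p35_13 (h ▸ a_p35_4))⟩,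
    ⟨(fun h => a_pq_6 (h ▸ a_pq_5)), (fun h => a_p1_7 (h ▸ a_p1_5)), (fun h => a_p2_8 (h ▸ a_p2_5)), (fun h => a_p35_9 (h ▸ a_p35_5)), (fun h => a_pq_10 (h ▸ a_pq_5)), (fun h => a_p2_11 (h ▸ a_p2_5)), (fun h => a_p2_12 (h ▸ a_p2_5)), (fun h => a_p6_13 (h ▸ a_p6_5))⟩,
    ⟨(fun h => a_pq_6 (h.symm ▸ a_pq_7)), (fun h => a_p2_8 (h ▸ a_p2_6)), (fun h => a_pq_6 (h.symm ▸ a_pq_9)), (fun h => a_p35_10 (h ▸ a_p35_6)), (fun h => a_p2_11 (h ▸ a_p2_6)), (fun h => a_p2_12 (h ▸ a_p2_6)), (fun h => a_p6_13 (h ▸ a_p6_6))⟩,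
    ⟨(fun h => a_p2_8 (h ▸ a_p2_7)), (fun h => a_p35_9 (h ▸ a_p35_7)), (fun h => a_pq_10 (h ▸ a_pq_7)), (fun h => a_p2_11 (h ▸ a_p2_7)), (fun h => a_p2_12 (h ▸ a_p2_7)), (fun h => a_p6_13 (h ▸ a_p6_7))⟩,
    ⟨(fun h => a_p2_8 (h.symm ▸ a_p2_9)), (fun h => a_p2_8 (h.symm ▸ a_p2_10)), (fun h => a_pq_8 (h.symm ▸ a_pq_11)), (fun h => a_p35_12 (h ▸ a_p35_8)), (fun h => a_p6_13 (h ▸ a_p6_8))⟩,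
    ⟨(fun h => a_pq_10 (h ▸ a_pq_9)), (fun h => a_p2_11 (h ▸ a_p2_9)), (fun h => a_p2_12 (h ▸ a_p2_9)), (fun h => a_p6_13 (h ▸ a_p6_9))⟩,
    ⟨(fun h => a_p2_11 (h ▸ a_p2_10)), (fun h => a_p2_12 (h ▸ a_p2_10)), (fun h => a_p6_13 (h ▸ a_p6_10))⟩,
    ⟨(fun h => a_pq_12 (h ▸ a_pq_11)), (fun h => a_p6_13 (h ▸ a_p6_11))⟩,
    (fun h => a_p6_13 (h ▸ a_p6_12))⟩
end

section
/- Let X be a topological space and E ⊆ X. The smallest family of subsets of X containing E and closed under topological closure, interior, binary intersection, and binary union has at most 35 elements. -/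
/-!
Write `k` for closure and `i` for interior. By Kuratowski, `k` and `i` generate from `E` only
`iE ⊆ ikiE ⊆ ikE, kiE ⊆ kikE ⊆ kE`, with `iE ⊆ E ⊆ kE`. Together with `ikE ∩ kiE` and
`ikE ∪ kiE` these form an eight-element lattice `L` of sets, and every set of the family has
the normal form `x ∪ (E ∩ y)` with `x ⊆ y` in `L`. Normal forms are closed under `∩` and `∪`
by distributivity. Their closures `kx ∪ k(E ∩ y)` and interiors `i(x ∪ E) ∩ iy` (modularity)
lie in `L` again, because every element of `L` is squeezed between a set and its closure
(or interior) in one of a few bands; the only non-formal inputs are `k(E ∩ ikE) = kikE` and,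
dually, `i(E ∪ kiE) = ikiE`. Finally `L` has exactly 35 comparable pairs.
-/

/-- The family of subsets of a topological space `X` generated from `E` by successive
applications of topological closure, interior, binary intersection, and binary union:
`kiwvGen E` is the smallest collection of subsets of `X` containing `E` and closed under
these operations. -/
inductive kiwvGen {X : Type*} [TopologicalSpace X] (E : Set X) : Set X → Prop
  | base : kiwvGen E E
  | closure {A : Set X} : kiwvGen E A → kiwvGen E (closure A)
  | interior {A : Set X} : kiwvGen E A → kiwvGen E (interior A)
  | inter {A B : Set X} : kiwvGen E A → kiwvGen E B → kiwvGen E (A ∩ B)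
  | union {A B : Set X} : kiwvGen E A → kiwvGen E B → kiwvGen E (A ∪ B)

namespace Kuratowski

open Set

theorem union_inter_inter_union_inter {α : Type*} {A₁ A₂ B₁ B₂ : Set α} (E : Set α)
    (h₁ : A₁ ⊆ B₁) (h₂ : A₂ ⊆ B₂) :
    (A₁ ∪ E ∩ B₁) ∩ (A₂ ∪ E ∩ B₂) = A₁ ∩ A₂ ∪ E ∩ (B₁ ∩ B₂) := by
  ext x
  have := @h₁ x
  have := @h₂ x
  simp only [mem_inter_iff, mem_union]
  tauto

variable {X : Type*} [TopologicalSpace X]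

theorem closure_eq_closure_of_subset_of_subset_closure {A B : Set X} (hAB : A ⊆ B)
    (hB : B ⊆ closure A) : closure B = closure A :=
  (closure_minimal hB isClosed_closure).antisymm (closure_mono hAB)

theorem interior_eq_interior_of_interior_subset_of_subset {A B : Set X} (hA : interior A ⊆ B)
    (hB : B ⊆ A) : interior B = interior A :=
  (interior_mono hB).antisymm (interior_maximal hA isOpen_interior)

theorem closure_inter_interior_closure (A : Set X) :
    closure (A ∩ interior (closure A)) = closure (interior (closure A)) := by
  refine (closure_mono inter_subset_right).antisymm (closure_minimal ?_ isClosed_closure)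
  intro x hx
  simpa only [inter_comm] using isOpen_interior.inter_closure ⟨hx, interior_subset hx⟩

theorem interior_union_closure_interior (A : Set X) :
    interior (A ∪ closure (interior A)) = interior (closure (interior A)) := by
  have h := closure_inter_interior_closure Aᶜ
  rw [closure_compl, interior_compl, ← compl_union, closure_compl, closure_compl] at h
  exact compl_injective h

-- `L` is encoded as `chainKI E i ∩ chainIK E j` for `(i, j) ∈ latticeIndex`: intersecting two
-- chains turns `∩` into the componentwise `min` of indices.
def chainKI (E : Set X) : Fin 6 → Set X :=
  ![interior E, interior (closure (interior E)), closure (interior E),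
    interior (closure E) ∪ closure (interior E), closure (interior (closure E)), closure E]

def chainIK (E : Set X) : Fin 6 → Set X :=
  ![interior E, interior (closure (interior E)), interior (closure E),
    interior (closure E) ∪ closure (interior E), closure (interior (closure E)), closure E]

theorem monotone_chainKI (E : Set X) : Monotone (chainKI E) := by
  simp only [chainKI, monotone_vecCons, Matrix.cons_val_zero]
  exact ⟨isOpen_interior.subset_interior_closure, interior_subset, subset_union_right,
    union_subset subset_closure (closure_mono (interior_mono subset_closure)),
    isClosed_closure.closure_interior_subset, monotone_vecEmpty⟩

theorem monotone_chainIK (E : Set X) : Monotone (chainIK E) := by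
  simp only [chainIK, monotone_vecCons, Matrix.cons_val_zero]
  exact ⟨isOpen_interior.subset_interior_closure, interior_mono (closure_mono interior_subset),
    subset_union_left, union_subset subset_closure (closure_mono (interior_mono subset_closure)),
    isClosed_closure.closure_interior_subset, monotone_vecEmpty⟩

def latticeSet (E : Set X) (p : Fin 6 × Fin 6) : Set X :=
  chainKI E p.1 ∩ chainIK E p.2

theorem monotone_latticeSet (E : Set X) : Monotone (latticeSet E) := fun _ _ h =>
  inter_subset_inter (monotone_chainKI E h.1) (monotone_chainIK E h.2)

theorem latticeSet_inf (E : Set X) (p q : Fin 6 × Fin 6) :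
    latticeSet E (p ⊓ q) = latticeSet E p ∩ latticeSet E q := by
  simp only [latticeSet, Prod.fst_inf, Prod.snd_inf, (monotone_chainKI E).map_inf,
    (monotone_chainIK E).map_inf, inf_eq_inter]
  exact inter_inter_inter_comm _ _ _ _

def latticeIndex : Finset (Fin 6 × Fin 6) :=
  {(0, 0), (1, 1), (2, 2), (3, 2), (2, 3), (3, 3), (4, 4), (5, 5)}

theorem inf_mem_latticeIndex : ∀ p ∈ latticeIndex, ∀ q ∈ latticeIndex, p ⊓ q ∈ latticeIndex := by
  decide

theorem sup_mem_latticeIndex : ∀ p ∈ latticeIndex, ∀ q ∈ latticeIndex, p ⊔ q ∈ latticeIndex := by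
  decide

theorem le_total_or_eq_of_mem_latticeIndex : ∀ p ∈ latticeIndex, ∀ q ∈ latticeIndex,
    p ≤ q ∨ q ≤ p ∨ (p = (3, 2) ∧ q = (2, 3)) ∨ (p = (2, 3) ∧ q = (3, 2)) := by
  decide

theorem closure_cases_of_mem_latticeIndex : ∀ p ∈ latticeIndex,
    p ≤ (2, 3) ∨ ((3, 2) ≤ p ∧ p ≤ (4, 4)) ∨ p = (5, 5) := by
  decide

theorem interior_cases_of_mem_latticeIndex : ∀ p ∈ latticeIndex,
    p = (0, 0) ∨ ((1, 1) ≤ p ∧ p ≤ (2, 3)) ∨ (3, 2) ≤ p := by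
  decide

theorem latticeSet_eq_interior (E : Set X) : latticeSet E (0, 0) = interior E := inter_self _

theorem latticeSet_eq_interior_closure_interior (E : Set X) :
    latticeSet E (1, 1) = interior (closure (interior E)) := inter_self _

theorem latticeSet_eq_closure_interior (E : Set X) : latticeSet E (2, 3) = closure (interior E) :=
  inter_eq_left.2 subset_union_right

theorem latticeSet_eq_interior_closure (E : Set X) : latticeSet E (3, 2) = interior (closure E) :=
  inter_eq_right.2 subset_union_left

theorem latticeSet_eq_union (E : Set X) :
    latticeSet E (3, 3) = interior (closure E) ∪ closure (interior E) :=
  inter_self _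

theorem latticeSet_eq_closure_interior_closure (E : Set X) :
    latticeSet E (4, 4) = closure (interior (closure E)) := inter_self _

theorem latticeSet_eq_closure (E : Set X) : latticeSet E (5, 5) = closure E := inter_self _

theorem interior_subset_latticeSet {E : Set X} (p : Fin 6 × Fin 6) : interior E ⊆ latticeSet E p :=
  latticeSet_eq_interior E ▸ monotone_latticeSet E (Prod.mk_le_mk.2 ⟨Fin.zero_le _, Fin.zero_le _⟩)

theorem latticeSet_subset_closure {E : Set X} (p : Fin 6 × Fin 6) : latticeSet E p ⊆ closure E :=
  latticeSet_eq_closure E ▸ monotone_latticeSet E (Prod.mk_le_mk.2 ⟨Fin.le_last _, Fin.le_last _⟩)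

theorem latticeSet_sup {E : Set X} {p q : Fin 6 × Fin 6} (hp : p ∈ latticeIndex)
    (hq : q ∈ latticeIndex) :
    latticeSet E (p ⊔ q) = latticeSet E p ∪ latticeSet E q := by
  rcases le_total_or_eq_of_mem_latticeIndex p hp q hq with h | h | ⟨rfl, rfl⟩ | ⟨rfl, rfl⟩
  · rw [sup_of_le_right h, union_eq_right.2 (monotone_latticeSet E h)]
  · rw [sup_of_le_left h, union_eq_left.2 (monotone_latticeSet E h)]
  · rw [latticeSet_eq_interior_closure, latticeSet_eq_closure_interior]
    exact latticeSet_eq_union E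
  · rw [latticeSet_eq_interior_closure, latticeSet_eq_closure_interior, union_comm]
    exact latticeSet_eq_union E

theorem closure_latticeSet_mem (E : Set X) {p : Fin 6 × Fin 6} (hp : p ∈ latticeIndex) :
    closure (latticeSet E p) ∈ latticeSet E '' latticeIndex := by
  rcases closure_cases_of_mem_latticeIndex p hp with h | ⟨h₁, h₂⟩ | rfl
  · refine ⟨(2, 3), by decide, Eq.symm ?_⟩
    rw [latticeSet_eq_closure_interior]
    refine closure_eq_closure_of_subset_of_subset_closure (interior_subset_latticeSet p) ?_
    exact latticeSet_eq_closure_interior E ▸ monotone_latticeSet E h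
  · refine ⟨(4, 4), by decide, Eq.symm ?_⟩
    rw [latticeSet_eq_closure_interior_closure]
    refine closure_eq_closure_of_subset_of_subset_closure ?_ ?_
    · exact latticeSet_eq_interior_closure E ▸ monotone_latticeSet E h₁
    · exact latticeSet_eq_closure_interior_closure E ▸ monotone_latticeSet E h₂
  · exact ⟨(5, 5), by decide, by rw [latticeSet_eq_closure, closure_closure]⟩

theorem closure_inter_latticeSet_mem (E : Set X) {p : Fin 6 × Fin 6} (hp : p ∈ latticeIndex) :
    closure (E ∩ latticeSet E p) ∈ latticeSet E '' latticeIndex := by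
  rcases closure_cases_of_mem_latticeIndex p hp with h | ⟨h₁, h₂⟩ | rfl
  · refine ⟨(2, 3), by decide, Eq.symm ?_⟩
    rw [latticeSet_eq_closure_interior]
    refine closure_eq_closure_of_subset_of_subset_closure
      (subset_inter interior_subset (interior_subset_latticeSet p)) ?_
    exact inter_subset_right.trans
      (latticeSet_eq_closure_interior E ▸ monotone_latticeSet E h)
  · refine ⟨(4, 4), by decide, Eq.symm ?_⟩
    rw [latticeSet_eq_closure_interior_closure, ← closure_inter_interior_closure]
    refine closure_eq_closure_of_subset_of_subset_closure ?_ ?_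
    · exact inter_subset_inter_right E
        (latticeSet_eq_interior_closure E ▸ monotone_latticeSet E h₁)
    · rw [closure_inter_interior_closure]
      exact inter_subset_right.trans
        (latticeSet_eq_closure_interior_closure E ▸ monotone_latticeSet E h₂)
  · exact ⟨(5, 5), by decide, by rw [latticeSet_eq_closure, inter_eq_left.2 subset_closure]⟩

theorem interior_latticeSet_mem (E : Set X) {p : Fin 6 × Fin 6} (hp : p ∈ latticeIndex) :
    interior (latticeSet E p) ∈ latticeSet E '' latticeIndex := by
  rcases interior_cases_of_mem_latticeIndex p hp with rfl | ⟨h₁, h₂⟩ | h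
  · exact ⟨(0, 0), by decide, by rw [latticeSet_eq_interior, interior_interior]⟩
  · refine ⟨(1, 1), by decide, Eq.symm ?_⟩
    rw [latticeSet_eq_interior_closure_interior]
    refine interior_eq_interior_of_interior_subset_of_subset ?_ ?_
    · exact latticeSet_eq_interior_closure_interior E ▸ monotone_latticeSet E h₁
    · exact latticeSet_eq_closure_interior E ▸ monotone_latticeSet E h₂
  · refine ⟨(3, 2), by decide, Eq.symm ?_⟩
    rw [latticeSet_eq_interior_closure]
    refine interior_eq_interior_of_interior_subset_of_subset ?_ ?_
    · exact latticeSet_eq_interior_closure E ▸ monotone_latticeSet E h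
    · exact latticeSet_subset_closure p

theorem interior_union_latticeSet_mem (E : Set X) {p : Fin 6 × Fin 6} (hp : p ∈ latticeIndex) :
    interior (latticeSet E p ∪ E) ∈ latticeSet E '' latticeIndex := by
  rcases interior_cases_of_mem_latticeIndex p hp with rfl | ⟨h₁, h₂⟩ | h
  · exact ⟨(0, 0), by decide, by rw [latticeSet_eq_interior, union_eq_right.2 interior_subset]⟩
  · refine ⟨(1, 1), by decide, Eq.symm ?_⟩
    rw [latticeSet_eq_interior_closure_interior, ← interior_union_closure_interior]
    refine interior_eq_interior_of_interior_subset_of_subset ?_ ?_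
    · rw [interior_union_closure_interior]
      exact subset_union_of_subset_left
        (latticeSet_eq_interior_closure_interior E ▸ monotone_latticeSet E h₁) E
    · rw [union_comm E]
      exact union_subset_union_left E
        (latticeSet_eq_closure_interior E ▸ monotone_latticeSet E h₂)
  · refine ⟨(3, 2), by decide, Eq.symm ?_⟩
    rw [latticeSet_eq_interior_closure]
    refine interior_eq_interior_of_interior_subset_of_subset ?_ ?_
    · exact subset_union_of_subset_left
        (latticeSet_eq_interior_closure E ▸ monotone_latticeSet E h) E
    · exact union_subset (latticeSet_subset_closure p) subset_closure

def latticePairs : Finset ((Fin 6 × Fin 6) × (Fin 6 × Fin 6)) :=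
  (latticeIndex ×ˢ latticeIndex).filter fun pq => pq.1 ≤ pq.2

theorem card_latticePairs : latticePairs.card = 35 := by
  decide

def normalForms (E : Set X) : Set (Set X) :=
  (fun pq : (Fin 6 × Fin 6) × (Fin 6 × Fin 6) => latticeSet E pq.1 ∪ E ∩ latticeSet E pq.2) ''
    latticePairs

theorem mem_normalForms {E A : Set X} : A ∈ normalForms E ↔ ∃ p ∈ latticeIndex, ∃ q ∈ latticeIndex,
    p ≤ q ∧ latticeSet E p ∪ E ∩ latticeSet E q = A := by
  simp [normalForms, latticePairs, and_assoc]

theorem latticeSet_mem_normalForms {E : Set X} {r : Fin 6 × Fin 6} (hr : r ∈ latticeIndex) :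
    latticeSet E r ∈ normalForms E :=
  mem_normalForms.2 ⟨r, hr, r, hr, le_rfl, union_eq_left.2 inter_subset_right⟩

theorem self_mem_normalForms (E : Set X) : E ∈ normalForms E := by
  refine mem_normalForms.2 ⟨(0, 0), by decide, (5, 5), by decide, by decide, ?_⟩
  rw [latticeSet_eq_interior, latticeSet_eq_closure, inter_eq_left.2 subset_closure,
    union_eq_right.2 interior_subset]

theorem closure_mem_normalForms {E A : Set X} (hA : A ∈ normalForms E) :
    closure A ∈ normalForms E := by
  obtain ⟨p, hp, q, hq, -, rfl⟩ := mem_normalForms.1 hA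
  obtain ⟨r, hr, hr_eq⟩ := closure_latticeSet_mem E hp
  obtain ⟨s, hs, hs_eq⟩ := closure_inter_latticeSet_mem E hq
  rw [closure_union, ← hr_eq, ← hs_eq, ← latticeSet_sup hr hs]
  exact latticeSet_mem_normalForms (sup_mem_latticeIndex r hr s hs)

theorem interior_mem_normalForms {E A : Set X} (hA : A ∈ normalForms E) :
    interior A ∈ normalForms E := by
  obtain ⟨p, hp, q, hq, hpq, rfl⟩ := mem_normalForms.1 hA
  obtain ⟨r, hr, hr_eq⟩ := interior_union_latticeSet_mem E hp
  obtain ⟨s, hs, hs_eq⟩ := interior_latticeSet_mem E hq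
  have h_modular : latticeSet E p ∪ E ∩ latticeSet E q = (latticeSet E p ∪ E) ∩ latticeSet E q :=
    (sup_inf_assoc_of_le E (monotone_latticeSet E hpq)).symm
  rw [h_modular, interior_inter, ← hr_eq, ← hs_eq, ← latticeSet_inf]
  exact latticeSet_mem_normalForms (inf_mem_latticeIndex r hr s hs)

theorem inter_mem_normalForms {E A B : Set X} (hA : A ∈ normalForms E) (hB : B ∈ normalForms E) :
    A ∩ B ∈ normalForms E := by
  obtain ⟨p₁, hp₁, q₁, hq₁, h₁, rfl⟩ := mem_normalForms.1 hA
  obtain ⟨p₂, hp₂, q₂, hq₂, h₂, rfl⟩ := mem_normalForms.1 hB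
  refine mem_normalForms.2 ⟨p₁ ⊓ p₂, inf_mem_latticeIndex p₁ hp₁ p₂ hp₂, q₁ ⊓ q₂,
    inf_mem_latticeIndex q₁ hq₁ q₂ hq₂, inf_le_inf h₁ h₂, ?_⟩
  rw [latticeSet_inf, latticeSet_inf,
    union_inter_inter_union_inter E (monotone_latticeSet E h₁) (monotone_latticeSet E h₂)]

theorem union_mem_normalForms {E A B : Set X} (hA : A ∈ normalForms E) (hB : B ∈ normalForms E) :
    A ∪ B ∈ normalForms E := by
  obtain ⟨p₁, hp₁, q₁, hq₁, h₁, rfl⟩ := mem_normalForms.1 hA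
  obtain ⟨p₂, hp₂, q₂, hq₂, h₂, rfl⟩ := mem_normalForms.1 hB
  refine mem_normalForms.2 ⟨p₁ ⊔ p₂, sup_mem_latticeIndex p₁ hp₁ p₂ hp₂, q₁ ⊔ q₂,
    sup_mem_latticeIndex q₁ hq₁ q₂ hq₂, sup_le_sup h₁ h₂, ?_⟩
  rw [latticeSet_sup hp₁ hp₂, latticeSet_sup hq₁ hq₂, inter_union_distrib_left,
    union_union_union_comm]

theorem _root_.kiwvGen.mem_normalForms {E A : Set X} (hA : kiwvGen E A) : A ∈ normalForms E := by
  induction hA with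
  | base => exact self_mem_normalForms E
  | closure _ ih => exact closure_mem_normalForms ih
  | interior _ ih => exact interior_mem_normalForms ih
  | inter _ _ ihA ihB => exact inter_mem_normalForms ihA ihB
  | union _ _ ihA ihB => exact union_mem_normalForms ihA ihB

theorem encard_normalForms_le (E : Set X) : (normalForms E).encard ≤ 35 := by
  refine (encard_image_le _ _).trans ?_
  rw [encard_coe_eq_coe_finsetCard, card_latticePairs]
  rfl

end Kuratowski

/-- The smallest family of subsets of `X` containing `E` and closed under closure, interior,
binary intersection, and binary union has at most 35 elements. -/
theorem kuratowski_thirtyfive {X : Type*} [TopologicalSpace X] (E : Set X) :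
    {A : Set X | kiwvGen E A}.encard ≤ 35 :=
  (Set.encard_mono fun _ hA => kiwvGen.mem_normalForms hA).trans
    (Kuratowski.encard_normalForms_le E)
end

section
/- Let T ⊆ ℝ (with the standard topology) be the set T = {1/n : n ∈ ℕ, n ≥ 1} ∪ ([2,4] \ {3 + 1/n : n ∈ ℕ, n ≥ 1}) ∪ ((5,7] ∩ (ℚ ∪ ⋃_{n ≥ 1} (6 + 1/(2nπ), 6 + 1/((2n−1)π)])). Then the smallest family of subsets of ℝ containing T and closed under topological closure, interior, binary intersection, and binary union has exactly 35 elements. -/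
/-- The family of subsets of `ℝ` generated from `T` by successive applications of topological
closure, interior, binary intersection, and binary union: the smallest collection of subsets
of `ℝ` containing `T` and closed under these operations. -/
inductive kiwvGenT : Set ℝ → Prop
  | base : kiwvGenT kuratowskiT
  | closure {A : Set ℝ} : kiwvGenT A → kiwvGenT (closure A)
  | interior {A : Set ℝ} : kiwvGenT A → kiwvGenT (interior A)
  | inter {A B : Set ℝ} : kiwvGenT A → kiwvGenT B → kiwvGenT (A ∩ B)
  | union {A B : Set ℝ} : kiwvGenT A → kiwvGenT B → kiwvGenT (A ∪ B)


open Set Filter Topology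

namespace KW

noncomputable def sA (n : ℕ) : ℝ := 6 + 1 / (2 * (n : ℝ) * Real.pi)
noncomputable def sB (n : ℕ) : ℝ := 6 + 1 / ((2 * (n : ℝ) - 1) * Real.pi)

lemma npos {n : ℕ} (hn : 1 ≤ n) : (1:ℝ) ≤ (n:ℝ) := by exact_mod_cast hn

lemma denA_pos {n : ℕ} (hn : 1 ≤ n) : 0 < 2 * (n : ℝ) * Real.pi := by
  have := npos hn; have := Real.pi_pos; nlinarith

lemma denB_pos {n : ℕ} (hn : 1 ≤ n) : 0 < (2 * (n : ℝ) - 1) * Real.pi := by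
  have := npos hn; have := Real.pi_pos; nlinarith

lemma sA_lt_sB {n : ℕ} (hn : 1 ≤ n) : sA n < sB n := by
  unfold sA sB
  have h1 := denB_pos hn
  have h2 : (2 * (n : ℝ) - 1) * Real.pi < 2 * (n : ℝ) * Real.pi := by
    have := Real.pi_pos; nlinarith
  have := one_div_lt_one_div_of_lt h1 h2
  linarith

lemma sB_succ_lt_sA {n : ℕ} (hn : 1 ≤ n) : sB (n + 1) < sA n := by
  unfold sA sB
  have h1 := denA_pos hn
  have h2 : 2 * (n : ℝ) * Real.pi < (2 * ((n+1:ℕ) : ℝ) - 1) * Real.pi := by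
    have := Real.pi_pos; push_cast; nlinarith
  have h3 := one_div_lt_one_div_of_lt h1 h2
  linarith

lemma sA_anti {m n : ℕ} (hm : 1 ≤ m) (hmn : m ≤ n) : sA n ≤ sA m := by
  unfold sA
  have h1 := denA_pos hm
  have hc : (m:ℝ) ≤ (n:ℝ) := by exact_mod_cast hmn
  have h2 : 2 * (m : ℝ) * Real.pi ≤ 2 * (n : ℝ) * Real.pi := by
    have := Real.pi_pos; nlinarith
  have := one_div_le_one_div_of_le h1 h2
  linarith

lemma sB_anti {m n : ℕ} (hm : 1 ≤ m) (hmn : m ≤ n) : sB n ≤ sB m := by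
  unfold sB
  have h1 := denB_pos hm
  have hc : (m:ℝ) ≤ (n:ℝ) := by exact_mod_cast hmn
  have h2 : (2 * (m : ℝ) - 1) * Real.pi ≤ (2 * (n : ℝ) - 1) * Real.pi := by
    have := Real.pi_pos; nlinarith
  have := one_div_le_one_div_of_le h1 h2
  linarith

lemma six_lt_sA {n : ℕ} (hn : 1 ≤ n) : 6 < sA n := by
  unfold sA; have := one_div_pos.2 (denA_pos hn); linarith

lemma six_lt_sB {n : ℕ} (hn : 1 ≤ n) : 6 < sB n := by
  unfold sB; have := one_div_pos.2 (denB_pos hn); linarith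

lemma sB_le_sB1 {n : ℕ} (hn : 1 ≤ n) : sB n ≤ sB 1 := sB_anti le_rfl hn

lemma sB1_lt_7 : sB 1 < 7 := by
  unfold sB
  have hpi : 1 < Real.pi := by have := Real.pi_gt_three; linarith
  have h : (2 * ((1:ℕ):ℝ) - 1) * Real.pi = Real.pi := by push_cast; ring
  rw [h]
  have : 1 / Real.pi < 1 := by
    rw [div_lt_one (by linarith)]; exact hpi
  linarith

lemma sB_lt_7 {n : ℕ} (hn : 1 ≤ n) : sB n < 7 := lt_of_le_of_lt (sB_le_sB1 hn) sB1_lt_7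
lemma sA_lt_7 {n : ℕ} (hn : 1 ≤ n) : sA n < 7 := lt_trans (sA_lt_sB hn) (sB_lt_7 hn)

noncomputable def V : Set ℝ := ⋃ n : ℕ, ⋃ _ : 1 ≤ n, Set.Ioo (sA n) (sB n)
noncomputable def AA : Set ℝ := ⋃ n : ℕ, ⋃ _ : 1 ≤ n, {sA n}
noncomputable def BB : Set ℝ := ⋃ n : ℕ, ⋃ _ : 1 ≤ n, {sB n}
noncomputable def KK : Set ℝ := insert 6 (⋃ n : ℕ, ⋃ _ : 1 ≤ n, Set.Icc (sA n) (sB n))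
noncomputable def Gap : Set ℝ := ⋃ n : ℕ, ⋃ _ : 1 ≤ n, Set.Ioo (sB (n + 1)) (sA n)
noncomputable def OO : Set ℝ := Set.Ioo 5 7 \ KK
def Qs : Set ℝ := Set.range ((↑) : ℚ → ℝ)

lemma mem_V {x : ℝ} : x ∈ V ↔ ∃ n, 1 ≤ n ∧ x ∈ Set.Ioo (sA n) (sB n) := by
  simp [V]; tauto
lemma mem_AA {x : ℝ} : x ∈ AA ↔ ∃ n, 1 ≤ n ∧ x = sA n := by simp [AA, eq_comm]
lemma mem_BB {x : ℝ} : x ∈ BB ↔ ∃ n, 1 ≤ n ∧ x = sB n := by simp [BB, eq_comm]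
lemma mem_KK {x : ℝ} : x ∈ KK ↔ x = 6 ∨ ∃ n, 1 ≤ n ∧ x ∈ Set.Icc (sA n) (sB n) := by
  simp [KK]; tauto
lemma mem_Gap {x : ℝ} : x ∈ Gap ↔ ∃ n, 1 ≤ n ∧ x ∈ Set.Ioo (sB (n + 1)) (sA n) := by
  simp [Gap]; tauto

lemma KK_subset_Icc : KK ⊆ Set.Icc 6 (sB 1) := by
  intro x hx
  rcases mem_KK.1 hx with rfl | ⟨n, hn, h1, h2⟩
  · exact ⟨le_refl 6, le_of_lt (six_lt_sB le_rfl)⟩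
  · exact ⟨le_trans (le_of_lt (six_lt_sA hn)) h1, le_trans h2 (sB_le_sB1 hn)⟩

lemma KK_subset_Ioo : KK ⊆ Set.Ioo 5 7 := by
  intro x hx
  rcases KK_subset_Icc hx with ⟨h1, h2⟩
  exact ⟨by linarith, lt_of_le_of_lt h2 sB1_lt_7⟩

lemma V_subset_KK : V ⊆ KK := by
  intro x hx
  rcases mem_V.1 hx with ⟨n, hn, h1, h2⟩
  exact mem_KK.2 (Or.inr ⟨n, hn, le_of_lt h1, le_of_lt h2⟩)

lemma AA_subset_KK : AA ⊆ KK := by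
  intro x hx
  rcases mem_AA.1 hx with ⟨n, hn, rfl⟩
  exact mem_KK.2 (Or.inr ⟨n, hn, le_refl _, le_of_lt (sA_lt_sB hn)⟩)

lemma BB_subset_KK : BB ⊆ KK := by
  intro x hx
  rcases mem_BB.1 hx with ⟨n, hn, rfl⟩
  exact mem_KK.2 (Or.inr ⟨n, hn, le_of_lt (sA_lt_sB hn), le_refl _⟩)

lemma Gap_disj_KK : ∀ x ∈ Gap, x ∉ KK := by
  intro x hx hk
  rcases mem_Gap.1 hx with ⟨n, hn, hx1, hx2⟩
  have h6 : 6 < x := lt_trans (six_lt_sB (by omega)) hx1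
  rcases mem_KK.1 hk with rfl | ⟨m, hm, h1, h2⟩
  · exact absurd h6 (lt_irrefl 6)
  · rcases le_or_gt m n with hmn | hmn
    · have : sA n ≤ sA m := sA_anti hm hmn
      linarith
    · have : sB m ≤ sB (n + 1) := sB_anti (by omega) hmn
      linarith

lemma KK_union_Gap : Set.Icc 6 (sB 1) ⊆ KK ∪ Gap := by
  intro x ⟨hx1, hx2⟩
  rcases eq_or_lt_of_le hx1 with rfl | hx1
  · exact Or.inl (mem_KK.2 (Or.inl rfl))
  · have hex : ∃ k, sB (k + 1) < x := by
      have htend : Tendsto (fun k : ℕ => sB (k + 1)) atTop (𝓝 6) := by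
        have h0 : Tendsto (fun k : ℕ => ((k:ℝ))) atTop atTop :=
          tendsto_natCast_atTop_atTop
        have h1 : Tendsto (fun k : ℕ => ((2 * ((k:ℝ)+1) - 1) * Real.pi)) atTop atTop := by
          apply Filter.Tendsto.atTop_mul_const Real.pi_pos
          have : (fun k : ℕ => 2 * ((k:ℝ)+1) - 1) = fun k : ℕ => 2 * (k:ℝ) + 1 := by
            funext k; ring
          rw [this]
          exact tendsto_atTop_add_const_right _ 1 (h0.const_mul_atTop (by norm_num))
        have h2 := h1.inv_tendsto_atTop
        have h3 : Tendsto (fun k : ℕ => sB (k + 1)) atTop (𝓝 (6 + 0)) := by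
          apply Tendsto.add tendsto_const_nhds
          have heq : (fun k : ℕ => 1 / ((2 * ((k+1:ℕ):ℝ) - 1) * Real.pi)) =
              (fun k : ℕ => ((2 * ((k:ℝ)+1) - 1) * Real.pi)⁻¹) := by
            funext k; push_cast; rw [one_div]
          show Tendsto (fun k : ℕ => 1 / ((2 * ((k+1:ℕ):ℝ) - 1) * Real.pi)) atTop (𝓝 0)
          rw [heq]; exact h2
        simpa using h3
      have := htend.eventually (gt_mem_nhds hx1)
      exact this.exists
    classical
    have hn0 := Nat.find_spec hex
    set k0 := Nat.find hex with hk0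
    have hk0pos : 1 ≤ k0 := by
      rcases Nat.eq_zero_or_pos k0 with h | h
      · exfalso
        have := hn0
        rw [h] at this
        exact absurd hx2 (not_le.2 this)
      · exact h
    have hnotlt : ¬ sB k0 < x := by
      have := Nat.find_min hex (m := k0 - 1) (by omega)
      intro hc
      apply this
      have : k0 - 1 + 1 = k0 := by omega
      rw [this]
      exact hc
    push_neg at hnotlt
    -- x ∈ (sB (k0+1), sB k0]
    rcases lt_trichotomy x (sA k0) with h | h | h
    · exact Or.inr (mem_Gap.2 ⟨k0, hk0pos, hn0, h⟩)
    · exact Or.inl (mem_KK.2 (Or.inr ⟨k0, hk0pos, le_of_eq h.symm, hnotlt⟩))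
    · exact Or.inl (mem_KK.2 (Or.inr ⟨k0, hk0pos, le_of_lt h, hnotlt⟩))

lemma isOpen_Gap : IsOpen Gap := by
  apply isOpen_iUnion; intro n; apply isOpen_iUnion; intro _; exact isOpen_Ioo

lemma isOpen_V : IsOpen V := by
  apply isOpen_iUnion; intro n; apply isOpen_iUnion; intro _; exact isOpen_Ioo

lemma KK_eq_diff : KK = Set.Icc 6 (sB 1) \ Gap := by
  apply Set.Subset.antisymm
  · intro x hx
    exact ⟨KK_subset_Icc hx, fun hg => Gap_disj_KK x hg hx⟩
  · intro x ⟨h1, h2⟩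
    rcases KK_union_Gap h1 with h | h
    · exact h
    · exact absurd h h2

lemma isClosed_KK : IsClosed KK := by
  rw [KK_eq_diff]
  exact IsClosed.sdiff isClosed_Icc isOpen_Gap

lemma tendsto_sB_succ : Tendsto (fun k : ℕ => sB (k + 1)) atTop (𝓝 6) := by
  have h0 : Tendsto (fun k : ℕ => ((k:ℝ))) atTop atTop := tendsto_natCast_atTop_atTop
  have h1 : Tendsto (fun k : ℕ => ((2 * ((k:ℝ)+1) - 1) * Real.pi)) atTop atTop := by
    apply Filter.Tendsto.atTop_mul_const Real.pi_pos
    have : (fun k : ℕ => 2 * ((k:ℝ)+1) - 1) = fun k : ℕ => 2 * (k:ℝ) + 1 := by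
      funext k; ring
    rw [this]
    exact tendsto_atTop_add_const_right _ 1 (h0.const_mul_atTop (by norm_num))
  have h2 := h1.inv_tendsto_atTop
  have h3 : Tendsto (fun k : ℕ => sB (k + 1)) atTop (𝓝 (6 + 0)) := by
    apply Tendsto.add tendsto_const_nhds
    have heq : (fun k : ℕ => 1 / ((2 * ((k+1:ℕ):ℝ) - 1) * Real.pi)) =
        (fun k : ℕ => ((2 * ((k:ℝ)+1) - 1) * Real.pi)⁻¹) := by
      funext k; push_cast; rw [one_div]
    show Tendsto (fun k : ℕ => 1 / ((2 * ((k+1:ℕ):ℝ) - 1) * Real.pi)) atTop (𝓝 0)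
    rw [heq]; exact h2
  simpa using h3

lemma tendsto_sA_succ : Tendsto (fun k : ℕ => sA (k + 1)) atTop (𝓝 6) := by
  have h0 : Tendsto (fun k : ℕ => ((k:ℝ))) atTop atTop := tendsto_natCast_atTop_atTop
  have h1 : Tendsto (fun k : ℕ => (2 * ((k:ℝ)+1) * Real.pi)) atTop atTop := by
    apply Filter.Tendsto.atTop_mul_const Real.pi_pos
    have : (fun k : ℕ => 2 * ((k:ℝ)+1)) = fun k : ℕ => 2 * (k:ℝ) + 2 := by
      funext k; ring
    rw [this]
    exact tendsto_atTop_add_const_right _ 2 (h0.const_mul_atTop (by norm_num))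
  have h2 := h1.inv_tendsto_atTop
  have h3 : Tendsto (fun k : ℕ => sA (k + 1)) atTop (𝓝 (6 + 0)) := by
    apply Tendsto.add tendsto_const_nhds
    have heq : (fun k : ℕ => 1 / (2 * ((k+1:ℕ):ℝ) * Real.pi)) =
        (fun k : ℕ => (2 * ((k:ℝ)+1) * Real.pi)⁻¹) := by
      funext k; push_cast; rw [one_div]
    show Tendsto (fun k : ℕ => 1 / (2 * ((k+1:ℕ):ℝ) * Real.pi)) atTop (𝓝 0)
    rw [heq]; exact h2
  simpa using h3

lemma AA_eq_range : AA = Set.range (fun k : ℕ => sA (k + 1)) := by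
  ext x
  rw [mem_AA]
  constructor
  · rintro ⟨n, hn, rfl⟩
    exact ⟨n - 1, by show sA (n - 1 + 1) = sA n; rw [show n - 1 + 1 = n from by omega]⟩
  · rintro ⟨k, rfl⟩
    exact ⟨k + 1, by omega, rfl⟩

lemma BB_eq_range : BB = Set.range (fun k : ℕ => sB (k + 1)) := by
  ext x
  rw [mem_BB]
  constructor
  · rintro ⟨n, hn, rfl⟩
    exact ⟨n - 1, by show sB (n - 1 + 1) = sB n; rw [show n - 1 + 1 = n from by omega]⟩
  · rintro ⟨k, rfl⟩
    exact ⟨k + 1, by omega, rfl⟩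

lemma closure_AA : closure AA = insert 6 AA := by
  apply Set.Subset.antisymm
  · apply closure_minimal (Set.subset_insert _ _)
    rw [AA_eq_range]
    exact tendsto_sA_succ.isCompact_insert_range.isClosed
  · rw [Set.insert_subset_iff]
    refine ⟨?_, subset_closure⟩
    apply mem_closure_of_tendsto tendsto_sA_succ
    filter_upwards with k
    exact mem_AA.2 ⟨k + 1, by omega, rfl⟩

lemma closure_BB : closure BB = insert 6 BB := by
  apply Set.Subset.antisymm
  · apply closure_minimal (Set.subset_insert _ _)
    rw [BB_eq_range]
    exact tendsto_sB_succ.isCompact_insert_range.isClosed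
  · rw [Set.insert_subset_iff]
    refine ⟨?_, subset_closure⟩
    apply mem_closure_of_tendsto tendsto_sB_succ
    filter_upwards with k
    exact mem_BB.2 ⟨k + 1, by omega, rfl⟩

lemma closure_V : closure V = KK := by
  apply Set.Subset.antisymm
  · exact closure_minimal V_subset_KK isClosed_KK
  · intro x hx
    rcases mem_KK.1 hx with rfl | ⟨n, hn, h1, h2⟩
    · have hmid : ∀ k : ℕ, (sA (k+1) + sB (k+1)) / 2 ∈ V := by
        intro k
        have h := sA_lt_sB (n := k+1) (by omega)
        exact mem_V.2 ⟨k+1, by omega, by constructor <;> [linarith; linarith]⟩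
      have htend : Tendsto (fun k : ℕ => (sA (k+1) + sB (k+1)) / 2) atTop (𝓝 6) := by
        have := (tendsto_sA_succ.add tendsto_sB_succ).div_const 2
        norm_num at this
        exact this
      exact mem_closure_of_tendsto htend (by filter_upwards with k using hmid k)
    · have : Set.Icc (sA n) (sB n) ⊆ closure V := by
        rw [← closure_Ioo (ne_of_lt (sA_lt_sB hn))]
        apply closure_mono
        intro y hy
        exact mem_V.2 ⟨n, hn, hy⟩
      exact this ⟨h1, h2⟩

lemma sA_notMem_V {n : ℕ} (hn : 1 ≤ n) : sA n ∉ V := by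
  intro hv
  rcases mem_V.1 hv with ⟨m, hm, h1, h2⟩
  rcases le_or_gt m n with hmn | hmn
  · have := sA_anti hm hmn; linarith
  · have := sB_anti (n := m) (m := n + 1) (by omega) hmn; have := sB_succ_lt_sA hn; linarith

lemma sB_notMem_V {n : ℕ} (hn : 1 ≤ n) : sB n ∉ V := by
  intro hv
  rcases mem_V.1 hv with ⟨m, hm, h1, h2⟩
  rcases le_or_gt n m with hmn | hmn
  · have := sB_anti hn hmn; linarith
  · have := sB_anti (n := n) (m := m + 1) (by omega) hmn; have := sB_succ_lt_sA hm; linarith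

lemma six_notMem_V : (6:ℝ) ∉ V := by
  intro hv
  rcases mem_V.1 hv with ⟨m, hm, h1, h2⟩
  have := six_lt_sA hm; linarith

lemma KK_partition : KK = ({6} : Set ℝ) ∪ V ∪ AA ∪ BB := by
  apply Set.Subset.antisymm
  · intro x hx
    rcases mem_KK.1 hx with rfl | ⟨n, hn, h1, h2⟩
    · exact Or.inl (Or.inl (Or.inl rfl))
    · rcases eq_or_lt_of_le h1 with rfl | h1'
      · exact Or.inl (Or.inr (mem_AA.2 ⟨n, hn, rfl⟩))
      · rcases eq_or_lt_of_le h2 with rfl | h2'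
        · exact Or.inr (mem_BB.2 ⟨n, hn, rfl⟩)
        · exact Or.inl (Or.inl (Or.inr (mem_V.2 ⟨n, hn, h1', h2'⟩)))
  · intro x hx
    rcases hx with ((rfl | hx) | hx) | hx
    · exact mem_KK.2 (Or.inl rfl)
    · exact V_subset_KK hx
    · exact AA_subset_KK hx
    · exact BB_subset_KK hx

lemma irrational_aux {k : ℤ} (hk : k ≠ 0) : Irrational (6 + 1 / ((k:ℝ) * Real.pi)) := by
  have h1 : Irrational ((k:ℝ) * Real.pi) := (irrational_intCast_mul_iff).2 ⟨hk, irrational_pi⟩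
  have h2 : Irrational (((k:ℝ) * Real.pi)⁻¹) := irrational_inv_iff.2 h1
  rw [one_div]
  have h3 : Irrational (((6:ℕ):ℝ) + ((k:ℝ) * Real.pi)⁻¹) := irrational_natCast_add_iff.2 h2
  simpa using h3

lemma irrational_sA {n : ℕ} (hn : 1 ≤ n) : Irrational (sA n) := by
  have h : sA n = 6 + 1 / (((2 * n : ℤ):ℝ) * Real.pi) := by
    unfold sA; push_cast; ring_nf
  rw [h]
  exact irrational_aux (by omega)

lemma irrational_sB {n : ℕ} (hn : 1 ≤ n) : Irrational (sB n) := by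
  have h : sB n = 6 + 1 / (((2 * (n:ℤ) - 1 : ℤ):ℝ) * Real.pi) := by
    unfold sB; push_cast; ring_nf
  rw [h]
  exact irrational_aux (by omega)

lemma AA_disj_BB : ∀ x ∈ AA, x ∉ BB := by
  intro x hx hb
  rcases mem_AA.1 hx with ⟨n, hn, rfl⟩
  rcases mem_BB.1 hb with ⟨m, hm, heq⟩
  unfold sA sB at heq
  have h1 : (2 * (n:ℝ) * Real.pi)⁻¹ = ((2 * (m:ℝ) - 1) * Real.pi)⁻¹ := by
    rw [← one_div, ← one_div]; linarith
  have h2 : 2 * (n:ℝ) * Real.pi = (2 * (m:ℝ) - 1) * Real.pi :=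
    inv_injective h1
  have h3 : 2 * (n:ℝ) = 2 * (m:ℝ) - 1 :=
    mul_right_cancel₀ (ne_of_gt Real.pi_pos) h2
  have h4 : ((2 * n : ℕ) : ℝ) + 1 = ((2 * m : ℕ) : ℝ) := by push_cast; linarith
  have h5 : 2 * n + 1 = 2 * m := by exact_mod_cast h4
  omega

noncomputable def c2 : Set ℝ := ⋃ n : ℕ, ⋃ _ : 2 ≤ n, {(1:ℝ)/(n:ℝ)}
noncomputable def c3 : Set ℝ := Set.Icc 0 1 \ ({0} ∪ {1} ∪ c2)
noncomputable def c6 : Set ℝ := ⋃ n : ℕ, ⋃ _ : 2 ≤ n, {3 + (1:ℝ)/(n:ℝ)}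
noncomputable def c8 : Set ℝ := Set.Icc 2 4 \ ({2} ∪ {3} ∪ {4} ∪ c6)

lemma mem_c2 {x : ℝ} : x ∈ c2 ↔ ∃ n : ℕ, 2 ≤ n ∧ x = 1/(n:ℝ) := by simp [c2, eq_comm, one_div]
lemma mem_c6 {x : ℝ} : x ∈ c6 ↔ ∃ n : ℕ, 2 ≤ n ∧ x = 3 + 1/(n:ℝ) := by simp [c6, eq_comm, one_div]

lemma c2_subset_Qs : c2 ⊆ Qs := by
  intro x hx
  rcases mem_c2.1 hx with ⟨n, hn, rfl⟩
  exact ⟨1/(n:ℚ), by push_cast; ring⟩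

lemma c6_subset_Qs : c6 ⊆ Qs := by
  intro x hx
  rcases mem_c6.1 hx with ⟨n, hn, rfl⟩
  exact ⟨3 + 1/(n:ℚ), by push_cast; ring⟩

lemma c2_subset_Ioo : c2 ⊆ Set.Ioo 0 1 := by
  intro x hx
  rcases mem_c2.1 hx with ⟨n, hn, rfl⟩
  have hn' : (1:ℝ) < (n:ℝ) := by exact_mod_cast (by omega : 1 < n)
  constructor
  · positivity
  · rw [div_lt_one (by linarith)]; exact hn'

lemma c6_subset_Ioo : c6 ⊆ Set.Ioo 3 4 := by
  intro x hx
  rcases mem_c6.1 hx with ⟨n, hn, rfl⟩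
  have hn' : (2:ℝ) ≤ (n:ℝ) := by exact_mod_cast hn
  have h1 : 0 < 1/(n:ℝ) := by positivity
  have h2 : 1/(n:ℝ) ≤ 1/2 := by
    apply one_div_le_one_div_of_le <;> linarith
  constructor <;> [linarith; linarith]

lemma c2_eq_range : c2 = Set.range (fun k : ℕ => (1:ℝ)/((k+2:ℕ):ℝ)) := by
  ext x
  rw [mem_c2]
  constructor
  · rintro ⟨n, hn, rfl⟩
    exact ⟨n - 2, by show (1:ℝ)/((n-2+2:ℕ):ℝ) = _; rw [show n - 2 + 2 = n from by omega]⟩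
  · rintro ⟨k, rfl⟩
    exact ⟨k + 2, by omega, rfl⟩

lemma c6_eq_range : c6 = Set.range (fun k : ℕ => 3 + (1:ℝ)/((k+2:ℕ):ℝ)) := by
  ext x
  rw [mem_c6]
  constructor
  · rintro ⟨n, hn, rfl⟩
    exact ⟨n - 2, by show 3 + (1:ℝ)/((n-2+2:ℕ):ℝ) = _; rw [show n - 2 + 2 = n from by omega]⟩
  · rintro ⟨k, rfl⟩
    exact ⟨k + 2, by omega, rfl⟩

lemma tendsto_c2 : Tendsto (fun k : ℕ => (1:ℝ)/((k+2:ℕ):ℝ)) atTop (𝓝 0) :=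
  tendsto_one_div_atTop_nhds_zero_nat.comp (tendsto_add_atTop_nat 2)

lemma tendsto_c6 : Tendsto (fun k : ℕ => 3 + (1:ℝ)/((k+2:ℕ):ℝ)) atTop (𝓝 3) := by
  have := Tendsto.add (tendsto_const_nhds (x := (3:ℝ)) (f := atTop (α := ℕ))) tendsto_c2
  simpa using this

lemma closure_c2 : closure c2 = insert 0 c2 := by
  apply Set.Subset.antisymm
  · apply closure_minimal (Set.subset_insert _ _)
    rw [c2_eq_range]
    exact tendsto_c2.isCompact_insert_range.isClosed
  · rw [Set.insert_subset_iff]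
    refine ⟨?_, subset_closure⟩
    apply mem_closure_of_tendsto tendsto_c2
    filter_upwards with k
    exact mem_c2.2 ⟨k + 2, by omega, rfl⟩

lemma closure_c6 : closure c6 = insert 3 c6 := by
  apply Set.Subset.antisymm
  · apply closure_minimal (Set.subset_insert _ _)
    rw [c6_eq_range]
    exact tendsto_c6.isCompact_insert_range.isClosed
  · rw [Set.insert_subset_iff]
    refine ⟨?_, subset_closure⟩
    apply mem_closure_of_tendsto tendsto_c6
    filter_upwards with k
    exact mem_c6.2 ⟨k + 2, by omega, rfl⟩

lemma closure_c3 : closure c3 = Set.Icc 0 1 := by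
  apply Set.Subset.antisymm
  · exact closure_minimal Set.diff_subset isClosed_Icc
  · have h1 : Set.Ioo (0:ℝ) 1 ⊆ closure (Set.Ioo 0 1 ∩ {x | Irrational x}) :=
      dense_irrational.open_subset_closure_inter isOpen_Ioo
    have h2 : Set.Ioo 0 1 ∩ {x | Irrational x} ⊆ c3 := by
      rintro x ⟨hx, hirr⟩
      refine ⟨Set.Ioo_subset_Icc_self hx, ?_⟩
      rintro ((h | h) | h)
      · exact hirr ⟨0, by simpa using h.symm⟩
      · exact hirr ⟨1, by simpa using h.symm⟩
      · exact hirr (c2_subset_Qs h)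
    calc Set.Icc (0:ℝ) 1 = closure (Set.Ioo (0:ℝ) 1) := (closure_Ioo (by norm_num)).symm
      _ ⊆ closure (closure (Set.Ioo 0 1 ∩ {x | Irrational x})) := closure_mono h1
      _ = closure (Set.Ioo 0 1 ∩ {x | Irrational x}) := closure_closure
      _ ⊆ closure c3 := closure_mono h2

lemma closure_c8 : closure c8 = Set.Icc 2 4 := by
  apply Set.Subset.antisymm
  · exact closure_minimal Set.diff_subset isClosed_Icc
  · have h1 : Set.Ioo (2:ℝ) 4 ⊆ closure (Set.Ioo 2 4 ∩ {x | Irrational x}) :=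
      dense_irrational.open_subset_closure_inter isOpen_Ioo
    have h2 : Set.Ioo 2 4 ∩ {x | Irrational x} ⊆ c8 := by
      rintro x ⟨hx, hirr⟩
      refine ⟨Set.Ioo_subset_Icc_self hx, ?_⟩
      rintro (((h | h) | h) | h)
      · exact hirr ⟨2, by simpa using h.symm⟩
      · exact hirr ⟨3, by simpa using h.symm⟩
      · exact hirr ⟨4, by simpa using h.symm⟩
      · exact hirr (c6_subset_Qs h)
    calc Set.Icc (2:ℝ) 4 = closure (Set.Ioo (2:ℝ) 4) := (closure_Ioo (by norm_num)).symm
      _ ⊆ closure (closure (Set.Ioo 2 4 ∩ {x | Irrational x})) := closure_mono h1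
      _ = closure (Set.Ioo 2 4 ∩ {x | Irrational x}) := closure_closure
      _ ⊆ closure c8 := closure_mono h2

lemma isOpen_OO : IsOpen OO := IsOpen.sdiff isOpen_Ioo isClosed_KK

lemma Ioo56_subset_OO : Set.Ioo (5:ℝ) 6 ⊆ OO := by
  rintro x ⟨h1, h2⟩
  refine ⟨⟨h1, by linarith⟩, fun hk => ?_⟩
  have := (KK_subset_Icc hk).1
  linarith

lemma IooB17_subset_OO : Set.Ioo (sB 1) 7 ⊆ OO := by
  rintro x ⟨h1, h2⟩
  have h6 := six_lt_sB (le_refl 1)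
  refine ⟨⟨by linarith, h2⟩, fun hk => ?_⟩
  have := (KK_subset_Icc hk).2
  linarith

lemma Gap_subset_OO : Gap ⊆ OO := by
  intro x hx
  rcases mem_Gap.1 hx with ⟨n, hn, h1, h2⟩
  have h6 : 6 < x := lt_trans (six_lt_sB (by omega)) h1
  have h7 : x < 7 := lt_trans h2 (sA_lt_7 hn)
  exact ⟨⟨by linarith, h7⟩, fun hk => Gap_disj_KK x hx hk⟩

lemma closure_OO : closure OO = Set.Icc 5 7 \ V := by
  apply Set.Subset.antisymm
  · apply closure_minimal
    · rintro x ⟨hIoo, hKK⟩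
      exact ⟨Set.Ioo_subset_Icc_self hIoo, fun hv => hKK (V_subset_KK hv)⟩
    · exact IsClosed.sdiff isClosed_Icc isOpen_V
  · rintro x ⟨⟨hx5, hx7⟩, hxv⟩
    by_cases hk : x ∈ KK
    · rw [KK_partition] at hk
      rcases hk with ((h6 | hv) | ha) | hb
      · -- x = 6
        rcases h6 with rfl
        have : (6:ℝ) ∈ closure (Set.Ioo (5:ℝ) 6) := by
          rw [closure_Ioo (by norm_num)]; exact ⟨by norm_num, le_refl _⟩
        exact closure_mono Ioo56_subset_OO this
      · exact absurd hv hxv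
      · rcases mem_AA.1 ha with ⟨n, hn, rfl⟩
        have hlt := sB_succ_lt_sA hn
        have : sA n ∈ closure (Set.Ioo (sB (n+1)) (sA n)) := by
          rw [closure_Ioo (ne_of_lt hlt)]; exact ⟨le_of_lt hlt, le_refl _⟩
        refine closure_mono (fun y hy => Gap_subset_OO (mem_Gap.2 ⟨n, hn, hy⟩)) this
      · rcases mem_BB.1 hb with ⟨n, hn, rfl⟩
        rcases eq_or_lt_of_le hn with h1 | h1
        · -- n = 1
          rcases h1 with rfl
          have hlt := sB1_lt_7
          have : sB 1 ∈ closure (Set.Ioo (sB 1) 7) := by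
            rw [closure_Ioo (ne_of_lt hlt)]; exact ⟨le_refl _, le_of_lt hlt⟩
          exact closure_mono IooB17_subset_OO this
        · -- n ≥ 2
          have hm : 1 ≤ n - 1 := by omega
          have hne : n - 1 + 1 = n := by omega
          have hlt : sB n < sA (n-1) := by
            have := sB_succ_lt_sA hm; rwa [hne] at this
          have hmem : sB n ∈ closure (Set.Ioo (sB ((n-1)+1)) (sA (n-1))) := by
            rw [hne, closure_Ioo (ne_of_lt hlt)]
            exact ⟨le_refl _, le_of_lt hlt⟩
          refine closure_mono (fun y hy => Gap_subset_OO (mem_Gap.2 ⟨n-1, hm, hy⟩)) hmem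
    · -- x ∉ KK
      rcases eq_or_lt_of_le hx5 with h5 | h5
      · rcases h5 with rfl
        have : (5:ℝ) ∈ closure (Set.Ioo (5:ℝ) 6) := by
          rw [closure_Ioo (by norm_num)]; exact ⟨le_refl _, by norm_num⟩
        exact closure_mono Ioo56_subset_OO this
      · rcases eq_or_lt_of_le hx7 with h7 | h7
        · rcases h7 with rfl
          have : (7:ℝ) ∈ closure (Set.Ioo (sB 1) 7) := by
            rw [closure_Ioo (ne_of_lt sB1_lt_7)]
            exact ⟨le_of_lt sB1_lt_7, le_refl _⟩
          exact closure_mono IooB17_subset_OO this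
        · exact subset_closure ⟨⟨h5, h7⟩, hk⟩

lemma dense_Qs : Dense Qs := Rat.denseRange_cast

lemma irr_eq_compl : {x : ℝ | Irrational x} = Qsᶜ := rfl

lemma closure_c14 : closure (V ∩ Qs) = KK := by
  apply Set.Subset.antisymm
  · exact closure_minimal (Set.inter_subset_left.trans V_subset_KK) isClosed_KK
  · have h1 : V ⊆ closure ((V ∩ Qs)) := dense_Qs.open_subset_closure_inter isOpen_V
    calc KK = closure V := closure_V.symm
      _ ⊆ closure (closure ((V ∩ Qs))) := closure_mono h1
      _ = closure ((V ∩ Qs)) := closure_closure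

lemma closure_c15 : closure ((V \ Qs)) = KK := by
  apply Set.Subset.antisymm
  · exact closure_minimal (Set.diff_subset.trans V_subset_KK) isClosed_KK
  · have h1 : V ⊆ closure (V ∩ {x : ℝ | Irrational x}) :=
      dense_irrational.open_subset_closure_inter isOpen_V
    have h2 : V ∩ {x : ℝ | Irrational x} = (V \ Qs) := rfl
    rw [h2] at h1
    calc KK = closure V := closure_V.symm
      _ ⊆ closure (closure ((V \ Qs))) := closure_mono h1
      _ = closure ((V \ Qs)) := closure_closure

lemma closure_c12 : closure ((OO ∩ Qs)) = Set.Icc 5 7 \ V := by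
  apply Set.Subset.antisymm
  · apply closure_minimal
    · exact Set.inter_subset_left.trans (closure_OO ▸ subset_closure)
    · exact IsClosed.sdiff isClosed_Icc isOpen_V
  · have h1 : OO ⊆ closure ((OO ∩ Qs)) := dense_Qs.open_subset_closure_inter isOpen_OO
    calc Set.Icc 5 7 \ V = closure OO := closure_OO.symm
      _ ⊆ closure (closure ((OO ∩ Qs))) := closure_mono h1
      _ = closure ((OO ∩ Qs)) := closure_closure

lemma closure_c13 : closure ((OO \ Qs)) = Set.Icc 5 7 \ V := by
  apply Set.Subset.antisymm
  · apply closure_minimal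
    · exact Set.diff_subset.trans (closure_OO ▸ subset_closure)
    · exact IsClosed.sdiff isClosed_Icc isOpen_V
  · have h1 : OO ⊆ closure (OO ∩ {x : ℝ | Irrational x}) :=
      dense_irrational.open_subset_closure_inter isOpen_OO
    have h2 : OO ∩ {x : ℝ | Irrational x} = (OO \ Qs) := rfl
    rw [h2] at h1
    calc Set.Icc 5 7 \ V = closure OO := closure_OO.symm
      _ ⊆ closure (closure ((OO \ Qs))) := closure_mono h1
      _ = closure ((OO \ Qs)) := closure_closure

-- partitions
lemma Icc01_eq : Set.Icc (0:ℝ) 1 = ({0} ∪ {1} ∪ c2) ∪ c3 := by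
  rw [c3, Set.union_diff_cancel]
  rintro x ((rfl | rfl) | h)
  · exact ⟨le_refl _, by norm_num⟩
  · exact ⟨by norm_num, le_refl _⟩
  · exact Set.Ioo_subset_Icc_self (c2_subset_Ioo h)

lemma Ioo01_eq : Set.Ioo (0:ℝ) 1 = c2 ∪ c3 := by
  apply Set.Subset.antisymm
  · intro x hx
    by_cases h2 : x ∈ c2
    · exact Or.inl h2
    · refine Or.inr ⟨Set.Ioo_subset_Icc_self hx, ?_⟩
      rintro ((rfl | rfl) | h)
      · exact lt_irrefl _ hx.1
      · exact lt_irrefl _ hx.2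
      · exact h2 h
  · rintro x (h | h)
    · exact c2_subset_Ioo h
    · rcases h with ⟨⟨h1, h2⟩, hn⟩
      constructor
      · rcases eq_or_lt_of_le h1 with rfl | h; · exact absurd (Or.inl (Or.inl rfl)) hn
        · exact h
      · rcases eq_or_lt_of_le h2 with rfl | h; · exact absurd (Or.inl (Or.inr rfl)) hn
        · exact h

lemma Icc24_eq : Set.Icc (2:ℝ) 4 = ({2} ∪ {3} ∪ {4} ∪ c6) ∪ c8 := by
  rw [c8, Set.union_diff_cancel]
  rintro x (((rfl | rfl) | rfl) | h)
  · exact ⟨le_refl _, by norm_num⟩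
  · exact ⟨by norm_num, by norm_num⟩
  · exact ⟨by norm_num, le_refl _⟩
  · have := c6_subset_Ioo h
    exact ⟨by rcases this with ⟨a,b⟩; linarith, by rcases this with ⟨a,b⟩; linarith⟩

lemma Ioo24_eq : Set.Ioo (2:ℝ) 4 = ({3} ∪ c6) ∪ c8 := by
  apply Set.Subset.antisymm
  · intro x hx
    by_cases h3 : x = 3
    · exact Or.inl (Or.inl h3)
    · by_cases h6 : x ∈ c6
      · exact Or.inl (Or.inr h6)
      · refine Or.inr ⟨Set.Ioo_subset_Icc_self hx, ?_⟩
        rintro (((rfl | rfl) | rfl) | h)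
        · exact lt_irrefl _ hx.1
        · exact h3 rfl
        · exact lt_irrefl _ hx.2
        · exact h6 h
  · rintro x ((rfl | h) | h)
    · norm_num
    · have := c6_subset_Ioo h
      exact ⟨by rcases this with ⟨a,b⟩; linarith, by rcases this with ⟨a,b⟩; linarith⟩
    · rcases h with ⟨⟨h1, h2⟩, hn⟩
      constructor
      · rcases eq_or_lt_of_le h1 with rfl | h; · exact absurd (Or.inl (Or.inl (Or.inl rfl))) hn
        · exact h
      · rcases eq_or_lt_of_le h2 with rfl | h; · exact absurd (Or.inl (Or.inr rfl)) hn
        · exact h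

lemma Ioo57_eq : Set.Ioo (5:ℝ) 7 = OO ∪ KK := by
  rw [OO, Set.diff_union_self, Set.union_eq_self_of_subset_right KK_subset_Ioo]

lemma Icc57_eq : Set.Icc (5:ℝ) 7 = ({5} ∪ {7}) ∪ Set.Ioo 5 7 := by
  ext x
  simp only [Set.mem_Icc, Set.mem_union, Set.mem_singleton_iff, Set.mem_Ioo]
  constructor
  · rintro ⟨h1, h2⟩
    rcases eq_or_lt_of_le h1 with rfl | h1'
    · exact Or.inl (Or.inl rfl)
    · rcases eq_or_lt_of_le h2 with rfl | h2'
      · exact Or.inl (Or.inr rfl)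
      · exact Or.inr ⟨h1', h2'⟩
  · rintro ((rfl | rfl) | ⟨h1, h2⟩)
    · exact ⟨le_refl _, by norm_num⟩
    · exact ⟨by norm_num, le_refl _⟩
    · exact ⟨le_of_lt h1, le_of_lt h2⟩

-- helpers for disjointness
lemma OO_sub_Ioo : OO ⊆ Set.Ioo 5 7 := Set.diff_subset
lemma OO_notMem_KK : ∀ x ∈ OO, x ∉ KK := fun _ h => h.2
lemma six_mem_KK : (6:ℝ) ∈ KK := mem_KK.2 (Or.inl rfl)
lemma V_sub_Ioo : V ⊆ Set.Ioo 5 7 := V_subset_KK.trans KK_subset_Ioo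
lemma AA_sub_Ioo : AA ⊆ Set.Ioo 5 7 := AA_subset_KK.trans KK_subset_Ioo
lemma BB_sub_Ioo : BB ⊆ Set.Ioo 5 7 := BB_subset_KK.trans KK_subset_Ioo
lemma AA_notMem_V : ∀ x ∈ AA, x ∉ V := by
  intro x hx
  rcases mem_AA.1 hx with ⟨n, hn, rfl⟩
  exact sA_notMem_V hn
lemma BB_notMem_V : ∀ x ∈ BB, x ∉ V := by
  intro x hx
  rcases mem_BB.1 hx with ⟨n, hn, rfl⟩
  exact sB_notMem_V hn
lemma six_notMem_AA : (6:ℝ) ∉ AA := by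
  intro h
  rcases mem_AA.1 h with ⟨n, hn, heq⟩
  have := six_lt_sA hn; linarith
lemma six_notMem_BB : (6:ℝ) ∉ BB := by
  intro h
  rcases mem_BB.1 h with ⟨n, hn, heq⟩
  have := six_lt_sB hn; linarith
lemma AA_irr : ∀ x ∈ AA, Irrational x := by
  intro x hx
  rcases mem_AA.1 hx with ⟨n, hn, rfl⟩
  exact irrational_sA hn
lemma BB_irr : ∀ x ∈ BB, Irrational x := by
  intro x hx
  rcases mem_BB.1 hx with ⟨n, hn, rfl⟩
  exact irrational_sB hn

noncomputable def C : Fin 18 → Set ℝ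
  | 0 => {0} | 1 => {1} | 2 => c2 | 3 => c3 | 4 => {2} | 5 => {4} | 6 => c6 | 7 => {3}
  | 8 => c8 | 9 => {5} | 10 => {6} | 11 => {7} | 12 => (OO ∩ Qs) | 13 => (OO \ Qs)
  | 14 => (V ∩ Qs) | 15 => (V \ Qs) | 16 => AA | _ => BB

-- region subset lemmas
lemma sub_0 : ({0}:Set ℝ) ⊆ Set.Icc 0 1 := Set.singleton_subset_iff.2 (by norm_num)
lemma sub_1 : ({1}:Set ℝ) ⊆ Set.Icc 0 1 := Set.singleton_subset_iff.2 (by norm_num)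
lemma sub_2 : c2 ⊆ Set.Icc 0 1 := c2_subset_Ioo.trans Set.Ioo_subset_Icc_self
lemma sub_3 : c3 ⊆ Set.Icc 0 1 := Set.diff_subset
lemma sub_4 : ({2}:Set ℝ) ⊆ Set.Icc 2 4 := Set.singleton_subset_iff.2 (by norm_num)
lemma sub_5 : ({4}:Set ℝ) ⊆ Set.Icc 2 4 := Set.singleton_subset_iff.2 (by norm_num)
lemma sub_6 : c6 ⊆ Set.Icc 2 4 := fun x h => ⟨by have := (c6_subset_Ioo h).1; linarith,
  by have := (c6_subset_Ioo h).2; linarith⟩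
lemma sub_7 : ({3}:Set ℝ) ⊆ Set.Icc 2 4 := Set.singleton_subset_iff.2 (by norm_num)
lemma sub_8 : c8 ⊆ Set.Icc 2 4 := Set.diff_subset
lemma sub_9 : ({5}:Set ℝ) ⊆ Set.Icc 5 7 := Set.singleton_subset_iff.2 (by norm_num)
lemma sub_10 : ({6}:Set ℝ) ⊆ Set.Icc 5 7 := Set.singleton_subset_iff.2 (by norm_num)
lemma sub_11 : ({7}:Set ℝ) ⊆ Set.Icc 5 7 := Set.singleton_subset_iff.2 (by norm_num)
lemma sub_12 : (OO ∩ Qs) ⊆ Set.Icc 5 7 := Set.inter_subset_left.trans (OO_sub_Ioo.trans Set.Ioo_subset_Icc_self)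
lemma sub_13 : (OO \ Qs) ⊆ Set.Icc 5 7 := Set.diff_subset.trans (OO_sub_Ioo.trans Set.Ioo_subset_Icc_self)
lemma sub_14 : (V ∩ Qs) ⊆ Set.Icc 5 7 := Set.inter_subset_left.trans (V_sub_Ioo.trans Set.Ioo_subset_Icc_self)
lemma sub_15 : (V \ Qs) ⊆ Set.Icc 5 7 := Set.diff_subset.trans (V_sub_Ioo.trans Set.Ioo_subset_Icc_self)
lemma sub_16 : AA ⊆ Set.Icc 5 7 := AA_sub_Ioo.trans Set.Ioo_subset_Icc_self
lemma sub_17 : BB ⊆ Set.Icc 5 7 := BB_sub_Ioo.trans Set.Ioo_subset_Icc_self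

lemma dI12 : Disjoint (Set.Icc (0:ℝ) 1) (Set.Icc 2 4) := by
  rw [Set.disjoint_left]; rintro x ⟨_, h1⟩ ⟨h2, _⟩; linarith
lemma dI13 : Disjoint (Set.Icc (0:ℝ) 1) (Set.Icc 5 7) := by
  rw [Set.disjoint_left]; rintro x ⟨_, h1⟩ ⟨h2, _⟩; linarith
lemma dI23 : Disjoint (Set.Icc (2:ℝ) 4) (Set.Icc 5 7) := by
  rw [Set.disjoint_left]; rintro x ⟨_, h1⟩ ⟨h2, _⟩; linarith

lemma d_0_1 : Disjoint ({0}:Set ℝ) ({1}:Set ℝ) := by rw [Set.disjoint_singleton_left]; norm_num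
lemma d_0_2 : Disjoint ({0}:Set ℝ) c2 := by rw [Set.disjoint_singleton_left]; intro h; have hh := c2_subset_Ioo h; norm_num [Set.mem_Ioo] at hh
lemma d_0_3 : Disjoint ({0}:Set ℝ) c3 := by rw [Set.disjoint_singleton_left]; intro h; exact h.2 (Or.inl (Or.inl rfl))
lemma d_0_4 : Disjoint ({0}:Set ℝ) ({2}:Set ℝ) := Disjoint.mono sub_0 sub_4 dI12
lemma d_0_5 : Disjoint ({0}:Set ℝ) ({4}:Set ℝ) := Disjoint.mono sub_0 sub_5 dI12
lemma d_0_6 : Disjoint ({0}:Set ℝ) c6 := Disjoint.mono sub_0 sub_6 dI12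
lemma d_0_7 : Disjoint ({0}:Set ℝ) ({3}:Set ℝ) := Disjoint.mono sub_0 sub_7 dI12
lemma d_0_8 : Disjoint ({0}:Set ℝ) c8 := Disjoint.mono sub_0 sub_8 dI12
lemma d_0_9 : Disjoint ({0}:Set ℝ) ({5}:Set ℝ) := Disjoint.mono sub_0 sub_9 dI13
lemma d_0_10 : Disjoint ({0}:Set ℝ) ({6}:Set ℝ) := Disjoint.mono sub_0 sub_10 dI13
lemma d_0_11 : Disjoint ({0}:Set ℝ) ({7}:Set ℝ) := Disjoint.mono sub_0 sub_11 dI13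
lemma d_0_12 : Disjoint ({0}:Set ℝ) (OO ∩ Qs) := Disjoint.mono sub_0 sub_12 dI13
lemma d_0_13 : Disjoint ({0}:Set ℝ) (OO \ Qs) := Disjoint.mono sub_0 sub_13 dI13
lemma d_0_14 : Disjoint ({0}:Set ℝ) (V ∩ Qs) := Disjoint.mono sub_0 sub_14 dI13
lemma d_0_15 : Disjoint ({0}:Set ℝ) (V \ Qs) := Disjoint.mono sub_0 sub_15 dI13
lemma d_0_16 : Disjoint ({0}:Set ℝ) AA := Disjoint.mono sub_0 sub_16 dI13
lemma d_0_17 : Disjoint ({0}:Set ℝ) BB := Disjoint.mono sub_0 sub_17 dI13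
lemma d_1_2 : Disjoint ({1}:Set ℝ) c2 := by rw [Set.disjoint_singleton_left]; intro h; have hh := c2_subset_Ioo h; norm_num [Set.mem_Ioo] at hh
lemma d_1_3 : Disjoint ({1}:Set ℝ) c3 := by rw [Set.disjoint_singleton_left]; intro h; exact h.2 (Or.inl (Or.inr rfl))
lemma d_1_4 : Disjoint ({1}:Set ℝ) ({2}:Set ℝ) := Disjoint.mono sub_1 sub_4 dI12
lemma d_1_5 : Disjoint ({1}:Set ℝ) ({4}:Set ℝ) := Disjoint.mono sub_1 sub_5 dI12
lemma d_1_6 : Disjoint ({1}:Set ℝ) c6 := Disjoint.mono sub_1 sub_6 dI12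
lemma d_1_7 : Disjoint ({1}:Set ℝ) ({3}:Set ℝ) := Disjoint.mono sub_1 sub_7 dI12
lemma d_1_8 : Disjoint ({1}:Set ℝ) c8 := Disjoint.mono sub_1 sub_8 dI12
lemma d_1_9 : Disjoint ({1}:Set ℝ) ({5}:Set ℝ) := Disjoint.mono sub_1 sub_9 dI13
lemma d_1_10 : Disjoint ({1}:Set ℝ) ({6}:Set ℝ) := Disjoint.mono sub_1 sub_10 dI13
lemma d_1_11 : Disjoint ({1}:Set ℝ) ({7}:Set ℝ) := Disjoint.mono sub_1 sub_11 dI13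
lemma d_1_12 : Disjoint ({1}:Set ℝ) (OO ∩ Qs) := Disjoint.mono sub_1 sub_12 dI13
lemma d_1_13 : Disjoint ({1}:Set ℝ) (OO \ Qs) := Disjoint.mono sub_1 sub_13 dI13
lemma d_1_14 : Disjoint ({1}:Set ℝ) (V ∩ Qs) := Disjoint.mono sub_1 sub_14 dI13
lemma d_1_15 : Disjoint ({1}:Set ℝ) (V \ Qs) := Disjoint.mono sub_1 sub_15 dI13
lemma d_1_16 : Disjoint ({1}:Set ℝ) AA := Disjoint.mono sub_1 sub_16 dI13
lemma d_1_17 : Disjoint ({1}:Set ℝ) BB := Disjoint.mono sub_1 sub_17 dI13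
lemma d_2_3 : Disjoint c2 c3 := by rw [Set.disjoint_left]; intro x h2 h3; exact h3.2 (Or.inr h2)
lemma d_2_4 : Disjoint c2 ({2}:Set ℝ) := Disjoint.mono sub_2 sub_4 dI12
lemma d_2_5 : Disjoint c2 ({4}:Set ℝ) := Disjoint.mono sub_2 sub_5 dI12
lemma d_2_6 : Disjoint c2 c6 := Disjoint.mono sub_2 sub_6 dI12
lemma d_2_7 : Disjoint c2 ({3}:Set ℝ) := Disjoint.mono sub_2 sub_7 dI12
lemma d_2_8 : Disjoint c2 c8 := Disjoint.mono sub_2 sub_8 dI12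
lemma d_2_9 : Disjoint c2 ({5}:Set ℝ) := Disjoint.mono sub_2 sub_9 dI13
lemma d_2_10 : Disjoint c2 ({6}:Set ℝ) := Disjoint.mono sub_2 sub_10 dI13
lemma d_2_11 : Disjoint c2 ({7}:Set ℝ) := Disjoint.mono sub_2 sub_11 dI13
lemma d_2_12 : Disjoint c2 (OO ∩ Qs) := Disjoint.mono sub_2 sub_12 dI13
lemma d_2_13 : Disjoint c2 (OO \ Qs) := Disjoint.mono sub_2 sub_13 dI13
lemma d_2_14 : Disjoint c2 (V ∩ Qs) := Disjoint.mono sub_2 sub_14 dI13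
lemma d_2_15 : Disjoint c2 (V \ Qs) := Disjoint.mono sub_2 sub_15 dI13
lemma d_2_16 : Disjoint c2 AA := Disjoint.mono sub_2 sub_16 dI13
lemma d_2_17 : Disjoint c2 BB := Disjoint.mono sub_2 sub_17 dI13
lemma d_3_4 : Disjoint c3 ({2}:Set ℝ) := Disjoint.mono sub_3 sub_4 dI12
lemma d_3_5 : Disjoint c3 ({4}:Set ℝ) := Disjoint.mono sub_3 sub_5 dI12
lemma d_3_6 : Disjoint c3 c6 := Disjoint.mono sub_3 sub_6 dI12
lemma d_3_7 : Disjoint c3 ({3}:Set ℝ) := Disjoint.mono sub_3 sub_7 dI12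
lemma d_3_8 : Disjoint c3 c8 := Disjoint.mono sub_3 sub_8 dI12
lemma d_3_9 : Disjoint c3 ({5}:Set ℝ) := Disjoint.mono sub_3 sub_9 dI13
lemma d_3_10 : Disjoint c3 ({6}:Set ℝ) := Disjoint.mono sub_3 sub_10 dI13
lemma d_3_11 : Disjoint c3 ({7}:Set ℝ) := Disjoint.mono sub_3 sub_11 dI13
lemma d_3_12 : Disjoint c3 (OO ∩ Qs) := Disjoint.mono sub_3 sub_12 dI13
lemma d_3_13 : Disjoint c3 (OO \ Qs) := Disjoint.mono sub_3 sub_13 dI13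
lemma d_3_14 : Disjoint c3 (V ∩ Qs) := Disjoint.mono sub_3 sub_14 dI13
lemma d_3_15 : Disjoint c3 (V \ Qs) := Disjoint.mono sub_3 sub_15 dI13
lemma d_3_16 : Disjoint c3 AA := Disjoint.mono sub_3 sub_16 dI13
lemma d_3_17 : Disjoint c3 BB := Disjoint.mono sub_3 sub_17 dI13
lemma d_4_5 : Disjoint ({2}:Set ℝ) ({4}:Set ℝ) := by rw [Set.disjoint_singleton_left]; norm_num
lemma d_4_6 : Disjoint ({2}:Set ℝ) c6 := by rw [Set.disjoint_singleton_left]; intro h; have hh := c6_subset_Ioo h; norm_num [Set.mem_Ioo] at hh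
lemma d_4_7 : Disjoint ({2}:Set ℝ) ({3}:Set ℝ) := by rw [Set.disjoint_singleton_left]; norm_num
lemma d_4_8 : Disjoint ({2}:Set ℝ) c8 := by rw [Set.disjoint_singleton_left]; intro h; exact h.2 (Or.inl (Or.inl (Or.inl rfl)))
lemma d_4_9 : Disjoint ({2}:Set ℝ) ({5}:Set ℝ) := Disjoint.mono sub_4 sub_9 dI23
lemma d_4_10 : Disjoint ({2}:Set ℝ) ({6}:Set ℝ) := Disjoint.mono sub_4 sub_10 dI23
lemma d_4_11 : Disjoint ({2}:Set ℝ) ({7}:Set ℝ) := Disjoint.mono sub_4 sub_11 dI23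
lemma d_4_12 : Disjoint ({2}:Set ℝ) (OO ∩ Qs) := Disjoint.mono sub_4 sub_12 dI23
lemma d_4_13 : Disjoint ({2}:Set ℝ) (OO \ Qs) := Disjoint.mono sub_4 sub_13 dI23
lemma d_4_14 : Disjoint ({2}:Set ℝ) (V ∩ Qs) := Disjoint.mono sub_4 sub_14 dI23
lemma d_4_15 : Disjoint ({2}:Set ℝ) (V \ Qs) := Disjoint.mono sub_4 sub_15 dI23
lemma d_4_16 : Disjoint ({2}:Set ℝ) AA := Disjoint.mono sub_4 sub_16 dI23
lemma d_4_17 : Disjoint ({2}:Set ℝ) BB := Disjoint.mono sub_4 sub_17 dI23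
lemma d_5_6 : Disjoint ({4}:Set ℝ) c6 := by rw [Set.disjoint_singleton_left]; intro h; have hh := c6_subset_Ioo h; norm_num [Set.mem_Ioo] at hh
lemma d_5_7 : Disjoint ({4}:Set ℝ) ({3}:Set ℝ) := by rw [Set.disjoint_singleton_left]; norm_num
lemma d_5_8 : Disjoint ({4}:Set ℝ) c8 := by rw [Set.disjoint_singleton_left]; intro h; exact h.2 (Or.inl (Or.inr rfl))
lemma d_5_9 : Disjoint ({4}:Set ℝ) ({5}:Set ℝ) := Disjoint.mono sub_5 sub_9 dI23
lemma d_5_10 : Disjoint ({4}:Set ℝ) ({6}:Set ℝ) := Disjoint.mono sub_5 sub_10 dI23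
lemma d_5_11 : Disjoint ({4}:Set ℝ) ({7}:Set ℝ) := Disjoint.mono sub_5 sub_11 dI23
lemma d_5_12 : Disjoint ({4}:Set ℝ) (OO ∩ Qs) := Disjoint.mono sub_5 sub_12 dI23
lemma d_5_13 : Disjoint ({4}:Set ℝ) (OO \ Qs) := Disjoint.mono sub_5 sub_13 dI23
lemma d_5_14 : Disjoint ({4}:Set ℝ) (V ∩ Qs) := Disjoint.mono sub_5 sub_14 dI23
lemma d_5_15 : Disjoint ({4}:Set ℝ) (V \ Qs) := Disjoint.mono sub_5 sub_15 dI23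
lemma d_5_16 : Disjoint ({4}:Set ℝ) AA := Disjoint.mono sub_5 sub_16 dI23
lemma d_5_17 : Disjoint ({4}:Set ℝ) BB := Disjoint.mono sub_5 sub_17 dI23
lemma d_6_7 : Disjoint c6 ({3}:Set ℝ) := by rw [Set.disjoint_singleton_right]; intro h; have hh := c6_subset_Ioo h; norm_num [Set.mem_Ioo] at hh
lemma d_6_8 : Disjoint c6 c8 := by rw [Set.disjoint_left]; intro x h6 h8; exact h8.2 (Or.inr h6)
lemma d_6_9 : Disjoint c6 ({5}:Set ℝ) := Disjoint.mono sub_6 sub_9 dI23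
lemma d_6_10 : Disjoint c6 ({6}:Set ℝ) := Disjoint.mono sub_6 sub_10 dI23
lemma d_6_11 : Disjoint c6 ({7}:Set ℝ) := Disjoint.mono sub_6 sub_11 dI23
lemma d_6_12 : Disjoint c6 (OO ∩ Qs) := Disjoint.mono sub_6 sub_12 dI23
lemma d_6_13 : Disjoint c6 (OO \ Qs) := Disjoint.mono sub_6 sub_13 dI23
lemma d_6_14 : Disjoint c6 (V ∩ Qs) := Disjoint.mono sub_6 sub_14 dI23
lemma d_6_15 : Disjoint c6 (V \ Qs) := Disjoint.mono sub_6 sub_15 dI23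
lemma d_6_16 : Disjoint c6 AA := Disjoint.mono sub_6 sub_16 dI23
lemma d_6_17 : Disjoint c6 BB := Disjoint.mono sub_6 sub_17 dI23
lemma d_7_8 : Disjoint ({3}:Set ℝ) c8 := by rw [Set.disjoint_singleton_left]; intro h; exact h.2 (Or.inl (Or.inl (Or.inr rfl)))
lemma d_7_9 : Disjoint ({3}:Set ℝ) ({5}:Set ℝ) := Disjoint.mono sub_7 sub_9 dI23
lemma d_7_10 : Disjoint ({3}:Set ℝ) ({6}:Set ℝ) := Disjoint.mono sub_7 sub_10 dI23
lemma d_7_11 : Disjoint ({3}:Set ℝ) ({7}:Set ℝ) := Disjoint.mono sub_7 sub_11 dI23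
lemma d_7_12 : Disjoint ({3}:Set ℝ) (OO ∩ Qs) := Disjoint.mono sub_7 sub_12 dI23
lemma d_7_13 : Disjoint ({3}:Set ℝ) (OO \ Qs) := Disjoint.mono sub_7 sub_13 dI23
lemma d_7_14 : Disjoint ({3}:Set ℝ) (V ∩ Qs) := Disjoint.mono sub_7 sub_14 dI23
lemma d_7_15 : Disjoint ({3}:Set ℝ) (V \ Qs) := Disjoint.mono sub_7 sub_15 dI23
lemma d_7_16 : Disjoint ({3}:Set ℝ) AA := Disjoint.mono sub_7 sub_16 dI23
lemma d_7_17 : Disjoint ({3}:Set ℝ) BB := Disjoint.mono sub_7 sub_17 dI23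
lemma d_8_9 : Disjoint c8 ({5}:Set ℝ) := Disjoint.mono sub_8 sub_9 dI23
lemma d_8_10 : Disjoint c8 ({6}:Set ℝ) := Disjoint.mono sub_8 sub_10 dI23
lemma d_8_11 : Disjoint c8 ({7}:Set ℝ) := Disjoint.mono sub_8 sub_11 dI23
lemma d_8_12 : Disjoint c8 (OO ∩ Qs) := Disjoint.mono sub_8 sub_12 dI23
lemma d_8_13 : Disjoint c8 (OO \ Qs) := Disjoint.mono sub_8 sub_13 dI23
lemma d_8_14 : Disjoint c8 (V ∩ Qs) := Disjoint.mono sub_8 sub_14 dI23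
lemma d_8_15 : Disjoint c8 (V \ Qs) := Disjoint.mono sub_8 sub_15 dI23
lemma d_8_16 : Disjoint c8 AA := Disjoint.mono sub_8 sub_16 dI23
lemma d_8_17 : Disjoint c8 BB := Disjoint.mono sub_8 sub_17 dI23
lemma d_9_10 : Disjoint ({5}:Set ℝ) ({6}:Set ℝ) := by rw [Set.disjoint_singleton_left]; norm_num
lemma d_9_11 : Disjoint ({5}:Set ℝ) ({7}:Set ℝ) := by rw [Set.disjoint_singleton_left]; norm_num
lemma d_9_12 : Disjoint ({5}:Set ℝ) (OO ∩ Qs) := by rw [Set.disjoint_singleton_left]; intro h; have hh := OO_sub_Ioo h.1; norm_num [Set.mem_Ioo] at hh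
lemma d_9_13 : Disjoint ({5}:Set ℝ) (OO \ Qs) := by rw [Set.disjoint_singleton_left]; intro h; have hh := OO_sub_Ioo h.1; norm_num [Set.mem_Ioo] at hh
lemma d_9_14 : Disjoint ({5}:Set ℝ) (V ∩ Qs) := by rw [Set.disjoint_singleton_left]; intro h; have hh := V_sub_Ioo h.1; norm_num [Set.mem_Ioo] at hh
lemma d_9_15 : Disjoint ({5}:Set ℝ) (V \ Qs) := by rw [Set.disjoint_singleton_left]; intro h; have hh := V_sub_Ioo h.1; norm_num [Set.mem_Ioo] at hh
lemma d_9_16 : Disjoint ({5}:Set ℝ) AA := by rw [Set.disjoint_singleton_left]; intro h; have hh := AA_sub_Ioo h; norm_num [Set.mem_Ioo] at hh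
lemma d_9_17 : Disjoint ({5}:Set ℝ) BB := by rw [Set.disjoint_singleton_left]; intro h; have hh := BB_sub_Ioo h; norm_num [Set.mem_Ioo] at hh
lemma d_10_11 : Disjoint ({6}:Set ℝ) ({7}:Set ℝ) := by rw [Set.disjoint_singleton_left]; norm_num
lemma d_10_12 : Disjoint ({6}:Set ℝ) (OO ∩ Qs) := by rw [Set.disjoint_singleton_left]; intro h; exact h.1.2 six_mem_KK
lemma d_10_13 : Disjoint ({6}:Set ℝ) (OO \ Qs) := by rw [Set.disjoint_singleton_left]; intro h; exact h.1.2 six_mem_KK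
lemma d_10_14 : Disjoint ({6}:Set ℝ) (V ∩ Qs) := by rw [Set.disjoint_singleton_left]; intro h; exact six_notMem_V h.1
lemma d_10_15 : Disjoint ({6}:Set ℝ) (V \ Qs) := by rw [Set.disjoint_singleton_left]; intro h; exact six_notMem_V h.1
lemma d_10_16 : Disjoint ({6}:Set ℝ) AA := by rw [Set.disjoint_singleton_left]; intro h; exact six_notMem_AA h
lemma d_10_17 : Disjoint ({6}:Set ℝ) BB := by rw [Set.disjoint_singleton_left]; intro h; exact six_notMem_BB h
lemma d_11_12 : Disjoint ({7}:Set ℝ) (OO ∩ Qs) := by rw [Set.disjoint_singleton_left]; intro h; have hh := OO_sub_Ioo h.1; norm_num [Set.mem_Ioo] at hh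
lemma d_11_13 : Disjoint ({7}:Set ℝ) (OO \ Qs) := by rw [Set.disjoint_singleton_left]; intro h; have hh := OO_sub_Ioo h.1; norm_num [Set.mem_Ioo] at hh
lemma d_11_14 : Disjoint ({7}:Set ℝ) (V ∩ Qs) := by rw [Set.disjoint_singleton_left]; intro h; have hh := V_sub_Ioo h.1; norm_num [Set.mem_Ioo] at hh
lemma d_11_15 : Disjoint ({7}:Set ℝ) (V \ Qs) := by rw [Set.disjoint_singleton_left]; intro h; have hh := V_sub_Ioo h.1; norm_num [Set.mem_Ioo] at hh
lemma d_11_16 : Disjoint ({7}:Set ℝ) AA := by rw [Set.disjoint_singleton_left]; intro h; have hh := AA_sub_Ioo h; norm_num [Set.mem_Ioo] at hh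
lemma d_11_17 : Disjoint ({7}:Set ℝ) BB := by rw [Set.disjoint_singleton_left]; intro h; have hh := BB_sub_Ioo h; norm_num [Set.mem_Ioo] at hh
lemma d_12_13 : Disjoint (OO ∩ Qs) (OO \ Qs) := by rw [Set.disjoint_left]; intro x h1 h2; exact h2.2 h1.2
lemma d_12_14 : Disjoint (OO ∩ Qs) (V ∩ Qs) := by rw [Set.disjoint_left]; intro x h1 h2; exact h1.1.2 (V_subset_KK h2.1)
lemma d_12_15 : Disjoint (OO ∩ Qs) (V \ Qs) := by rw [Set.disjoint_left]; intro x h1 h2; exact h1.1.2 (V_subset_KK h2.1)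
lemma d_12_16 : Disjoint (OO ∩ Qs) AA := by rw [Set.disjoint_left]; intro x h1 h2; exact h1.1.2 (AA_subset_KK h2)
lemma d_12_17 : Disjoint (OO ∩ Qs) BB := by rw [Set.disjoint_left]; intro x h1 h2; exact h1.1.2 (BB_subset_KK h2)
lemma d_13_14 : Disjoint (OO \ Qs) (V ∩ Qs) := by rw [Set.disjoint_left]; intro x h1 h2; exact h1.1.2 (V_subset_KK h2.1)
lemma d_13_15 : Disjoint (OO \ Qs) (V \ Qs) := by rw [Set.disjoint_left]; intro x h1 h2; exact h1.1.2 (V_subset_KK h2.1)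
lemma d_13_16 : Disjoint (OO \ Qs) AA := by rw [Set.disjoint_left]; intro x h1 h2; exact h1.1.2 (AA_subset_KK h2)
lemma d_13_17 : Disjoint (OO \ Qs) BB := by rw [Set.disjoint_left]; intro x h1 h2; exact h1.1.2 (BB_subset_KK h2)
lemma d_14_15 : Disjoint (V ∩ Qs) (V \ Qs) := by rw [Set.disjoint_left]; intro x h1 h2; exact h2.2 h1.2
lemma d_14_16 : Disjoint (V ∩ Qs) AA := by rw [Set.disjoint_left]; intro x h1 h2; exact AA_notMem_V _ h2 h1.1
lemma d_14_17 : Disjoint (V ∩ Qs) BB := by rw [Set.disjoint_left]; intro x h1 h2; exact BB_notMem_V _ h2 h1.1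
lemma d_15_16 : Disjoint (V \ Qs) AA := by rw [Set.disjoint_left]; intro x h1 h2; exact AA_notMem_V _ h2 h1.1
lemma d_15_17 : Disjoint (V \ Qs) BB := by rw [Set.disjoint_left]; intro x h1 h2; exact BB_notMem_V _ h2 h1.1
lemma d_16_17 : Disjoint AA BB := by rw [Set.disjoint_left]; intro x h1 h2; exact AA_disj_BB _ h1 h2

theorem Cdisj : ∀ i j : Fin 18, i ≠ j → Disjoint (C i) (C j) := by
  intro i j hij
  fin_cases i <;> fin_cases j
  · exact absurd rfl hij
  · exact d_0_1
  · exact d_0_2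
  · exact d_0_3
  · exact d_0_4
  · exact d_0_5
  · exact d_0_6
  · exact d_0_7
  · exact d_0_8
  · exact d_0_9
  · exact d_0_10
  · exact d_0_11
  · exact d_0_12
  · exact d_0_13
  · exact d_0_14
  · exact d_0_15
  · exact d_0_16
  · exact d_0_17
  · exact (d_0_1).symm
  · exact absurd rfl hij
  · exact d_1_2
  · exact d_1_3
  · exact d_1_4
  · exact d_1_5
  · exact d_1_6
  · exact d_1_7
  · exact d_1_8
  · exact d_1_9
  · exact d_1_10
  · exact d_1_11
  · exact d_1_12
  · exact d_1_13
  · exact d_1_14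
  · exact d_1_15
  · exact d_1_16
  · exact d_1_17
  · exact (d_0_2).symm
  · exact (d_1_2).symm
  · exact absurd rfl hij
  · exact d_2_3
  · exact d_2_4
  · exact d_2_5
  · exact d_2_6
  · exact d_2_7
  · exact d_2_8
  · exact d_2_9
  · exact d_2_10
  · exact d_2_11
  · exact d_2_12
  · exact d_2_13
  · exact d_2_14
  · exact d_2_15
  · exact d_2_16
  · exact d_2_17
  · exact (d_0_3).symm
  · exact (d_1_3).symm
  · exact (d_2_3).symm
  · exact absurd rfl hij
  · exact d_3_4
  · exact d_3_5
  · exact d_3_6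
  · exact d_3_7
  · exact d_3_8
  · exact d_3_9
  · exact d_3_10
  · exact d_3_11
  · exact d_3_12
  · exact d_3_13
  · exact d_3_14
  · exact d_3_15
  · exact d_3_16
  · exact d_3_17
  · exact (d_0_4).symm
  · exact (d_1_4).symm
  · exact (d_2_4).symm
  · exact (d_3_4).symm
  · exact absurd rfl hij
  · exact d_4_5
  · exact d_4_6
  · exact d_4_7
  · exact d_4_8
  · exact d_4_9
  · exact d_4_10
  · exact d_4_11
  · exact d_4_12
  · exact d_4_13
  · exact d_4_14
  · exact d_4_15
  · exact d_4_16
  · exact d_4_17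
  · exact (d_0_5).symm
  · exact (d_1_5).symm
  · exact (d_2_5).symm
  · exact (d_3_5).symm
  · exact (d_4_5).symm
  · exact absurd rfl hij
  · exact d_5_6
  · exact d_5_7
  · exact d_5_8
  · exact d_5_9
  · exact d_5_10
  · exact d_5_11
  · exact d_5_12
  · exact d_5_13
  · exact d_5_14
  · exact d_5_15
  · exact d_5_16
  · exact d_5_17
  · exact (d_0_6).symm
  · exact (d_1_6).symm
  · exact (d_2_6).symm
  · exact (d_3_6).symm
  · exact (d_4_6).symm
  · exact (d_5_6).symm
  · exact absurd rfl hij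
  · exact d_6_7
  · exact d_6_8
  · exact d_6_9
  · exact d_6_10
  · exact d_6_11
  · exact d_6_12
  · exact d_6_13
  · exact d_6_14
  · exact d_6_15
  · exact d_6_16
  · exact d_6_17
  · exact (d_0_7).symm
  · exact (d_1_7).symm
  · exact (d_2_7).symm
  · exact (d_3_7).symm
  · exact (d_4_7).symm
  · exact (d_5_7).symm
  · exact (d_6_7).symm
  · exact absurd rfl hij
  · exact d_7_8
  · exact d_7_9
  · exact d_7_10
  · exact d_7_11
  · exact d_7_12
  · exact d_7_13
  · exact d_7_14
  · exact d_7_15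
  · exact d_7_16
  · exact d_7_17
  · exact (d_0_8).symm
  · exact (d_1_8).symm
  · exact (d_2_8).symm
  · exact (d_3_8).symm
  · exact (d_4_8).symm
  · exact (d_5_8).symm
  · exact (d_6_8).symm
  · exact (d_7_8).symm
  · exact absurd rfl hij
  · exact d_8_9
  · exact d_8_10
  · exact d_8_11
  · exact d_8_12
  · exact d_8_13
  · exact d_8_14
  · exact d_8_15
  · exact d_8_16
  · exact d_8_17
  · exact (d_0_9).symm
  · exact (d_1_9).symm
  · exact (d_2_9).symm
  · exact (d_3_9).symm
  · exact (d_4_9).symm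
  · exact (d_5_9).symm
  · exact (d_6_9).symm
  · exact (d_7_9).symm
  · exact (d_8_9).symm
  · exact absurd rfl hij
  · exact d_9_10
  · exact d_9_11
  · exact d_9_12
  · exact d_9_13
  · exact d_9_14
  · exact d_9_15
  · exact d_9_16
  · exact d_9_17
  · exact (d_0_10).symm
  · exact (d_1_10).symm
  · exact (d_2_10).symm
  · exact (d_3_10).symm
  · exact (d_4_10).symm
  · exact (d_5_10).symm
  · exact (d_6_10).symm
  · exact (d_7_10).symm
  · exact (d_8_10).symm
  · exact (d_9_10).symm
  · exact absurd rfl hij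
  · exact d_10_11
  · exact d_10_12
  · exact d_10_13
  · exact d_10_14
  · exact d_10_15
  · exact d_10_16
  · exact d_10_17
  · exact (d_0_11).symm
  · exact (d_1_11).symm
  · exact (d_2_11).symm
  · exact (d_3_11).symm
  · exact (d_4_11).symm
  · exact (d_5_11).symm
  · exact (d_6_11).symm
  · exact (d_7_11).symm
  · exact (d_8_11).symm
  · exact (d_9_11).symm
  · exact (d_10_11).symm
  · exact absurd rfl hij
  · exact d_11_12
  · exact d_11_13
  · exact d_11_14
  · exact d_11_15
  · exact d_11_16
  · exact d_11_17
  · exact (d_0_12).symm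
  · exact (d_1_12).symm
  · exact (d_2_12).symm
  · exact (d_3_12).symm
  · exact (d_4_12).symm
  · exact (d_5_12).symm
  · exact (d_6_12).symm
  · exact (d_7_12).symm
  · exact (d_8_12).symm
  · exact (d_9_12).symm
  · exact (d_10_12).symm
  · exact (d_11_12).symm
  · exact absurd rfl hij
  · exact d_12_13
  · exact d_12_14
  · exact d_12_15
  · exact d_12_16
  · exact d_12_17
  · exact (d_0_13).symm
  · exact (d_1_13).symm
  · exact (d_2_13).symm
  · exact (d_3_13).symm
  · exact (d_4_13).symm
  · exact (d_5_13).symm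
  · exact (d_6_13).symm
  · exact (d_7_13).symm
  · exact (d_8_13).symm
  · exact (d_9_13).symm
  · exact (d_10_13).symm
  · exact (d_11_13).symm
  · exact (d_12_13).symm
  · exact absurd rfl hij
  · exact d_13_14
  · exact d_13_15
  · exact d_13_16
  · exact d_13_17
  · exact (d_0_14).symm
  · exact (d_1_14).symm
  · exact (d_2_14).symm
  · exact (d_3_14).symm
  · exact (d_4_14).symm
  · exact (d_5_14).symm
  · exact (d_6_14).symm
  · exact (d_7_14).symm
  · exact (d_8_14).symm
  · exact (d_9_14).symm
  · exact (d_10_14).symm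
  · exact (d_11_14).symm
  · exact (d_12_14).symm
  · exact (d_13_14).symm
  · exact absurd rfl hij
  · exact d_14_15
  · exact d_14_16
  · exact d_14_17
  · exact (d_0_15).symm
  · exact (d_1_15).symm
  · exact (d_2_15).symm
  · exact (d_3_15).symm
  · exact (d_4_15).symm
  · exact (d_5_15).symm
  · exact (d_6_15).symm
  · exact (d_7_15).symm
  · exact (d_8_15).symm
  · exact (d_9_15).symm
  · exact (d_10_15).symm
  · exact (d_11_15).symm
  · exact (d_12_15).symm
  · exact (d_13_15).symm
  · exact (d_14_15).symm
  · exact absurd rfl hij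
  · exact d_15_16
  · exact d_15_17
  · exact (d_0_16).symm
  · exact (d_1_16).symm
  · exact (d_2_16).symm
  · exact (d_3_16).symm
  · exact (d_4_16).symm
  · exact (d_5_16).symm
  · exact (d_6_16).symm
  · exact (d_7_16).symm
  · exact (d_8_16).symm
  · exact (d_9_16).symm
  · exact (d_10_16).symm
  · exact (d_11_16).symm
  · exact (d_12_16).symm
  · exact (d_13_16).symm
  · exact (d_14_16).symm
  · exact (d_15_16).symm
  · exact absurd rfl hij
  · exact d_16_17
  · exact (d_0_17).symm
  · exact (d_1_17).symm
  · exact (d_2_17).symm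
  · exact (d_3_17).symm
  · exact (d_4_17).symm
  · exact (d_5_17).symm
  · exact (d_6_17).symm
  · exact (d_7_17).symm
  · exact (d_8_17).symm
  · exact (d_9_17).symm
  · exact (d_10_17).symm
  · exact (d_11_17).symm
  · exact (d_12_17).symm
  · exact (d_13_17).symm
  · exact (d_14_17).symm
  · exact (d_15_17).symm
  · exact (d_16_17).symm
  · exact absurd rfl hij

-- nonemptiness
lemma sqrt2_lt_2 : Real.sqrt 2 < 2 := by
  nlinarith [Real.sq_sqrt (by norm_num : (0:ℝ) ≤ 2), Real.sqrt_nonneg 2]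
lemma sqrt2_pos : 0 < Real.sqrt 2 := Real.sqrt_pos.2 (by norm_num)
lemma irr_half_sqrt2 : Irrational (Real.sqrt 2 / 2) := by
  have h := (irrational_div_natCast_iff (n := 2)).mpr ⟨by norm_num, irrational_sqrt_two⟩
  simpa using h

lemma ne_0 : ({0}:Set ℝ).Nonempty := ⟨0, rfl⟩
lemma ne_1 : ({1}:Set ℝ).Nonempty := ⟨1, rfl⟩
lemma ne_2 : c2.Nonempty := ⟨1/2, mem_c2.2 ⟨2, le_refl _, by norm_num⟩⟩
lemma ne_3 : c3.Nonempty := by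
  refine ⟨Real.sqrt 2 / 2, ⟨⟨by positivity, by nlinarith [sqrt2_lt_2, sqrt2_pos]⟩, ?_⟩⟩
  rintro ((h | h) | h)
  · rw [Set.mem_singleton_iff] at h; exact irr_half_sqrt2 ⟨0, by rw [h]; norm_num⟩
  · rw [Set.mem_singleton_iff] at h; exact irr_half_sqrt2 ⟨1, by rw [h]; norm_num⟩
  · exact irr_half_sqrt2 (c2_subset_Qs h)
lemma ne_4 : ({2}:Set ℝ).Nonempty := ⟨2, rfl⟩
lemma ne_5 : ({4}:Set ℝ).Nonempty := ⟨4, rfl⟩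
lemma ne_6 : c6.Nonempty := ⟨3 + 1/2, mem_c6.2 ⟨2, le_refl _, by norm_num⟩⟩
lemma ne_7 : ({3}:Set ℝ).Nonempty := ⟨3, rfl⟩
lemma irr_2_add : Irrational (2 + Real.sqrt 2 / 2) := by
  have h := (irrational_natCast_add_iff (n := 2)).mpr irr_half_sqrt2
  simpa using h
lemma ne_8 : c8.Nonempty := by
  refine ⟨2 + Real.sqrt 2 / 2, ⟨⟨by nlinarith [sqrt2_pos], by nlinarith [sqrt2_lt_2, sqrt2_pos]⟩, ?_⟩⟩
  rintro (((h | h) | h) | h)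
  · rw [Set.mem_singleton_iff] at h; exact irr_2_add ⟨2, by rw [h]; norm_num⟩
  · rw [Set.mem_singleton_iff] at h; exact irr_2_add ⟨3, by rw [h]; norm_num⟩
  · rw [Set.mem_singleton_iff] at h; exact irr_2_add ⟨4, by rw [h]; norm_num⟩
  · exact irr_2_add (c6_subset_Qs h)
lemma ne_9 : ({5}:Set ℝ).Nonempty := ⟨5, rfl⟩
lemma ne_10 : ({6}:Set ℝ).Nonempty := ⟨6, rfl⟩
lemma ne_11 : ({7}:Set ℝ).Nonempty := ⟨7, rfl⟩
lemma ne_12 : (OO ∩ Qs).Nonempty := by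
  refine ⟨5.5, ⟨⟨by norm_num, by norm_num⟩, fun hk => ?_⟩, ⟨11/2, by norm_num⟩⟩
  have := (KK_subset_Icc hk).1
  norm_num at this
lemma irr_5_add : Irrational (5 + Real.sqrt 2 / 2) := by
  have h := (irrational_natCast_add_iff (n := 5)).mpr irr_half_sqrt2
  simpa using h
lemma ne_13 : (OO \ Qs).Nonempty := by
  refine ⟨5 + Real.sqrt 2 / 2, ⟨⟨by nlinarith [sqrt2_pos], by nlinarith [sqrt2_lt_2, sqrt2_pos]⟩,
    fun hk => ?_⟩, fun hq => irr_5_add hq⟩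
  have := (KK_subset_Icc hk).1
  nlinarith [sqrt2_lt_2]
lemma ne_14 : (V ∩ Qs).Nonempty := by
  obtain ⟨q, h1, h2⟩ := exists_rat_btwn (sA_lt_sB (le_refl 1))
  exact ⟨(q:ℝ), mem_V.2 ⟨1, le_refl _, h1, h2⟩, ⟨q, rfl⟩⟩
lemma ne_15 : (V \ Qs).Nonempty := by
  have hpi := Real.pi_pos
  refine ⟨6 + 3/(4*Real.pi), mem_V.2 ⟨1, le_refl _, ?_, ?_⟩, fun hq => ?_⟩
  · show sA 1 < _
    unfold sA
    have h : (1:ℝ)/(2*((1:ℕ):ℝ)*Real.pi) < 3/(4*Real.pi) := by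
      rw [div_lt_div_iff₀ (by push_cast; nlinarith) (by nlinarith)]
      push_cast; nlinarith
    linarith
  · show _ < sB 1
    unfold sB
    have h : (3:ℝ)/(4*Real.pi) < 1/((2*((1:ℕ):ℝ)-1)*Real.pi) := by
      rw [div_lt_div_iff₀ (by nlinarith) (by push_cast; nlinarith)]
      push_cast; nlinarith
    linarith
  · -- irrationality
    have h1 : Irrational (((4:ℤ):ℝ) * Real.pi) := (irrational_intCast_mul_iff).2 ⟨by norm_num, irrational_pi⟩
    have h2 : Irrational ((4 * Real.pi)⁻¹) := by
      rw [show (4:ℝ) * Real.pi = ((4:ℤ):ℝ) * Real.pi by push_cast; ring]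
      exact irrational_inv_iff.2 h1
    have h3 : Irrational ((3:ℚ) * (4 * Real.pi)⁻¹) := (irrational_ratCast_mul_iff).2 ⟨by norm_num, h2⟩
    have h4 : Irrational (3 / (4 * Real.pi)) := by
      rw [div_eq_mul_inv]
      simpa using h3
    have h5 : Irrational (6 + 3 / (4 * Real.pi)) := by
      have := (irrational_natCast_add_iff (n := 6)).mpr h4
      simpa using this
    exact h5 hq
lemma ne_16 : AA.Nonempty := ⟨sA 1, mem_AA.2 ⟨1, le_refl _, rfl⟩⟩
lemma ne_17 : BB.Nonempty := ⟨sB 1, mem_BB.2 ⟨1, le_refl _, rfl⟩⟩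

theorem Cne : ∀ i : Fin 18, (C i).Nonempty := by
  intro i
  fin_cases i
  · exact ne_0
  · exact ne_1
  · exact ne_2
  · exact ne_3
  · exact ne_4
  · exact ne_5
  · exact ne_6
  · exact ne_7
  · exact ne_8
  · exact ne_9
  · exact ne_10
  · exact ne_11
  · exact ne_12
  · exact ne_13
  · exact ne_14
  · exact ne_15
  · exact ne_16
  · exact ne_17


noncomputable def F (m : ℕ) : Set ℝ := ⋃ i : Fin 18, ⋃ _ : m.testBit i.val = true, C i

lemma mem_F {m : ℕ} {x : ℝ} : x ∈ F m ↔ ∃ i : Fin 18, m.testBit i.val = true ∧ x ∈ C i := by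
  simp [F]

lemma F_ext {a b : ℕ} (h : ∀ i : Fin 18, a.testBit i.val = b.testBit i.val) : F a = F b := by
  ext x; rw [mem_F, mem_F]
  constructor
  · rintro ⟨i, hb, hx⟩; exact ⟨i, by rw [← h i]; exact hb, hx⟩
  · rintro ⟨i, hb, hx⟩; exact ⟨i, by rw [h i]; exact hb, hx⟩

lemma F_union (a b : ℕ) : F a ∪ F b = F (a ||| b) := by
  ext x
  simp only [Set.mem_union, mem_F, Nat.testBit_lor, Bool.or_eq_true]
  constructor
  · rintro (⟨i, hb, hx⟩ | ⟨i, hb, hx⟩)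
    · exact ⟨i, Or.inl hb, hx⟩
    · exact ⟨i, Or.inr hb, hx⟩
  · rintro ⟨i, hb | hb, hx⟩
    · exact Or.inl ⟨i, hb, hx⟩
    · exact Or.inr ⟨i, hb, hx⟩

lemma F_inter (a b : ℕ) : F a ∩ F b = F (a &&& b) := by
  ext x
  simp only [Set.mem_inter_iff, mem_F, Nat.testBit_land, Bool.and_eq_true]
  constructor
  · rintro ⟨⟨i, hb, hx⟩, ⟨j, hb', hx'⟩⟩
    have hij : i = j := by
      by_contra hne
      exact (Cdisj i j hne).le_bot ⟨hx, hx'⟩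
    subst hij
    exact ⟨i, ⟨hb, hb'⟩, hx⟩
  · rintro ⟨i, ⟨hb, hb'⟩, hx⟩
    exact ⟨⟨i, hb, hx⟩, ⟨i, hb', hx⟩⟩

lemma mask18_bits : ∀ i : Fin 18, (262143:ℕ).testBit i.val = true := by decide

def mdiff (a b : ℕ) : ℕ := a &&& (b ^^^ 262143)

lemma mdiff_bits (a b : ℕ) (i : Fin 18) :
    (mdiff a b).testBit i.val = (a.testBit i.val && !(b.testBit i.val)) := by
  simp [mdiff, Nat.testBit_land, Nat.testBit_xor, mask18_bits i]

lemma F_diff (a b : ℕ) : F a \ F b = F (mdiff a b) := by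
  ext x
  simp only [Set.mem_diff, mem_F]
  constructor
  · rintro ⟨⟨i, hb, hx⟩, hnot⟩
    have hbneq : b.testBit i.val = false := by
      by_contra hc
      exact hnot ⟨i, by simpa using hc, hx⟩
    exact ⟨i, by rw [mdiff_bits, hb, hbneq]; rfl, hx⟩
  · rintro ⟨i, hb, hx⟩
    rw [mdiff_bits] at hb
    have hb1 : a.testBit i.val = true := by
      cases h : a.testBit i.val
      · rw [h] at hb; simp at hb
      · rfl
    have hbf : b.testBit i.val = false := by
      cases h : b.testBit i.val
      · rfl
      · rw [h, hb1] at hb; simp at hb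
    refine ⟨⟨i, hb1, hx⟩, ?_⟩
    rintro ⟨j, hb', hx'⟩
    have hij : i = j := by
      by_contra hc
      exact (Cdisj i j hc).le_bot ⟨hx, hx'⟩
    subst hij
    rw [hbf] at hb'
    exact Bool.false_ne_true hb'

lemma F_nonempty {m : ℕ} (i : Fin 18) (h : m.testBit i.val = true) : (F m).Nonempty := by
  obtain ⟨x, hx⟩ := Cne i
  exact ⟨x, mem_F.2 ⟨i, h, hx⟩⟩

lemma F_inj {a b : ℕ} (ha : a < 262144) (hb : b < 262144) (h : F a = F b) : a = b := by
  apply Nat.eq_of_testBit_eq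
  intro i
  by_cases hi : i < 18
  · set fi : Fin 18 := ⟨i, hi⟩
    have key : ∀ u v : ℕ, F u = F v → u.testBit i = true → v.testBit i = true := by
      intro u v huv hu
      obtain ⟨x, hx⟩ := Cne fi
      have : x ∈ F v := huv ▸ mem_F.2 ⟨fi, hu, hx⟩
      obtain ⟨j, hj, hxj⟩ := mem_F.1 this
      have hij : fi = j := by
        by_contra hc
        exact (Cdisj fi j hc).le_bot ⟨hx, hxj⟩
      rw [← hij] at hj
      exact hj
    cases hu : a.testBit i
    · cases hv : b.testBit i
      · rfl
      · exact absurd (key b a h.symm hv) (by simp [hu])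
    · exact (key a b h hu).symm
  · push_neg at hi
    have h2 : (2:ℕ)^18 ≤ 2^i := Nat.pow_le_pow_right (by norm_num) hi
    rw [Nat.testBit_lt_two_pow (by omega), Nat.testBit_lt_two_pow (by omega)]

lemma F_eq_1 : F 1 = ({0}:Set ℝ) := by
  ext x
  rw [mem_F]
  constructor
  · rintro ⟨j, hb, hx⟩
    fin_cases j
    · exact hx
    · exact absurd hb (by decide)
    · exact absurd hb (by decide)
    · exact absurd hb (by decide)
    · exact absurd hb (by decide)
    · exact absurd hb (by decide)
    · exact absurd hb (by decide)
    · exact absurd hb (by decide)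
    · exact absurd hb (by decide)
    · exact absurd hb (by decide)
    · exact absurd hb (by decide)
    · exact absurd hb (by decide)
    · exact absurd hb (by decide)
    · exact absurd hb (by decide)
    · exact absurd hb (by decide)
    · exact absurd hb (by decide)
    · exact absurd hb (by decide)
    · exact absurd hb (by decide)
  · intro hx
    exact ⟨0, by decide, hx⟩
lemma F_eq_2 : F 2 = ({1}:Set ℝ) := by
  ext x
  rw [mem_F]
  constructor
  · rintro ⟨j, hb, hx⟩
    fin_cases j
    · exact absurd hb (by decide)
    · exact hx
    · exact absurd hb (by decide)
    · exact absurd hb (by decide)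
    · exact absurd hb (by decide)
    · exact absurd hb (by decide)
    · exact absurd hb (by decide)
    · exact absurd hb (by decide)
    · exact absurd hb (by decide)
    · exact absurd hb (by decide)
    · exact absurd hb (by decide)
    · exact absurd hb (by decide)
    · exact absurd hb (by decide)
    · exact absurd hb (by decide)
    · exact absurd hb (by decide)
    · exact absurd hb (by decide)
    · exact absurd hb (by decide)
    · exact absurd hb (by decide)
  · intro hx
    exact ⟨1, by decide, hx⟩
lemma F_eq_5 : F 5 = ({0}:Set ℝ) ∪ c2 := by
  ext x
  rw [mem_F]
  constructor
  · rintro ⟨j, hb, hx⟩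
    fin_cases j
    · exact Or.inl (hx)
    · exact absurd hb (by decide)
    · exact Or.inr hx
    · exact absurd hb (by decide)
    · exact absurd hb (by decide)
    · exact absurd hb (by decide)
    · exact absurd hb (by decide)
    · exact absurd hb (by decide)
    · exact absurd hb (by decide)
    · exact absurd hb (by decide)
    · exact absurd hb (by decide)
    · exact absurd hb (by decide)
    · exact absurd hb (by decide)
    · exact absurd hb (by decide)
    · exact absurd hb (by decide)
    · exact absurd hb (by decide)
    · exact absurd hb (by decide)
    · exact absurd hb (by decide)
  · rintro (hx | hx)
    · exact ⟨0, by decide, hx⟩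
    · exact ⟨2, by decide, hx⟩
lemma F_eq_15 : F 15 = ({0}:Set ℝ) ∪ ({1}:Set ℝ) ∪ c2 ∪ c3 := by
  ext x
  rw [mem_F]
  constructor
  · rintro ⟨j, hb, hx⟩
    fin_cases j
    · exact Or.inl (Or.inl (Or.inl (hx)))
    · exact Or.inl (Or.inl (Or.inr hx))
    · exact Or.inl (Or.inr hx)
    · exact Or.inr hx
    · exact absurd hb (by decide)
    · exact absurd hb (by decide)
    · exact absurd hb (by decide)
    · exact absurd hb (by decide)
    · exact absurd hb (by decide)
    · exact absurd hb (by decide)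
    · exact absurd hb (by decide)
    · exact absurd hb (by decide)
    · exact absurd hb (by decide)
    · exact absurd hb (by decide)
    · exact absurd hb (by decide)
    · exact absurd hb (by decide)
    · exact absurd hb (by decide)
    · exact absurd hb (by decide)
  · rintro (((hx | hx) | hx) | hx)
    · exact ⟨0, by decide, hx⟩
    · exact ⟨1, by decide, hx⟩
    · exact ⟨2, by decide, hx⟩
    · exact ⟨3, by decide, hx⟩
lemma F_eq_12 : F 12 = c2 ∪ c3 := by
  ext x
  rw [mem_F]
  constructor
  · rintro ⟨j, hb, hx⟩
    fin_cases j
    · exact absurd hb (by decide)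
    · exact absurd hb (by decide)
    · exact Or.inl (hx)
    · exact Or.inr hx
    · exact absurd hb (by decide)
    · exact absurd hb (by decide)
    · exact absurd hb (by decide)
    · exact absurd hb (by decide)
    · exact absurd hb (by decide)
    · exact absurd hb (by decide)
    · exact absurd hb (by decide)
    · exact absurd hb (by decide)
    · exact absurd hb (by decide)
    · exact absurd hb (by decide)
    · exact absurd hb (by decide)
    · exact absurd hb (by decide)
    · exact absurd hb (by decide)
    · exact absurd hb (by decide)
  · rintro (hx | hx)
    · exact ⟨2, by decide, hx⟩
    · exact ⟨3, by decide, hx⟩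
lemma F_eq_16 : F 16 = ({2}:Set ℝ) := by
  ext x
  rw [mem_F]
  constructor
  · rintro ⟨j, hb, hx⟩
    fin_cases j
    · exact absurd hb (by decide)
    · exact absurd hb (by decide)
    · exact absurd hb (by decide)
    · exact absurd hb (by decide)
    · exact hx
    · exact absurd hb (by decide)
    · exact absurd hb (by decide)
    · exact absurd hb (by decide)
    · exact absurd hb (by decide)
    · exact absurd hb (by decide)
    · exact absurd hb (by decide)
    · exact absurd hb (by decide)
    · exact absurd hb (by decide)
    · exact absurd hb (by decide)
    · exact absurd hb (by decide)
    · exact absurd hb (by decide)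
    · exact absurd hb (by decide)
    · exact absurd hb (by decide)
  · intro hx
    exact ⟨4, by decide, hx⟩
lemma F_eq_32 : F 32 = ({4}:Set ℝ) := by
  ext x
  rw [mem_F]
  constructor
  · rintro ⟨j, hb, hx⟩
    fin_cases j
    · exact absurd hb (by decide)
    · exact absurd hb (by decide)
    · exact absurd hb (by decide)
    · exact absurd hb (by decide)
    · exact absurd hb (by decide)
    · exact hx
    · exact absurd hb (by decide)
    · exact absurd hb (by decide)
    · exact absurd hb (by decide)
    · exact absurd hb (by decide)
    · exact absurd hb (by decide)
    · exact absurd hb (by decide)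
    · exact absurd hb (by decide)
    · exact absurd hb (by decide)
    · exact absurd hb (by decide)
    · exact absurd hb (by decide)
    · exact absurd hb (by decide)
    · exact absurd hb (by decide)
  · intro hx
    exact ⟨5, by decide, hx⟩
lemma F_eq_128 : F 128 = ({3}:Set ℝ) := by
  ext x
  rw [mem_F]
  constructor
  · rintro ⟨j, hb, hx⟩
    fin_cases j
    · exact absurd hb (by decide)
    · exact absurd hb (by decide)
    · exact absurd hb (by decide)
    · exact absurd hb (by decide)
    · exact absurd hb (by decide)
    · exact absurd hb (by decide)
    · exact absurd hb (by decide)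
    · exact hx
    · exact absurd hb (by decide)
    · exact absurd hb (by decide)
    · exact absurd hb (by decide)
    · exact absurd hb (by decide)
    · exact absurd hb (by decide)
    · exact absurd hb (by decide)
    · exact absurd hb (by decide)
    · exact absurd hb (by decide)
    · exact absurd hb (by decide)
    · exact absurd hb (by decide)
  · intro hx
    exact ⟨7, by decide, hx⟩
lemma F_eq_192 : F 192 = ({3}:Set ℝ) ∪ c6 := by
  ext x
  rw [mem_F]
  constructor
  · rintro ⟨j, hb, hx⟩
    fin_cases j
    · exact absurd hb (by decide)
    · exact absurd hb (by decide)
    · exact absurd hb (by decide)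
    · exact absurd hb (by decide)
    · exact absurd hb (by decide)
    · exact absurd hb (by decide)
    · exact Or.inr hx
    · exact Or.inl (hx)
    · exact absurd hb (by decide)
    · exact absurd hb (by decide)
    · exact absurd hb (by decide)
    · exact absurd hb (by decide)
    · exact absurd hb (by decide)
    · exact absurd hb (by decide)
    · exact absurd hb (by decide)
    · exact absurd hb (by decide)
    · exact absurd hb (by decide)
    · exact absurd hb (by decide)
  · rintro (hx | hx)
    · exact ⟨7, by decide, hx⟩
    · exact ⟨6, by decide, hx⟩
lemma F_eq_496 : F 496 = ({2}:Set ℝ) ∪ ({3}:Set ℝ) ∪ ({4}:Set ℝ) ∪ c6 ∪ c8 := by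
  ext x
  rw [mem_F]
  constructor
  · rintro ⟨j, hb, hx⟩
    fin_cases j
    · exact absurd hb (by decide)
    · exact absurd hb (by decide)
    · exact absurd hb (by decide)
    · exact absurd hb (by decide)
    · exact Or.inl (Or.inl (Or.inl (Or.inl (hx))))
    · exact Or.inl (Or.inl (Or.inr hx))
    · exact Or.inl (Or.inr hx)
    · exact Or.inl (Or.inl (Or.inl (Or.inr hx)))
    · exact Or.inr hx
    · exact absurd hb (by decide)
    · exact absurd hb (by decide)
    · exact absurd hb (by decide)
    · exact absurd hb (by decide)
    · exact absurd hb (by decide)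
    · exact absurd hb (by decide)
    · exact absurd hb (by decide)
    · exact absurd hb (by decide)
    · exact absurd hb (by decide)
  · rintro ((((hx | hx) | hx) | hx) | hx)
    · exact ⟨4, by decide, hx⟩
    · exact ⟨7, by decide, hx⟩
    · exact ⟨5, by decide, hx⟩
    · exact ⟨6, by decide, hx⟩
    · exact ⟨8, by decide, hx⟩
lemma F_eq_448 : F 448 = ({3}:Set ℝ) ∪ c6 ∪ c8 := by
  ext x
  rw [mem_F]
  constructor
  · rintro ⟨j, hb, hx⟩
    fin_cases j
    · exact absurd hb (by decide)
    · exact absurd hb (by decide)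
    · exact absurd hb (by decide)
    · exact absurd hb (by decide)
    · exact absurd hb (by decide)
    · exact absurd hb (by decide)
    · exact Or.inl (Or.inr hx)
    · exact Or.inl (Or.inl (hx))
    · exact Or.inr hx
    · exact absurd hb (by decide)
    · exact absurd hb (by decide)
    · exact absurd hb (by decide)
    · exact absurd hb (by decide)
    · exact absurd hb (by decide)
    · exact absurd hb (by decide)
    · exact absurd hb (by decide)
    · exact absurd hb (by decide)
    · exact absurd hb (by decide)
  · rintro ((hx | hx) | hx)
    · exact ⟨7, by decide, hx⟩
    · exact ⟨6, by decide, hx⟩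
    · exact ⟨8, by decide, hx⟩
lemma F_eq_512 : F 512 = ({5}:Set ℝ) := by
  ext x
  rw [mem_F]
  constructor
  · rintro ⟨j, hb, hx⟩
    fin_cases j
    · exact absurd hb (by decide)
    · exact absurd hb (by decide)
    · exact absurd hb (by decide)
    · exact absurd hb (by decide)
    · exact absurd hb (by decide)
    · exact absurd hb (by decide)
    · exact absurd hb (by decide)
    · exact absurd hb (by decide)
    · exact absurd hb (by decide)
    · exact hx
    · exact absurd hb (by decide)
    · exact absurd hb (by decide)
    · exact absurd hb (by decide)
    · exact absurd hb (by decide)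
    · exact absurd hb (by decide)
    · exact absurd hb (by decide)
    · exact absurd hb (by decide)
    · exact absurd hb (by decide)
  · intro hx
    exact ⟨9, by decide, hx⟩
lemma F_eq_1024 : F 1024 = ({6}:Set ℝ) := by
  ext x
  rw [mem_F]
  constructor
  · rintro ⟨j, hb, hx⟩
    fin_cases j
    · exact absurd hb (by decide)
    · exact absurd hb (by decide)
    · exact absurd hb (by decide)
    · exact absurd hb (by decide)
    · exact absurd hb (by decide)
    · exact absurd hb (by decide)
    · exact absurd hb (by decide)
    · exact absurd hb (by decide)
    · exact absurd hb (by decide)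
    · exact absurd hb (by decide)
    · exact hx
    · exact absurd hb (by decide)
    · exact absurd hb (by decide)
    · exact absurd hb (by decide)
    · exact absurd hb (by decide)
    · exact absurd hb (by decide)
    · exact absurd hb (by decide)
    · exact absurd hb (by decide)
  · intro hx
    exact ⟨10, by decide, hx⟩
lemma F_eq_2048 : F 2048 = ({7}:Set ℝ) := by
  ext x
  rw [mem_F]
  constructor
  · rintro ⟨j, hb, hx⟩
    fin_cases j
    · exact absurd hb (by decide)
    · exact absurd hb (by decide)
    · exact absurd hb (by decide)
    · exact absurd hb (by decide)
    · exact absurd hb (by decide)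
    · exact absurd hb (by decide)
    · exact absurd hb (by decide)
    · exact absurd hb (by decide)
    · exact absurd hb (by decide)
    · exact absurd hb (by decide)
    · exact absurd hb (by decide)
    · exact hx
    · exact absurd hb (by decide)
    · exact absurd hb (by decide)
    · exact absurd hb (by decide)
    · exact absurd hb (by decide)
    · exact absurd hb (by decide)
    · exact absurd hb (by decide)
  · intro hx
    exact ⟨11, by decide, hx⟩
lemma F_eq_212480 : F 212480 = ({5}:Set ℝ) ∪ ({6}:Set ℝ) ∪ ({7}:Set ℝ) ∪ (OO ∩ Qs) ∪ (OO \ Qs) ∪ AA ∪ BB := by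
  ext x
  rw [mem_F]
  constructor
  · rintro ⟨j, hb, hx⟩
    fin_cases j
    · exact absurd hb (by decide)
    · exact absurd hb (by decide)
    · exact absurd hb (by decide)
    · exact absurd hb (by decide)
    · exact absurd hb (by decide)
    · exact absurd hb (by decide)
    · exact absurd hb (by decide)
    · exact absurd hb (by decide)
    · exact absurd hb (by decide)
    · exact Or.inl (Or.inl (Or.inl (Or.inl (Or.inl (Or.inl (hx))))))
    · exact Or.inl (Or.inl (Or.inl (Or.inl (Or.inl (Or.inr hx)))))
    · exact Or.inl (Or.inl (Or.inl (Or.inl (Or.inr hx))))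
    · exact Or.inl (Or.inl (Or.inl (Or.inr hx)))
    · exact Or.inl (Or.inl (Or.inr hx))
    · exact absurd hb (by decide)
    · exact absurd hb (by decide)
    · exact Or.inl (Or.inr hx)
    · exact Or.inr hx
  · rintro ((((((hx | hx) | hx) | hx) | hx) | hx) | hx)
    · exact ⟨9, by decide, hx⟩
    · exact ⟨10, by decide, hx⟩
    · exact ⟨11, by decide, hx⟩
    · exact ⟨12, by decide, hx⟩
    · exact ⟨13, by decide, hx⟩
    · exact ⟨16, by decide, hx⟩
    · exact ⟨17, by decide, hx⟩
lemma F_eq_246784 : F 246784 = ({6}:Set ℝ) ∪ (V ∩ Qs) ∪ (V \ Qs) ∪ AA ∪ BB := by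
  ext x
  rw [mem_F]
  constructor
  · rintro ⟨j, hb, hx⟩
    fin_cases j
    · exact absurd hb (by decide)
    · exact absurd hb (by decide)
    · exact absurd hb (by decide)
    · exact absurd hb (by decide)
    · exact absurd hb (by decide)
    · exact absurd hb (by decide)
    · exact absurd hb (by decide)
    · exact absurd hb (by decide)
    · exact absurd hb (by decide)
    · exact absurd hb (by decide)
    · exact Or.inl (Or.inl (Or.inl (Or.inl (hx))))
    · exact absurd hb (by decide)
    · exact absurd hb (by decide)
    · exact absurd hb (by decide)
    · exact Or.inl (Or.inl (Or.inl (Or.inr hx)))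
    · exact Or.inl (Or.inl (Or.inr hx))
    · exact Or.inl (Or.inr hx)
    · exact Or.inr hx
  · rintro ((((hx | hx) | hx) | hx) | hx)
    · exact ⟨10, by decide, hx⟩
    · exact ⟨14, by decide, hx⟩
    · exact ⟨15, by decide, hx⟩
    · exact ⟨16, by decide, hx⟩
    · exact ⟨17, by decide, hx⟩
lemma F_eq_66560 : F 66560 = ({6}:Set ℝ) ∪ AA := by
  ext x
  rw [mem_F]
  constructor
  · rintro ⟨j, hb, hx⟩
    fin_cases j
    · exact absurd hb (by decide)
    · exact absurd hb (by decide)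
    · exact absurd hb (by decide)
    · exact absurd hb (by decide)
    · exact absurd hb (by decide)
    · exact absurd hb (by decide)
    · exact absurd hb (by decide)
    · exact absurd hb (by decide)
    · exact absurd hb (by decide)
    · exact absurd hb (by decide)
    · exact Or.inl (hx)
    · exact absurd hb (by decide)
    · exact absurd hb (by decide)
    · exact absurd hb (by decide)
    · exact absurd hb (by decide)
    · exact absurd hb (by decide)
    · exact Or.inr hx
    · exact absurd hb (by decide)
  · rintro (hx | hx)
    · exact ⟨10, by decide, hx⟩
    · exact ⟨16, by decide, hx⟩
lemma F_eq_132096 : F 132096 = ({6}:Set ℝ) ∪ BB := by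
  ext x
  rw [mem_F]
  constructor
  · rintro ⟨j, hb, hx⟩
    fin_cases j
    · exact absurd hb (by decide)
    · exact absurd hb (by decide)
    · exact absurd hb (by decide)
    · exact absurd hb (by decide)
    · exact absurd hb (by decide)
    · exact absurd hb (by decide)
    · exact absurd hb (by decide)
    · exact absurd hb (by decide)
    · exact absurd hb (by decide)
    · exact absurd hb (by decide)
    · exact Or.inl (hx)
    · exact absurd hb (by decide)
    · exact absurd hb (by decide)
    · exact absurd hb (by decide)
    · exact absurd hb (by decide)
    · exact absurd hb (by decide)
    · exact absurd hb (by decide)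
    · exact Or.inr hx
  · rintro (hx | hx)
    · exact ⟨10, by decide, hx⟩
    · exact ⟨17, by decide, hx⟩
lemma F_eq_49152 : F 49152 = (V ∩ Qs) ∪ (V \ Qs) := by
  ext x
  rw [mem_F]
  constructor
  · rintro ⟨j, hb, hx⟩
    fin_cases j
    · exact absurd hb (by decide)
    · exact absurd hb (by decide)
    · exact absurd hb (by decide)
    · exact absurd hb (by decide)
    · exact absurd hb (by decide)
    · exact absurd hb (by decide)
    · exact absurd hb (by decide)
    · exact absurd hb (by decide)
    · exact absurd hb (by decide)
    · exact absurd hb (by decide)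
    · exact absurd hb (by decide)
    · exact absurd hb (by decide)
    · exact absurd hb (by decide)
    · exact absurd hb (by decide)
    · exact Or.inl (hx)
    · exact Or.inr hx
    · exact absurd hb (by decide)
    · exact absurd hb (by decide)
  · rintro (hx | hx)
    · exact ⟨14, by decide, hx⟩
    · exact ⟨15, by decide, hx⟩
lemma F_eq_261632 : F 261632 = ({5}:Set ℝ) ∪ ({6}:Set ℝ) ∪ ({7}:Set ℝ) ∪ (OO ∩ Qs) ∪ (OO \ Qs) ∪ (V ∩ Qs) ∪ (V \ Qs) ∪ AA ∪ BB := by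
  ext x
  rw [mem_F]
  constructor
  · rintro ⟨j, hb, hx⟩
    fin_cases j
    · exact absurd hb (by decide)
    · exact absurd hb (by decide)
    · exact absurd hb (by decide)
    · exact absurd hb (by decide)
    · exact absurd hb (by decide)
    · exact absurd hb (by decide)
    · exact absurd hb (by decide)
    · exact absurd hb (by decide)
    · exact absurd hb (by decide)
    · exact Or.inl (Or.inl (Or.inl (Or.inl (Or.inl (Or.inl (Or.inl (Or.inl (hx))))))))
    · exact Or.inl (Or.inl (Or.inl (Or.inl (Or.inl (Or.inl (Or.inl (Or.inr hx)))))))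
    · exact Or.inl (Or.inl (Or.inl (Or.inl (Or.inl (Or.inl (Or.inr hx))))))
    · exact Or.inl (Or.inl (Or.inl (Or.inl (Or.inl (Or.inr hx)))))
    · exact Or.inl (Or.inl (Or.inl (Or.inl (Or.inr hx))))
    · exact Or.inl (Or.inl (Or.inl (Or.inr hx)))
    · exact Or.inl (Or.inl (Or.inr hx))
    · exact Or.inl (Or.inr hx)
    · exact Or.inr hx
  · rintro ((((((((hx | hx) | hx) | hx) | hx) | hx) | hx) | hx) | hx)
    · exact ⟨9, by decide, hx⟩
    · exact ⟨10, by decide, hx⟩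
    · exact ⟨11, by decide, hx⟩
    · exact ⟨12, by decide, hx⟩
    · exact ⟨13, by decide, hx⟩
    · exact ⟨14, by decide, hx⟩
    · exact ⟨15, by decide, hx⟩
    · exact ⟨16, by decide, hx⟩
    · exact ⟨17, by decide, hx⟩
lemma F_eq_259072 : F 259072 = ({6}:Set ℝ) ∪ (OO ∩ Qs) ∪ (OO \ Qs) ∪ (V ∩ Qs) ∪ (V \ Qs) ∪ AA ∪ BB := by
  ext x
  rw [mem_F]
  constructor
  · rintro ⟨j, hb, hx⟩
    fin_cases j
    · exact absurd hb (by decide)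
    · exact absurd hb (by decide)
    · exact absurd hb (by decide)
    · exact absurd hb (by decide)
    · exact absurd hb (by decide)
    · exact absurd hb (by decide)
    · exact absurd hb (by decide)
    · exact absurd hb (by decide)
    · exact absurd hb (by decide)
    · exact absurd hb (by decide)
    · exact Or.inl (Or.inl (Or.inl (Or.inl (Or.inl (Or.inl (hx))))))
    · exact absurd hb (by decide)
    · exact Or.inl (Or.inl (Or.inl (Or.inl (Or.inl (Or.inr hx)))))
    · exact Or.inl (Or.inl (Or.inl (Or.inl (Or.inr hx))))
    · exact Or.inl (Or.inl (Or.inl (Or.inr hx)))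
    · exact Or.inl (Or.inl (Or.inr hx))
    · exact Or.inl (Or.inr hx)
    · exact Or.inr hx
  · rintro ((((((hx | hx) | hx) | hx) | hx) | hx) | hx)
    · exact ⟨10, by decide, hx⟩
    · exact ⟨12, by decide, hx⟩
    · exact ⟨13, by decide, hx⟩
    · exact ⟨14, by decide, hx⟩
    · exact ⟨15, by decide, hx⟩
    · exact ⟨16, by decide, hx⟩
    · exact ⟨17, by decide, hx⟩
lemma F_eq_187798 : F 187798 = ({1}:Set ℝ) ∪ c2 ∪ ({2}:Set ℝ) ∪ ({3}:Set ℝ) ∪ c8 ∪ ({6}:Set ℝ) ∪ ({7}:Set ℝ) ∪ (OO ∩ Qs) ∪ (V ∩ Qs) ∪ (V \ Qs) ∪ BB := by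
  ext x
  rw [mem_F]
  constructor
  · rintro ⟨j, hb, hx⟩
    fin_cases j
    · exact absurd hb (by decide)
    · exact Or.inl (Or.inl (Or.inl (Or.inl (Or.inl (Or.inl (Or.inl (Or.inl (Or.inl (Or.inl (hx))))))))))
    · exact Or.inl (Or.inl (Or.inl (Or.inl (Or.inl (Or.inl (Or.inl (Or.inl (Or.inl (Or.inr hx)))))))))
    · exact absurd hb (by decide)
    · exact Or.inl (Or.inl (Or.inl (Or.inl (Or.inl (Or.inl (Or.inl (Or.inl (Or.inr hx))))))))
    · exact absurd hb (by decide)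
    · exact absurd hb (by decide)
    · exact Or.inl (Or.inl (Or.inl (Or.inl (Or.inl (Or.inl (Or.inl (Or.inr hx)))))))
    · exact Or.inl (Or.inl (Or.inl (Or.inl (Or.inl (Or.inl (Or.inr hx))))))
    · exact absurd hb (by decide)
    · exact Or.inl (Or.inl (Or.inl (Or.inl (Or.inl (Or.inr hx)))))
    · exact Or.inl (Or.inl (Or.inl (Or.inl (Or.inr hx))))
    · exact Or.inl (Or.inl (Or.inl (Or.inr hx)))
    · exact absurd hb (by decide)
    · exact Or.inl (Or.inl (Or.inr hx))
    · exact Or.inl (Or.inr hx)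
    · exact absurd hb (by decide)
    · exact Or.inr hx
  · rintro ((((((((((hx | hx) | hx) | hx) | hx) | hx) | hx) | hx) | hx) | hx) | hx)
    · exact ⟨1, by decide, hx⟩
    · exact ⟨2, by decide, hx⟩
    · exact ⟨4, by decide, hx⟩
    · exact ⟨7, by decide, hx⟩
    · exact ⟨8, by decide, hx⟩
    · exact ⟨10, by decide, hx⟩
    · exact ⟨11, by decide, hx⟩
    · exact ⟨12, by decide, hx⟩
    · exact ⟨14, by decide, hx⟩
    · exact ⟨15, by decide, hx⟩
    · exact ⟨17, by decide, hx⟩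

lemma Icc57_partition : Set.Icc (5:ℝ) 7 =
    ({5}:Set ℝ) ∪ ({6}:Set ℝ) ∪ ({7}:Set ℝ) ∪ (OO ∩ Qs) ∪ (OO \ Qs) ∪ (V ∩ Qs) ∪ (V \ Qs) ∪ AA ∪ BB := by
  apply Set.Subset.antisymm
  · intro x hx
    rw [Icc57_eq] at hx
    rcases hx with (rfl | rfl) | hIoo
    · exact Or.inl (Or.inl (Or.inl (Or.inl (Or.inl (Or.inl (Or.inl (Or.inl rfl)))))))
    · exact Or.inl (Or.inl (Or.inl (Or.inl (Or.inl (Or.inl (Or.inr rfl))))))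
    · rw [Ioo57_eq] at hIoo
      rcases hIoo with hO | hK
      · by_cases hq : x ∈ Qs
        · exact Or.inl (Or.inl (Or.inl (Or.inl (Or.inl (Or.inr ⟨hO, hq⟩)))))
        · exact Or.inl (Or.inl (Or.inl (Or.inl (Or.inr ⟨hO, hq⟩))))
      · rw [KK_partition] at hK
        rcases hK with ((h6 | hV) | hA) | hB
        · exact Or.inl (Or.inl (Or.inl (Or.inl (Or.inl (Or.inl (Or.inl (Or.inr h6)))))))
        · by_cases hq : x ∈ Qs
          · exact Or.inl (Or.inl (Or.inl (Or.inr ⟨hV, hq⟩)))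
          · exact Or.inl (Or.inl (Or.inr ⟨hV, hq⟩))
        · exact Or.inl (Or.inr hA)
        · exact Or.inr hB
  · rintro x ((((((((rfl | rfl) | rfl) | h) | h) | h) | h) | h) | h)
    · norm_num
    · norm_num
    · norm_num
    · exact sub_12 h
    · exact sub_13 h
    · exact sub_14 h
    · exact sub_15 h
    · exact sub_16 h
    · exact sub_17 h

lemma Ioo57_partition : Set.Ioo (5:ℝ) 7 =
    ({6}:Set ℝ) ∪ (OO ∩ Qs) ∪ (OO \ Qs) ∪ (V ∩ Qs) ∪ (V \ Qs) ∪ AA ∪ BB := by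
  apply Set.Subset.antisymm
  · intro x hx
    rw [Ioo57_eq] at hx
    rcases hx with hO | hK
    · by_cases hq : x ∈ Qs
      · exact Or.inl (Or.inl (Or.inl (Or.inl (Or.inl (Or.inr ⟨hO, hq⟩)))))
      · exact Or.inl (Or.inl (Or.inl (Or.inl (Or.inr ⟨hO, hq⟩))))
    · rw [KK_partition] at hK
      rcases hK with ((h6 | hV) | hA) | hB
      · exact Or.inl (Or.inl (Or.inl (Or.inl (Or.inl (Or.inl h6)))))
      · by_cases hq : x ∈ Qs
        · exact Or.inl (Or.inl (Or.inl (Or.inr ⟨hV, hq⟩)))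
        · exact Or.inl (Or.inl (Or.inr ⟨hV, hq⟩))
      · exact Or.inl (Or.inr hA)
      · exact Or.inr hB
  · rintro x ((((((rfl | h) | h) | h) | h) | h) | h)
    · norm_num
    · exact (OO_sub_Ioo h.1)
    · exact (OO_sub_Ioo h.1)
    · exact (V_sub_Ioo h.1)
    · exact (V_sub_Ioo h.1)
    · exact (AA_sub_Ioo h)
    · exact (BB_sub_Ioo h)

lemma FIcc01 : F 15 = Set.Icc 0 1 := F_eq_15.trans Icc01_eq.symm
lemma FIoo01 : F 12 = Set.Ioo 0 1 := F_eq_12.trans Ioo01_eq.symm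
lemma FIcc24 : F 496 = Set.Icc 2 4 := F_eq_496.trans Icc24_eq.symm
lemma FIoo24 : F 448 = Set.Ioo 2 4 := F_eq_448.trans Ioo24_eq.symm
lemma FIcc57 : F 261632 = Set.Icc 5 7 := F_eq_261632.trans Icc57_partition.symm
lemma FIoo57 : F 259072 = Set.Ioo 5 7 := F_eq_259072.trans Ioo57_partition.symm
lemma FV : F 49152 = V := F_eq_49152.trans (Set.inter_union_diff V Qs)

lemma FKK : F 246784 = KK := by
  rw [F_eq_246784, KK_partition]
  rw [show ({6}:Set ℝ) ∪ (V ∩ Qs) ∪ (V \ Qs) = {6} ∪ V from by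
    rw [Set.union_assoc, Set.inter_union_diff]]

lemma FIccV : F 212480 = Set.Icc 5 7 \ V := by
  have h := F_diff 261632 49152
  rw [FIcc57, FV] at h
  rw [h]
  congr 1

def clb : ℕ → ℕ
  | 0 => 1 | 1 => 2 | 2 => 5 | 3 => 15 | 4 => 16 | 5 => 32 | 6 => 192 | 7 => 128
  | 8 => 496 | 9 => 512 | 10 => 1024 | 11 => 2048 | 12 => 212480 | 13 => 212480
  | 14 => 246784 | 15 => 246784 | 16 => 66560 | _ => 132096

lemma clC : ∀ i : Fin 18, closure (C i) = F (clb i.val) := by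
  intro i
  fin_cases i
  · show closure ({0}:Set ℝ) = F 1
    rw [closure_singleton, F_eq_1]
  · show closure ({1}:Set ℝ) = F 2
    rw [closure_singleton, F_eq_2]
  · show closure c2 = F 5
    rw [closure_c2, F_eq_5, Set.insert_eq]
  · show closure c3 = F 15
    rw [closure_c3, FIcc01]
  · show closure ({2}:Set ℝ) = F 16
    rw [closure_singleton, F_eq_16]
  · show closure ({4}:Set ℝ) = F 32
    rw [closure_singleton, F_eq_32]
  · show closure c6 = F 192
    rw [closure_c6, F_eq_192, Set.insert_eq]
  · show closure ({3}:Set ℝ) = F 128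
    rw [closure_singleton, F_eq_128]
  · show closure c8 = F 496
    rw [closure_c8, FIcc24]
  · show closure ({5}:Set ℝ) = F 512
    rw [closure_singleton, F_eq_512]
  · show closure ({6}:Set ℝ) = F 1024
    rw [closure_singleton, F_eq_1024]
  · show closure ({7}:Set ℝ) = F 2048
    rw [closure_singleton, F_eq_2048]
  · show closure (OO ∩ Qs) = F 212480
    rw [closure_c12, FIccV]
  · show closure (OO \ Qs) = F 212480
    rw [closure_c13, FIccV]
  · show closure (V ∩ Qs) = F 246784
    rw [closure_c14, FKK]
  · show closure (V \ Qs) = F 246784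
    rw [closure_c15, FKK]
  · show closure AA = F 66560
    rw [closure_AA, F_eq_66560, Set.insert_eq]
  · show closure BB = F 132096
    rw [closure_BB, F_eq_132096, Set.insert_eq]

lemma creg1 : ∀ i : Fin 18, (15:ℕ).testBit i.val = true → C i ⊆ Set.Icc 0 1 := by
  intro i
  fin_cases i <;> intro h <;>
    first
    | exact absurd h (by decide)
    | exact sub_0
    | exact sub_1
    | exact sub_2
    | exact sub_3
    | exact sub_4
    | exact sub_5
    | exact sub_6
    | exact sub_7
    | exact sub_8
    | exact sub_9
    | exact sub_10
    | exact sub_11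
    | exact sub_12
    | exact sub_13
    | exact sub_14
    | exact sub_15
    | exact sub_16
    | exact sub_17

lemma creg2 : ∀ i : Fin 18, (496:ℕ).testBit i.val = true → C i ⊆ Set.Icc 2 4 := by
  intro i
  fin_cases i <;> intro h <;>
    first
    | exact absurd h (by decide)
    | exact sub_0
    | exact sub_1
    | exact sub_2
    | exact sub_3
    | exact sub_4
    | exact sub_5
    | exact sub_6
    | exact sub_7
    | exact sub_8
    | exact sub_9
    | exact sub_10
    | exact sub_11
    | exact sub_12
    | exact sub_13
    | exact sub_14
    | exact sub_15
    | exact sub_16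
    | exact sub_17

lemma creg3 : ∀ i : Fin 18, (261632:ℕ).testBit i.val = true → C i ⊆ Set.Icc 5 7 := by
  intro i
  fin_cases i <;> intro h <;>
    first
    | exact absurd h (by decide)
    | exact sub_0
    | exact sub_1
    | exact sub_2
    | exact sub_3
    | exact sub_4
    | exact sub_5
    | exact sub_6
    | exact sub_7
    | exact sub_8
    | exact sub_9
    | exact sub_10
    | exact sub_11
    | exact sub_12
    | exact sub_13
    | exact sub_14
    | exact sub_15
    | exact sub_16
    | exact sub_17


def tb (m i : ℕ) : ℕ := if m.testBit i then clb i else 0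

def clB (m : ℕ) : ℕ :=
  tb m 0 ||| (tb m 1 ||| (tb m 2 ||| (tb m 3 ||| (tb m 4 ||| (tb m 5 ||| (tb m 6 |||
  (tb m 7 ||| (tb m 8 ||| (tb m 9 ||| (tb m 10 ||| (tb m 11 ||| (tb m 12 ||| (tb m 13 |||
  (tb m 14 ||| (tb m 15 ||| (tb m 16 ||| tb m 17))))))))))))))))

lemma tb_bits (m i j : ℕ) : (tb m i).testBit j = (m.testBit i && (clb i).testBit j) := by
  unfold tb
  split
  · rename_i h; rw [h]; simp
  · rename_i h; rw [Bool.not_eq_true] at h; rw [h]; simp [Nat.zero_testBit]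

lemma testBit_clB {m j : ℕ} : (clB m).testBit j = true ↔
    ∃ i : Fin 18, m.testBit i.val = true ∧ (clb i.val).testBit j = true := by
  simp only [clB, Nat.testBit_lor, tb_bits, Bool.or_eq_true, Bool.and_eq_true]
  constructor
  · rintro (h | (h | (h | (h | (h | (h | (h | (h | (h | (h | (h | (h | (h | (h | (h | (h | (h | (h))))))))))))))))))
    exacts [⟨0, h⟩, ⟨1, h⟩, ⟨2, h⟩, ⟨3, h⟩, ⟨4, h⟩, ⟨5, h⟩, ⟨6, h⟩, ⟨7, h⟩, ⟨8, h⟩, ⟨9, h⟩, ⟨10, h⟩, ⟨11, h⟩, ⟨12, h⟩, ⟨13, h⟩, ⟨14, h⟩, ⟨15, h⟩, ⟨16, h⟩, ⟨17, h⟩]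
  · rintro ⟨i, h⟩
    fin_cases i
    · exact Or.inl h
    · exact Or.inr (Or.inl h)
    · exact Or.inr (Or.inr (Or.inl h))
    · exact Or.inr (Or.inr (Or.inr (Or.inl h)))
    · exact Or.inr (Or.inr (Or.inr (Or.inr (Or.inl h))))
    · exact Or.inr (Or.inr (Or.inr (Or.inr (Or.inr (Or.inl h)))))
    · exact Or.inr (Or.inr (Or.inr (Or.inr (Or.inr (Or.inr (Or.inl h))))))
    · exact Or.inr (Or.inr (Or.inr (Or.inr (Or.inr (Or.inr (Or.inr (Or.inl h)))))))
    · exact Or.inr (Or.inr (Or.inr (Or.inr (Or.inr (Or.inr (Or.inr (Or.inr (Or.inl h))))))))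
    · exact Or.inr (Or.inr (Or.inr (Or.inr (Or.inr (Or.inr (Or.inr (Or.inr (Or.inr (Or.inl h)))))))))
    · exact Or.inr (Or.inr (Or.inr (Or.inr (Or.inr (Or.inr (Or.inr (Or.inr (Or.inr (Or.inr (Or.inl h))))))))))
    · exact Or.inr (Or.inr (Or.inr (Or.inr (Or.inr (Or.inr (Or.inr (Or.inr (Or.inr (Or.inr (Or.inr (Or.inl h)))))))))))
    · exact Or.inr (Or.inr (Or.inr (Or.inr (Or.inr (Or.inr (Or.inr (Or.inr (Or.inr (Or.inr (Or.inr (Or.inr (Or.inl h))))))))))))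
    · exact Or.inr (Or.inr (Or.inr (Or.inr (Or.inr (Or.inr (Or.inr (Or.inr (Or.inr (Or.inr (Or.inr (Or.inr (Or.inr (Or.inl h)))))))))))))
    · exact Or.inr (Or.inr (Or.inr (Or.inr (Or.inr (Or.inr (Or.inr (Or.inr (Or.inr (Or.inr (Or.inr (Or.inr (Or.inr (Or.inr (Or.inl h))))))))))))))
    · exact Or.inr (Or.inr (Or.inr (Or.inr (Or.inr (Or.inr (Or.inr (Or.inr (Or.inr (Or.inr (Or.inr (Or.inr (Or.inr (Or.inr (Or.inr (Or.inl h)))))))))))))))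
    · exact Or.inr (Or.inr (Or.inr (Or.inr (Or.inr (Or.inr (Or.inr (Or.inr (Or.inr (Or.inr (Or.inr (Or.inr (Or.inr (Or.inr (Or.inr (Or.inr (Or.inl h))))))))))))))))
    · exact Or.inr (Or.inr (Or.inr (Or.inr (Or.inr (Or.inr (Or.inr (Or.inr (Or.inr (Or.inr (Or.inr (Or.inr (Or.inr (Or.inr (Or.inr (Or.inr (Or.inr (h)))))))))))))))))

lemma closure_cond (P : Prop) (s : Set ℝ) : closure (⋃ _ : P, s) = ⋃ _ : P, closure s := by
  by_cases h : P <;> simp [h]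

lemma closure_F (m : ℕ) : closure (F m) = F (clB m) := by
  have h1 : closure (F m) = ⋃ i : Fin 18, closure (⋃ _ : m.testBit i.val = true, C i) := by
    apply Set.Subset.antisymm
    · apply closure_minimal
      · exact Set.iUnion_mono fun i => subset_closure
      · exact isClosed_iUnion_of_finite fun i => isClosed_closure
    · exact Set.iUnion_subset fun i => closure_mono
        (Set.subset_iUnion (fun i : Fin 18 => ⋃ _ : m.testBit i.val = true, C i) i)
  rw [h1]
  ext x
  constructor
  · intro hx
    rw [Set.mem_iUnion] at hx
    obtain ⟨i, hx⟩ := hx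
    rw [closure_cond, Set.mem_iUnion] at hx
    obtain ⟨hb, hx⟩ := hx
    rw [clC i, mem_F] at hx
    obtain ⟨j, hbj, hx⟩ := hx
    exact mem_F.2 ⟨j, testBit_clB.2 ⟨i, hb, hbj⟩, hx⟩
  · intro hx
    obtain ⟨j, hb, hx⟩ := mem_F.1 hx
    obtain ⟨i, hi1, hi2⟩ := testBit_clB.1 hb
    rw [Set.mem_iUnion]
    refine ⟨i, ?_⟩
    rw [closure_cond, Set.mem_iUnion]
    exact ⟨hi1, by rw [clC i]; exact mem_F.2 ⟨j, hi2, hx⟩⟩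

lemma interior_union_three {X₁ X₂ X₃ : Set ℝ} (h₁ : X₁ ⊆ Set.Icc 0 1) (h₂ : X₂ ⊆ Set.Icc 2 4)
    (h₃ : X₃ ⊆ Set.Icc 5 7) :
    interior (X₁ ∪ X₂ ∪ X₃) = interior X₁ ∪ interior X₂ ∪ interior X₃ := by
  apply Set.Subset.antisymm
  · intro x hx
    rcases interior_subset hx with (hx1 | hx2) | hx3
    · refine Or.inl (Or.inl ?_)
      have hsub : interior (X₁ ∪ X₂ ∪ X₃) ∩ Set.Iio (3/2 : ℝ) ⊆ X₁ := by
        rintro y ⟨hy, hylt⟩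
        rcases interior_subset hy with (h | h) | h
        · exact h
        · exact absurd (h₂ h).1 (by rw [Set.mem_Iio] at hylt; intro hc; linarith)
        · exact absurd (h₃ h).1 (by rw [Set.mem_Iio] at hylt; intro hc; linarith)
      exact interior_maximal hsub (isOpen_interior.inter isOpen_Iio)
        ⟨hx, by rw [Set.mem_Iio]; have := (h₁ hx1).2; linarith⟩
    · refine Or.inl (Or.inr ?_)
      have hsub : interior (X₁ ∪ X₂ ∪ X₃) ∩ Set.Ioo (3/2 : ℝ) (9/2) ⊆ X₂ := by
        rintro y ⟨hy, hy1, hy2⟩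
        rcases interior_subset hy with (h | h) | h
        · exact absurd (h₁ h).2 (by intro hc; linarith)
        · exact h
        · exact absurd (h₃ h).1 (by intro hc; linarith)
      exact interior_maximal hsub (isOpen_interior.inter isOpen_Ioo)
        ⟨hx, ⟨by have := (h₂ hx2).1; linarith, by have := (h₂ hx2).2; linarith⟩⟩
    · refine Or.inr ?_
      have hsub : interior (X₁ ∪ X₂ ∪ X₃) ∩ Set.Ioi (9/2 : ℝ) ⊆ X₃ := by
        rintro y ⟨hy, hygt⟩
        rcases interior_subset hy with (h | h) | h
        · exact absurd (h₁ h).2 (by rw [Set.mem_Ioi] at hygt; intro hc; linarith)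
        · exact absurd (h₂ h).2 (by rw [Set.mem_Ioi] at hygt; intro hc; linarith)
        · exact h
      exact interior_maximal hsub (isOpen_interior.inter isOpen_Ioi)
        ⟨hx, by rw [Set.mem_Ioi]; have := (h₃ hx3).1; linarith⟩
  · refine Set.union_subset (Set.union_subset ?_ ?_) ?_
    · exact interior_mono (Set.subset_union_left.trans Set.subset_union_left)
    · exact interior_mono (Set.subset_union_right.trans Set.subset_union_left)
    · exact interior_mono Set.subset_union_right

lemma interior_subset_Icc {a b : ℝ} (hab : a < b) {X : Set ℝ} (hX : X ⊆ Set.Icc a b) :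
    interior X = Set.Ioo a b \ closure (Set.Icc a b \ X) := by
  have hcomp : Xᶜ = (Set.Icc a b)ᶜ ∪ (Set.Icc a b \ X) := by
    ext y
    by_cases hy : y ∈ Set.Icc a b
    · simp only [Set.mem_compl_iff, Set.mem_union, Set.mem_diff, hy]
      tauto
    · have hyx : y ∉ X := fun h => hy (hX h)
      simp only [Set.mem_compl_iff, Set.mem_union, Set.mem_diff, hy]
      tauto
  have h1 : interior X = (closure Xᶜ)ᶜ := by
    rw [closure_compl, compl_compl]
  have hc1 : (Set.Icc a b)ᶜ = Set.Iio a ∪ Set.Ioi b := by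
    ext y
    simp only [Set.mem_compl_iff, Set.mem_Icc, not_and_or, not_le, Set.mem_union,
      Set.mem_Iio, Set.mem_Ioi]
  have hc2 : Set.Iic a ∪ Set.Ici b = (Set.Ioo a b)ᶜ := by
    ext y
    simp only [Set.mem_union, Set.mem_Iic, Set.mem_Ici, Set.mem_compl_iff, Set.mem_Ioo,
      not_and_or, not_lt]
  have h2 : closure ((Set.Icc a b)ᶜ) = (Set.Ioo a b)ᶜ := by
    rw [hc1, closure_union, closure_Iio, closure_Ioi, hc2]
  rw [h1, hcomp, closure_union, h2, Set.compl_union, compl_compl]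
  exact (Set.diff_eq _ _).symm

lemma regbits : ∀ i : Fin 18,
    ((15:ℕ).testBit i.val || (496:ℕ).testBit i.val || (261632:ℕ).testBit i.val) = true := by
  decide

lemma bool_split {b x y z : Bool} (h : (x || y || z) = true) :
    b = ((b && x) || (b && y) || (b && z)) := by
  cases b <;> simp_all

lemma bool_mdiff {x b : Bool} : (x && !(b && x)) = (x && !b) := by
  cases x <;> cases b <;> rfl

lemma F_split (m : ℕ) : F m = F (m &&& 15) ∪ F (m &&& 496) ∪ F (m &&& 261632) := by
  rw [F_union, F_union]
  apply F_ext
  intro i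
  rw [Nat.testBit_lor, Nat.testBit_lor, Nat.testBit_land, Nat.testBit_land, Nat.testBit_land]
  exact bool_split (regbits i)

lemma Fland15_sub (m : ℕ) : F (m &&& 15) ⊆ Set.Icc 0 1 := by
  intro x hx
  obtain ⟨i, hb, hx⟩ := mem_F.1 hx
  rw [Nat.testBit_land, Bool.and_eq_true] at hb
  exact creg1 i hb.2 hx

lemma Fland496_sub (m : ℕ) : F (m &&& 496) ⊆ Set.Icc 2 4 := by
  intro x hx
  obtain ⟨i, hb, hx⟩ := mem_F.1 hx
  rw [Nat.testBit_land, Bool.and_eq_true] at hb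
  exact creg2 i hb.2 hx

lemma Fland2616_sub (m : ℕ) : F (m &&& 261632) ⊆ Set.Icc 5 7 := by
  intro x hx
  obtain ⟨i, hb, hx⟩ := mem_F.1 hx
  rw [Nat.testBit_land, Bool.and_eq_true] at hb
  exact creg3 i hb.2 hx

lemma mdiff_land (r m : ℕ) : F (mdiff r (m &&& r)) = F (mdiff r m) := by
  apply F_ext
  intro i
  rw [mdiff_bits, mdiff_bits, Nat.testBit_land]
  exact bool_mdiff

def intB (m : ℕ) : ℕ :=
  mdiff 12 (clB (mdiff 15 m)) ||| mdiff 448 (clB (mdiff 496 m)) ||| mdiff 259072 (clB (mdiff 261632 m))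

lemma interior_F (m : ℕ) : interior (F m) = F (intB m) := by
  rw [F_split m, interior_union_three (Fland15_sub m) (Fland496_sub m) (Fland2616_sub m)]
  have e1 : interior (F (m &&& 15)) = F (mdiff 12 (clB (mdiff 15 m))) := by
    rw [interior_subset_Icc (by norm_num : (0:ℝ) < 1) (Fland15_sub m)]
    rw [← FIcc01, ← FIoo01, F_diff, mdiff_land, closure_F, F_diff]
  have e2 : interior (F (m &&& 496)) = F (mdiff 448 (clB (mdiff 496 m))) := by
    rw [interior_subset_Icc (by norm_num : (2:ℝ) < 4) (Fland496_sub m)]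
    rw [← FIcc24, ← FIoo24, F_diff, mdiff_land, closure_F, F_diff]
  have e3 : interior (F (m &&& 261632)) = F (mdiff 259072 (clB (mdiff 261632 m))) := by
    rw [interior_subset_Icc (by norm_num : (5:ℝ) < 7) (Fland2616_sub m)]
    rw [← FIcc57, ← FIoo57, F_diff, mdiff_land, closure_F, F_diff]
  rw [e1, e2, e3, F_union, F_union]
  rfl


lemma hT1 : (⋃ n : ℕ, ⋃ _ : 1 ≤ n, {(1:ℝ)/(n:ℝ)}) = ({1}:Set ℝ) ∪ c2 := by
  ext x
  simp only [Set.mem_iUnion, Set.mem_singleton_iff, exists_prop]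
  constructor
  · rintro ⟨n, hn, rfl⟩
    rcases eq_or_lt_of_le hn with h1 | h1
    · left; rw [← h1]; norm_num
    · right; exact mem_c2.2 ⟨n, by omega, rfl⟩
  · rintro (rfl | h)
    · exact ⟨1, le_refl _, by norm_num⟩
    · obtain ⟨n, hn, rfl⟩ := mem_c2.1 h
      exact ⟨n, by omega, rfl⟩

lemma hD : (⋃ n : ℕ, ⋃ _ : 1 ≤ n, {3 + (1:ℝ)/(n:ℝ)}) = ({4}:Set ℝ) ∪ c6 := by
  ext x
  simp only [Set.mem_iUnion, Set.mem_singleton_iff, exists_prop]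
  constructor
  · rintro ⟨n, hn, rfl⟩
    rcases eq_or_lt_of_le hn with h1 | h1
    · left; rw [← h1]; norm_num
    · right; exact mem_c6.2 ⟨n, by omega, rfl⟩
  · rintro (rfl | h)
    · exact ⟨1, le_refl _, by norm_num⟩
    · obtain ⟨n, hn, rfl⟩ := mem_c6.1 h
      exact ⟨n, by omega, rfl⟩

lemma hT2 : Set.Icc (2:ℝ) 4 \ (({4}:Set ℝ) ∪ c6) = ({2}:Set ℝ) ∪ ({3}:Set ℝ) ∪ c8 := by
  ext x
  constructor
  · rintro ⟨hIcc, hn⟩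
    have h2 := hIcc
    rw [Icc24_eq] at h2
    rcases h2 with ((((rfl | rfl) | rfl) | h6) | h8)
    · exact Or.inl (Or.inl rfl)
    · exact Or.inl (Or.inr rfl)
    · exact absurd (Or.inl rfl) hn
    · exact absurd (Or.inr h6) hn
    · exact Or.inr h8
  · rintro ((rfl | rfl) | h)
    · refine ⟨by norm_num, ?_⟩
      rintro (h | h)
      · rw [Set.mem_singleton_iff] at h; norm_num at h
      · have := (c6_subset_Ioo h).1; norm_num at this
    · refine ⟨by norm_num, ?_⟩
      rintro (h | h)
      · rw [Set.mem_singleton_iff] at h; norm_num at h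
      · have := (c6_subset_Ioo h).1; norm_num at this
    · refine ⟨sub_8 h, ?_⟩
      rintro (h4 | h6)
      · exact h.2 (Or.inl (Or.inr h4))
      · exact h.2 (Or.inr h6)

lemma hU : (⋃ n : ℕ, ⋃ _ : 1 ≤ n, Set.Ioc (sA n) (sB n)) = V ∪ BB := by
  ext x
  simp only [Set.mem_iUnion, exists_prop]
  constructor
  · rintro ⟨n, hn, h1, h2⟩
    rcases eq_or_lt_of_le h2 with rfl | h2'
    · exact Or.inr (mem_BB.2 ⟨n, hn, rfl⟩)
    · exact Or.inl (mem_V.2 ⟨n, hn, h1, h2'⟩)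
  · rintro (h | h)
    · obtain ⟨n, hn, h1, h2⟩ := mem_V.1 h
      exact ⟨n, hn, h1, le_of_lt h2⟩
    · obtain ⟨n, hn, rfl⟩ := mem_BB.1 h
      exact ⟨n, hn, sA_lt_sB hn, le_refl _⟩

lemma hIocQ : Set.Ioc (5:ℝ) 7 ∩ Qs = ({6}:Set ℝ) ∪ ({7}:Set ℝ) ∪ (OO ∩ Qs) ∪ (V ∩ Qs) := by
  ext x
  constructor
  · rintro ⟨⟨h5, h7⟩, hq⟩
    rcases eq_or_lt_of_le h7 with rfl | h7'
    · exact Or.inl (Or.inl (Or.inr rfl))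
    · have hIoo : x ∈ Set.Ioo (5:ℝ) 7 := ⟨h5, h7'⟩
      rw [Ioo57_eq] at hIoo
      rcases hIoo with hO | hK
      · exact Or.inl (Or.inr ⟨hO, hq⟩)
      · rw [KK_partition] at hK
        rcases hK with ((h6 | hV) | hA) | hB
        · exact Or.inl (Or.inl (Or.inl h6))
        · exact Or.inr ⟨hV, hq⟩
        · exact absurd hq (AA_irr x hA)
        · exact absurd hq (BB_irr x hB)
  · rintro (((rfl | rfl) | h) | h)
    · exact ⟨by norm_num, ⟨6, by norm_num⟩⟩
    · exact ⟨by norm_num, ⟨7, by norm_num⟩⟩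
    · have := OO_sub_Ioo h.1
      exact ⟨⟨this.1, le_of_lt this.2⟩, h.2⟩
    · have := V_sub_Ioo h.1
      exact ⟨⟨this.1, le_of_lt this.2⟩, h.2⟩

lemma hT3 : Set.Ioc (5:ℝ) 7 ∩ (Qs ∪ ⋃ n : ℕ, ⋃ _ : 1 ≤ n, Set.Ioc (sA n) (sB n)) =
    ({6}:Set ℝ) ∪ ({7}:Set ℝ) ∪ (OO ∩ Qs) ∪ (V ∩ Qs) ∪ (V \ Qs) ∪ BB := by
  rw [hU, Set.inter_union_distrib_left, hIocQ]
  have hsub : V ∪ BB ⊆ Set.Ioc 5 7 := by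
    rintro x (h | h)
    · have := V_sub_Ioo h; exact ⟨this.1, le_of_lt this.2⟩
    · have := BB_sub_Ioo h; exact ⟨this.1, le_of_lt this.2⟩
  rw [Set.inter_eq_self_of_subset_right hsub]
  ext x
  simp only [Set.mem_union, Set.mem_inter_iff, Set.mem_diff]
  tauto

lemma T_eq : kuratowskiT = F 187798 := by
  rw [F_eq_187798]
  show (⋃ n : ℕ, ⋃ _ : 1 ≤ n, {(1:ℝ)/(n:ℝ)}) ∪
      (Set.Icc 2 4 \ ⋃ n : ℕ, ⋃ _ : 1 ≤ n, {3 + (1:ℝ)/(n:ℝ)}) ∪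
      (Set.Ioc 5 7 ∩ (Qs ∪ ⋃ n : ℕ, ⋃ _ : 1 ≤ n, Set.Ioc (sA n) (sB n))) = _
  rw [hT1, hD, hT2, hT3]
  simp only [Set.union_assoc]

def LL : List ℕ := [262135, 262134, 261622, 253430, 261590, 253398, 187862, 187798, 262128, 261616, 253424, 259568, 251376, 247280, 261584, 253392, 187856, 259536, 251344, 185808, 247248, 181712, 187792, 185744, 181648, 259520, 251328, 185792, 247232, 181696, 49600, 185728, 181632, 49536, 49408]

lemma L_cl : ∀ s ∈ LL, clB s ∈ LL := by decide
lemma L_int : ∀ s ∈ LL, intB s ∈ LL := by decide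
lemma L_union : ∀ s ∈ LL, ∀ t ∈ LL, (s ||| t) ∈ LL := by decide
lemma L_inter : ∀ s ∈ LL, ∀ t ∈ LL, (s &&& t) ∈ LL := by decide
lemma L_lt : ∀ s ∈ LL, s < 262144 := by decide

lemma gen_to_L : ∀ {X : Set ℝ}, kiwvGenT X → ∃ m ∈ LL, X = F m := by
  intro X h
  induction h with
  | base => exact ⟨187798, by decide, T_eq⟩
  | closure _ ih =>
    obtain ⟨m, hm, rfl⟩ := ih
    exact ⟨clB m, L_cl m hm, closure_F m⟩
  | interior _ ih =>
    obtain ⟨m, hm, rfl⟩ := ih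
    exact ⟨intB m, L_int m hm, interior_F m⟩
  | inter _ _ ih1 ih2 =>
    obtain ⟨m1, hm1, rfl⟩ := ih1
    obtain ⟨m2, hm2, rfl⟩ := ih2
    exact ⟨m1 &&& m2, L_inter m1 hm1 m2 hm2, F_inter m1 m2⟩
  | union _ _ ih1 ih2 =>
    obtain ⟨m1, hm1, rfl⟩ := ih1
    obtain ⟨m2, hm2, rfl⟩ := ih2
    exact ⟨m1 ||| m2, L_union m1 hm1 m2 hm2, F_union m1 m2⟩

lemma gen_all : ∀ m ∈ LL, kiwvGenT (F m) := by
  have g187798 : kiwvGenT (F 187798) := T_eq ▸ kiwvGenT.base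
  have g262135 : kiwvGenT (F 262135) := by
    have h := kiwvGenT.closure g187798
    rwa [closure_F, show clB 187798 = 262135 from by decide] at h
  have g259520 : kiwvGenT (F 259520) := by
    have h := kiwvGenT.interior g262135
    rwa [interior_F, show intB 262135 = 259520 from by decide] at h
  have g185728 : kiwvGenT (F 185728) := by
    have h := kiwvGenT.inter g259520 g187798
    rwa [F_inter, show (259520 &&& 187798 : ℕ) = 185728 from by decide] at h
  have g49408 : kiwvGenT (F 49408) := by
    have h := kiwvGenT.interior g187798
    rwa [interior_F, show intB 187798 = 49408 from by decide] at h
  have g262128 : kiwvGenT (F 262128) := by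
    have h := kiwvGenT.closure g259520
    rwa [closure_F, show clB 259520 = 262128 from by decide] at h
  have g247280 : kiwvGenT (F 247280) := by
    have h := kiwvGenT.closure g49408
    rwa [closure_F, show clB 49408 = 247280 from by decide] at h
  have g253430 : kiwvGenT (F 253430) := by
    have h := kiwvGenT.union g187798 g247280
    rwa [F_union, show (187798 ||| 247280 : ℕ) = 253430 from by decide] at h
  have g253424 : kiwvGenT (F 253424) := by
    have h := kiwvGenT.inter g262128 g253430
    rwa [F_inter, show (262128 &&& 253430 : ℕ) = 253424 from by decide] at h
  have g187792 : kiwvGenT (F 187792) := by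
    have h := kiwvGenT.inter g262128 g187798
    rwa [F_inter, show (262128 &&& 187798 : ℕ) = 187792 from by decide] at h
  have g259568 : kiwvGenT (F 259568) := by
    have h := kiwvGenT.union g259520 g247280
    rwa [F_union, show (259520 ||| 247280 : ℕ) = 259568 from by decide] at h
  have g261590 : kiwvGenT (F 261590) := by
    have h := kiwvGenT.union g259520 g187798
    rwa [F_union, show (259520 ||| 187798 : ℕ) = 261590 from by decide] at h
  have g247248 : kiwvGenT (F 247248) := by
    have h := kiwvGenT.inter g261590 g247280
    rwa [F_inter, show (261590 &&& 247280 : ℕ) = 247248 from by decide] at h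
  have g251344 : kiwvGenT (F 251344) := by
    have h := kiwvGenT.union g185728 g247248
    rwa [F_union, show (185728 ||| 247248 : ℕ) = 251344 from by decide] at h
  have g247232 : kiwvGenT (F 247232) := by
    have h := kiwvGenT.inter g259520 g247280
    rwa [F_inter, show (259520 &&& 247280 : ℕ) = 247232 from by decide] at h
  have g181632 : kiwvGenT (F 181632) := by
    have h := kiwvGenT.inter g185728 g247232
    rwa [F_inter, show (185728 &&& 247232 : ℕ) = 181632 from by decide] at h
  have g49600 : kiwvGenT (F 49600) := by
    have h := kiwvGenT.interior g247280
    rwa [interior_F, show intB 247280 = 49600 from by decide] at h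
  have g187862 : kiwvGenT (F 187862) := by
    have h := kiwvGenT.union g49600 g187798
    rwa [F_union, show (49600 ||| 187798 : ℕ) = 187862 from by decide] at h
  have g187856 : kiwvGenT (F 187856) := by
    have h := kiwvGenT.inter g253424 g187862
    rwa [F_inter, show (253424 &&& 187862 : ℕ) = 187856 from by decide] at h
  have g251328 : kiwvGenT (F 251328) := by
    have h := kiwvGenT.union g185728 g247232
    rwa [F_union, show (185728 ||| 247232 : ℕ) = 251328 from by decide] at h
  have g49536 : kiwvGenT (F 49536) := by
    have h := kiwvGenT.inter g185728 g49600
    rwa [F_inter, show (185728 &&& 49600 : ℕ) = 49536 from by decide] at h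
  have g181648 : kiwvGenT (F 181648) := by
    have h := kiwvGenT.inter g187798 g247280
    rwa [F_inter, show (187798 &&& 247280 : ℕ) = 181648 from by decide] at h
  have g181712 : kiwvGenT (F 181712) := by
    have h := kiwvGenT.union g49600 g181648
    rwa [F_union, show (49600 ||| 181648 : ℕ) = 181712 from by decide] at h
  have g185792 : kiwvGenT (F 185792) := by
    have h := kiwvGenT.union g185728 g49600
    rwa [F_union, show (185728 ||| 49600 : ℕ) = 185792 from by decide] at h
  have g262134 : kiwvGenT (F 262134) := by
    have h := kiwvGenT.union g262128 g261590
    rwa [F_union, show (262128 ||| 261590 : ℕ) = 262134 from by decide] at h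
  have g253398 : kiwvGenT (F 253398) := by
    have h := kiwvGenT.inter g261590 g253430
    rwa [F_inter, show (261590 &&& 253430 : ℕ) = 253398 from by decide] at h
  have g259536 : kiwvGenT (F 259536) := by
    have h := kiwvGenT.union g259520 g181648
    rwa [F_union, show (259520 ||| 181648 : ℕ) = 259536 from by decide] at h
  have g261584 : kiwvGenT (F 261584) := by
    have h := kiwvGenT.inter g262128 g261590
    rwa [F_inter, show (262128 &&& 261590 : ℕ) = 261584 from by decide] at h
  have g185744 : kiwvGenT (F 185744) := by
    have h := kiwvGenT.union g185728 g181648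
    rwa [F_union, show (185728 ||| 181648 : ℕ) = 185744 from by decide] at h
  have g261622 : kiwvGenT (F 261622) := by
    have h := kiwvGenT.union g259520 g253430
    rwa [F_union, show (259520 ||| 253430 : ℕ) = 261622 from by decide] at h
  have g261616 : kiwvGenT (F 261616) := by
    have h := kiwvGenT.union g253424 g259520
    rwa [F_union, show (253424 ||| 259520 : ℕ) = 261616 from by decide] at h
  have g253392 : kiwvGenT (F 253392) := by
    have h := kiwvGenT.inter g253424 g253398
    rwa [F_inter, show (253424 &&& 253398 : ℕ) = 253392 from by decide] at h
  have g181696 : kiwvGenT (F 181696) := by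
    have h := kiwvGenT.inter g259520 g181712
    rwa [F_inter, show (259520 &&& 181712 : ℕ) = 181696 from by decide] at h
  have g251376 : kiwvGenT (F 251376) := by
    have h := kiwvGenT.union g185728 g247280
    rwa [F_union, show (185728 ||| 247280 : ℕ) = 251376 from by decide] at h
  have g185808 : kiwvGenT (F 185808) := by
    have h := kiwvGenT.union g185728 g181712
    rwa [F_union, show (185728 ||| 181712 : ℕ) = 185808 from by decide] at h
  intro m hm
  fin_cases hm
  exacts [g262135, g262134, g261622, g253430, g261590, g253398, g187862, g187798, g262128, g261616, g253424, g259568, g251376, g247280, g261584, g253392, g187856, g259536, g251344, g185808, g247248, g181712, g187792, g185744, g181648, g259520, g251328, g185792, g247232, g181696, g49600, g185728, g181632, g49536, g49408]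

end KW

/-- The smallest family of subsets of `ℝ` containing `T` and closed under closure, interior,
binary intersection, and binary union has exactly 35 elements. -/
theorem kuratowskiT_thirtyfive : {A : Set ℝ | kiwvGenT A}.encard = 35 := by
  have hset : {A : Set ℝ | kiwvGenT A} = KW.F '' {m : ℕ | m ∈ KW.LL} := by
    ext X
    simp only [Set.mem_setOf_eq, Set.mem_image]
    constructor
    · intro h
      obtain ⟨m, hm, rfl⟩ := KW.gen_to_L h
      exact ⟨m, hm, rfl⟩
    · rintro ⟨m, hm, rfl⟩
      exact KW.gen_all m hm
  rw [hset]
  have hinj : Set.InjOn KW.F {m : ℕ | m ∈ KW.LL} := by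
    intro a ha b hb hab
    exact KW.F_inj (KW.L_lt a ha) (KW.L_lt b hb) hab
  rw [hinj.encard_image]
  have hfin : {m : ℕ | m ∈ KW.LL} = (KW.LL.toFinset : Set ℕ) := by
    ext m; simp
  rw [hfin, Set.encard_coe_eq_coe_finsetCard]
  rw [show KW.LL.toFinset.card = 35 from by decide]
  rfl
end
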